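/- arXiv:1507.02794 — 8 statements merged into one kernel-verified Lean document; each statement's English description precedes it below -/
import Mathlib

section
/- Let ν ∈ ℝ with ν ≠ 0. For every smooth function u : (0,∞) → ℂ whose support is a compact subset of (0,∞), min(1, 4ν²) · ∫₀^∞ |u'(x)|² dx ≤ ∫₀^∞ |u'(x) + (ν − 1/2)x⁻¹u(x)|² dx ≤ (1 + 2|ν − 1/2|)² · ∫₀^∞ |u'(x)|² dx. In particular, for ν ≠ 0 the L²(0,∞) norms of the twisted derivative ∂_ν u and of the ordinary derivative u' are equivalent on smooth compactly supported functions. -/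
open MeasureTheory Set

lemma twd_integrableOn_Ioi_of_zero_off_Icc {f : ℝ → ℝ} {a b : ℝ} (ha : 0 < a)
    (hf : ContinuousOn f (Ioi 0)) (h0 : ∀ x, x ∉ Icc a b → f x = 0) :
    IntegrableOn f (Ioi 0) := by
  have hsub : Icc a b ⊆ Ioi 0 := fun x hx => lt_of_lt_of_le ha hx.1
  have h1 : IntegrableOn f (Icc a b) :=
    (hf.mono hsub).integrableOn_compact isCompact_Icc
  have h2 : Integrable ((Icc a b).indicator f) := h1.integrable_indicator measurableSet_Icc
  have hfi : f = (Icc a b).indicator f := by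
    ext x; by_cases hx : x ∈ Icc a b
    · simp [indicator_of_mem hx]
    · simp [indicator_of_notMem hx, h0 x hx]
  rw [hfi]
  exact h2.integrableOn

lemma twd_hasDerivAt_normSq_div {u : ℝ → ℂ} (hu : Differentiable ℝ u) {x : ℝ} (hx : 0 < x) :
    HasDerivAt (fun y => ‖u y‖ ^ 2 / y)
      (2 * ((deriv u x * (starRingEnd ℂ) (u x)).re / x) - ‖u x‖ ^ 2 / x ^ 2) x := by
  have hux : HasDerivAt u (deriv u x) x := (hu x).hasDerivAt
  have hre : HasDerivAt (fun y => (u y).re) ((deriv u x).re) x :=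
    (Complex.reCLM.hasFDerivAt.comp_hasDerivAt x hux)
  have him : HasDerivAt (fun y => (u y).im) ((deriv u x).im) x :=
    (Complex.imCLM.hasFDerivAt.comp_hasDerivAt x hux)
  have hg : HasDerivAt (fun y => (u y).re * (u y).re + (u y).im * (u y).im)
      ((deriv u x).re * (u x).re + (u x).re * (deriv u x).re +
        ((deriv u x).im * (u x).im + (u x).im * (deriv u x).im)) x :=
    (hre.mul hre).add (him.mul him)
  have hg' : HasDerivAt (fun y => ‖u y‖ ^ 2)
      (2 * (deriv u x * (starRingEnd ℂ) (u x)).re) x := by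
    have hfun : (fun y => ‖u y‖ ^ 2) = fun y => (u y).re * (u y).re + (u y).im * (u y).im :=
      funext fun y => by rw [Complex.sq_norm, Complex.normSq_apply]
    have hval : 2 * (deriv u x * (starRingEnd ℂ) (u x)).re =
        (deriv u x).re * (u x).re + (u x).re * (deriv u x).re +
          ((deriv u x).im * (u x).im + (u x).im * (deriv u x).im) := by
      simp [Complex.mul_re, Complex.conj_re, Complex.conj_im]; ring
    rw [hfun, hval]; exact hg
  have : HasDerivAt (fun y => ‖u y‖ ^ 2 / y)
      ((2 * (deriv u x * (starRingEnd ℂ) (u x)).re * x - ‖u x‖ ^ 2 * 1) / x ^ 2) x :=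
    hg'.div (hasDerivAt_id x) hx.ne'
  convert this using 1
  field_simp

lemma twd_pointwise_ident (t : ℝ) {x : ℝ} (hx : 0 < x) (z w : ℂ) :
    ‖z + (t : ℂ) * (x : ℂ)⁻¹ * w‖ ^ 2 =
      ‖z‖ ^ 2 + 2 * t * ((z * (starRingEnd ℂ) w).re / x) + t ^ 2 * (‖w‖ ^ 2 / x ^ 2) := by
  have hx' : (x : ℝ) ≠ 0 := hx.ne'
  rw [Complex.sq_norm, Complex.normSq_add,
    Complex.sq_norm, Complex.sq_norm]
  have h1 : ((t : ℂ) * (x : ℂ)⁻¹ * w) = (((t / x : ℝ)) : ℂ) * w := by push_cast; ring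
  rw [h1]
  simp only [Complex.normSq_mul, Complex.normSq_ofReal, map_mul, Complex.conj_ofReal]
  rw [show z * ((((t / x : ℝ)) : ℂ) * (starRingEnd ℂ) w)
      = (((t / x : ℝ)) : ℂ) * (z * (starRingEnd ℂ) w) by ring]
  rw [Complex.re_ofReal_mul]
  field_simp
  ring

/-- Equivalence of the `L²` norms of the twisted derivative `∂_ν u` and the ordinary
derivative `u'` on smooth compactly supported functions, for `ν ≠ 0`:
`min(1, 4ν²)∫|u'|² ≤ ∫|∂_ν u|² ≤ (1 + 2|ν − 1/2|)²∫|u'|²`. -/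
theorem twisted_derivative_norm_equivalence (ν : ℝ) (hν : ν ≠ 0) (u : ℝ → ℂ)
    (hu : ContDiff ℝ (⊤ : ℕ∞) u) (hcs : HasCompactSupport u)
    (hsupp : tsupport u ⊆ Set.Ioi (0 : ℝ)) :
    min 1 (4 * ν ^ 2) * ∫ x in Set.Ioi (0 : ℝ), ‖deriv u x‖ ^ 2
      ≤ ∫ x in Set.Ioi (0 : ℝ),
          ‖deriv u x + ((ν - 1/2 : ℝ) : ℂ) * (x : ℂ)⁻¹ * u x‖ ^ 2 ∧
    ∫ x in Set.Ioi (0 : ℝ),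
        ‖deriv u x + ((ν - 1/2 : ℝ) : ℂ) * (x : ℂ)⁻¹ * u x‖ ^ 2
      ≤ (1 + 2 * |ν - 1/2|) ^ 2 * ∫ x in Set.Ioi (0 : ℝ), ‖deriv u x‖ ^ 2 := by
  obtain ⟨t, ht⟩ : ∃ t : ℝ, t = ν - 1/2 := ⟨_, rfl⟩
  rw [← ht]
  -- pick an interval [a, b] ⊆ (0, ∞) containing the support
  obtain ⟨a, b, ha, hab, hK⟩ : ∃ a b : ℝ, 0 < a ∧ a ≤ b + 1 ∧ tsupport u ⊆ Icc a b := by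
    rcases (tsupport u).eq_empty_or_nonempty with h | h
    · exact ⟨1, 0, one_pos, by norm_num, by simp [h]⟩
    · have hc : IsCompact (tsupport u) := hcs
      have h1 : sInf (tsupport u) ∈ tsupport u := hc.sInf_mem h
      have h2 : 0 < sInf (tsupport u) := hsupp h1
      have hle : sInf (tsupport u) ≤ sSup (tsupport u) := csInf_le_csSup h hc.bddBelow hc.bddAbove
      exact ⟨sInf (tsupport u), sSup (tsupport u), h2, by linarith,
        fun x hx => ⟨csInf_le hc.bddBelow hx, le_csSup hc.bddAbove hx⟩⟩
  have hud : Differentiable ℝ u := hu.differentiable (by simp)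
  have hcu : Continuous u := hu.continuous
  have hcd : Continuous (deriv u) := hu.continuous_deriv (by simp)
  have hu0 : ∀ x, x ∉ Icc a b → u x = 0 := fun x hx =>
    image_eq_zero_of_notMem_tsupport fun h => hx (hK h)
  have hd0 : ∀ x, x ∉ Icc a b → deriv u x = 0 := by
    intro x hx
    have hxs : x ∉ tsupport u := fun h => hx (hK h)
    have := support_deriv_subset (f := u)
    by_contra hne
    exact hxs (this hne)
  set fD : ℝ → ℝ := fun x => ‖deriv u x‖ ^ 2 with hfD
  set fB : ℝ → ℝ := fun x => ‖u x‖ ^ 2 / x ^ 2 with hfB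
  set fC : ℝ → ℝ := fun x => (deriv u x * (starRingEnd ℂ) (u x)).re / x with hfC
  -- continuity
  have hCD : ContinuousOn fD (Ioi 0) := (hcd.norm.pow 2).continuousOn
  have hCB : ContinuousOn fB (Ioi 0) := by
    apply ContinuousOn.div ((hcu.norm.pow 2).continuousOn) ((continuous_pow 2).continuousOn)
    intro x hx
    exact pow_ne_zero 2 (ne_of_gt hx)
  have hCC : ContinuousOn fC (Ioi 0) := by
    apply ContinuousOn.div
      ((Complex.continuous_re.comp (hcd.mul (Complex.continuous_conj.comp hcu))).continuousOn)
      continuousOn_id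
    intro x hx
    exact ne_of_gt hx
  -- integrability
  have intD : IntegrableOn fD (Ioi 0) :=
    twd_integrableOn_Ioi_of_zero_off_Icc (b := b) ha hCD fun x hx => by simp [hfD, hd0 x hx]
  have intB : IntegrableOn fB (Ioi 0) :=
    twd_integrableOn_Ioi_of_zero_off_Icc (b := b) ha hCB fun x hx => by simp [hfB, hu0 x hx]
  have intC : IntegrableOn fC (Ioi 0) :=
    twd_integrableOn_Ioi_of_zero_off_Icc (b := b) ha hCC fun x hx => by simp [hfC, hu0 x hx]
  -- the integral of ∂_ν u splits
  have hCform : (∫ x in Ioi (0:ℝ), ‖deriv u x + (t : ℂ) * (x : ℂ)⁻¹ * u x‖ ^ 2)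
      = (∫ x in Ioi (0:ℝ), fD x) + 2 * t * (∫ x in Ioi (0:ℝ), fC x)
        + t ^ 2 * (∫ x in Ioi (0:ℝ), fB x) := by
    rw [setIntegral_congr_fun measurableSet_Ioi
      (g := fun x => fD x + 2 * t * fC x + t ^ 2 * fB x)
      (fun x hx => twd_pointwise_ident t hx (deriv u x) (u x))]
    have i1 : Integrable (fun x => 2 * t * fC x) (volume.restrict (Ioi 0)) :=
      intC.const_mul (2*t)
    have i2 : Integrable (fun x => t ^ 2 * fB x) (volume.restrict (Ioi 0)) :=
      intB.const_mul (t^2)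
    have i0 : Integrable (fun x => fD x + 2 * t * fC x) (volume.restrict (Ioi 0)) :=
      intD.add i1
    rw [integral_add i0 i2, integral_add intD i1, integral_const_mul, integral_const_mul]
  -- cross term identity:  ∫ 2 fC = ∫ fB
  have key : (∫ x in Ioi (0:ℝ), (2 * fC x - fB x)) = 0 := by
    have hle2 : a / 2 ≤ b + 1 := by linarith
    have hsub2 : Ioc (a/2) (b+1) ⊆ Ioi (0:ℝ) := fun x hx => lt_of_lt_of_le (by linarith) hx.1.le
    have hzero : ∀ x ∈ Ioi (0:ℝ) \ Ioc (a/2) (b+1), 2 * fC x - fB x = 0 := by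
      intro x hx
      have hxab : x ∉ Icc a b := by
        intro hmem
        exact hx.2 ⟨by linarith [hmem.1], by linarith [hmem.2]⟩
      simp [hfC, hfB, hu0 x hxab]
    rw [setIntegral_eq_of_subset_of_forall_diff_eq_zero measurableSet_Ioi hsub2 hzero,
      ← intervalIntegral.integral_of_le hle2]
    have hF : ∀ x ∈ uIcc (a/2) (b+1), HasDerivAt (fun y => ‖u y‖ ^ 2 / y)
        (2 * fC x - fB x) x := by
      intro x hx
      rw [uIcc_of_le hle2] at hx
      have hx0 : 0 < x := lt_of_lt_of_le (by linarith) hx.1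
      simpa [hfC, hfB] using twd_hasDerivAt_normSq_div hud hx0
    have hInt : IntervalIntegrable (fun x => 2 * fC x - fB x) volume (a/2) (b+1) := by
      rw [intervalIntegrable_iff_integrableOn_Ioc_of_le hle2]
      have hi : IntegrableOn (fun x => 2 * fC x - fB x) (Ioi 0) :=
        (intC.const_mul 2).sub intB
      exact hi.mono_set hsub2
    rw [intervalIntegral.integral_eq_sub_of_hasDerivAt hF hInt]
    have h1 : u (b+1) = 0 := hu0 _ (fun hmem => by linarith [hmem.2])
    have h2 : u (a/2) = 0 := hu0 _ (fun hmem => by linarith [hmem.1])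
    simp [h1, h2]
  have hCeq : (∫ x in Ioi (0:ℝ), fC x) = (∫ x in Ioi (0:ℝ), fB x) / 2 := by
    rw [integral_sub (intC.const_mul 2) intB, integral_const_mul] at key
    linarith
  -- nonnegativity
  have hA : 0 ≤ ∫ x in Ioi (0:ℝ), fD x :=
    setIntegral_nonneg measurableSet_Ioi fun x _ => by positivity
  have hB : 0 ≤ ∫ x in Ioi (0:ℝ), fB x :=
    setIntegral_nonneg measurableSet_Ioi fun x _ => by positivity
  -- Hardy inequality : ∫ fB ≤ 4 ∫ fD
  have hBA : (∫ x in Ioi (0:ℝ), fB x) ≤ 4 * ∫ x in Ioi (0:ℝ), fD x := by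
    have hpt : ∀ x ∈ Ioi (0:ℝ), 2 * fC x ≤ 2 * fD x + fB x / 2 := by
      intro x hx
      have hx0 : (0:ℝ) < x := hx
      have h1 : (deriv u x * (starRingEnd ℂ) (u x)).re ≤ ‖deriv u x‖ * ‖u x‖ := by
        calc (deriv u x * (starRingEnd ℂ) (u x)).re
            ≤ ‖deriv u x * (starRingEnd ℂ) (u x)‖ := Complex.re_le_norm _
          _ = ‖deriv u x‖ * ‖u x‖ := by
              rw [norm_mul, Complex.norm_conj]
      have h2 : fC x ≤ ‖deriv u x‖ * (‖u x‖ / x) := by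
        calc fC x = (deriv u x * (starRingEnd ℂ) (u x)).re / x := rfl
          _ ≤ (‖deriv u x‖ * ‖u x‖) / x := by gcongr
          _ = ‖deriv u x‖ * (‖u x‖ / x) := by ring
      have h3 : fB x = (‖u x‖ / x) ^ 2 := by rw [hfB]; rw [div_pow]
      have h5 : fD x = ‖deriv u x‖ ^ 2 := rfl
      have h4 : 0 ≤ ‖u x‖ / x := div_nonneg (norm_nonneg _) hx0.le
      nlinarith [sq_nonneg (2 * ‖deriv u x‖ - ‖u x‖ / x), norm_nonneg (deriv u x), h2, h3, h5]
    have hmono : (∫ x in Ioi (0:ℝ), 2 * fC x)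
        ≤ ∫ x in Ioi (0:ℝ), (2 * fD x + fB x / 2) :=
      setIntegral_mono_on (intC.const_mul 2) ((intD.const_mul 2).add (intB.div_const 2))
        measurableSet_Ioi hpt
    rw [integral_const_mul, integral_add (intD.const_mul 2) (intB.div_const 2),
      integral_const_mul, integral_div, hCeq] at hmono
    linarith
  -- final algebra
  obtain ⟨A, hAdef⟩ : ∃ A : ℝ, A = ∫ x in Ioi (0:ℝ), fD x := ⟨_, rfl⟩
  obtain ⟨B, hBdef⟩ : ∃ B : ℝ, B = ∫ x in Ioi (0:ℝ), fB x := ⟨_, rfl⟩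
  rw [← hAdef] at hA hBA hCform ⊢
  rw [← hBdef] at hB hBA hCeq hCform
  rw [hCeq] at hCform
  rw [hCform]
  constructor
  · rcases le_total 1 (4 * ν ^ 2) with h | h
    · rw [min_eq_left h]
      have hc : 0 ≤ ν ^ 2 - 1/4 := by linarith
      have h3 : 0 ≤ (ν ^ 2 - 1/4) * B := mul_nonneg hc hB
      have hTTB : t * B + t ^ 2 * B = (ν ^ 2 - 1/4) * B := by rw [ht]; ring
      linarith
    · rw [min_eq_right h]
      have hc : ν ^ 2 - 1/4 ≤ 0 := by linarith
      have h3 : (ν ^ 2 - 1/4) * (4 * A) ≤ (ν ^ 2 - 1/4) * B := mul_le_mul_of_nonpos_left hBA hc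
      have hTTB : t * B + t ^ 2 * B = (ν ^ 2 - 1/4) * B := by rw [ht]; ring
      linarith
  · rcases le_total (t + t ^ 2) 0 with h | h
    · have h4 : (t + t ^ 2) * B ≤ 0 := mul_nonpos_iff.mpr (Or.inr ⟨h, hB⟩)
      have h5 : (1:ℝ) ≤ (1 + 2 * |t|) ^ 2 := by
        nlinarith [abs_nonneg t, mul_nonneg (abs_nonneg t) (abs_nonneg t)]
      have h6 : 1 * A ≤ (1 + 2 * |t|) ^ 2 * A := mul_le_mul_of_nonneg_right h5 hA
      nlinarith [h4, h6]
    · have h7 : (t + t ^ 2) * B ≤ (t + t ^ 2) * (4 * A) := mul_le_mul_of_nonneg_left hBA h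
      have h6 : t * A ≤ |t| * A := mul_le_mul_of_nonneg_right (le_abs_self t) hA
      have h8 : |t| ^ 2 * A = t ^ 2 * A := by rw [sq_abs]
      nlinarith [h6, h7, h8]
end

section
/- For every real μ < 1 there exists a constant C > 0 such that for every smooth compactly supported function φ : ℝ → ℂ, |φ(0)|² ≤ C ∫₀^∞ x^μ (|φ(x)|² + |φ'(x)|²) dx, where the right-hand side is interpreted as a Lebesgue integral with values in [0,∞] (so the inequality holds trivially when the integral is infinite). -/
open MeasureTheory Set
open scoped ENNReal

/-- Boundary evaluation bound for the weighted Sobolev space `H¹_μ(ℝ₊)`, `μ < 1`: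
there is `C > 0` with `|φ(0)|² ≤ C ∫₀^∞ x^μ(|φ|² + |φ'|²) dx` for all smooth compactly
supported `φ`, the right-hand side being an extended-real Lebesgue integral. -/
theorem weighted_trace_bound (μ : ℝ) (hμ : μ < 1) :
    ∃ C : ℝ, 0 < C ∧ ∀ φ : ℝ → ℂ, ContDiff ℝ (⊤ : ℕ∞) φ → HasCompactSupport φ →
      ENNReal.ofReal (‖φ 0‖ ^ 2)
        ≤ ENNReal.ofReal C *
            ∫⁻ x in Set.Ioi (0 : ℝ),
              ENNReal.ofReal (x ^ μ * (‖φ x‖ ^ 2 + ‖deriv φ x‖ ^ 2)) := by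
  set m : ℝ := min 1 (2 ^ μ) with hm_def
  have hm : 0 < m := lt_min one_pos (Real.rpow_pos_of_pos two_pos μ)
  -- integrability of t ^ (-μ) on (0, 2)
  have hKint : IntegrableOn (fun t : ℝ => t ^ (-μ)) (Ioo 0 2) := by
    have h := intervalIntegral.intervalIntegrable_rpow' (a := 0) (b := 2)
      (r := -μ) (by linarith)
    rw [intervalIntegrable_iff, uIoc_of_le (by norm_num : (0:ℝ) ≤ 2)] at h
    exact h.mono_set Ioo_subset_Ioc_self
  set K : ℝ := ∫ t in Ioo (0:ℝ) 2, t ^ (-μ) with hK_def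
  have hK0 : 0 ≤ K :=
    setIntegral_nonneg measurableSet_Ioo fun t ht => Real.rpow_nonneg ht.1.le _
  have hCpos : 0 < 2 / m + 2 * K + 1 := by positivity
  refine ⟨2 / m + 2 * K + 1, hCpos, ?_⟩
  intro φ hφ hsupp
  set g : ℝ → ℝ := fun x => x ^ μ * (‖φ x‖ ^ 2 + ‖deriv φ x‖ ^ 2) with hg_def
  set L : ℝ≥0∞ := ∫⁻ x in Set.Ioi (0 : ℝ), ENNReal.ofReal (g x) with hL_def
  rcases eq_or_ne L ⊤ with hL | hL
  · rw [hL, ENNReal.mul_top (by simp [ENNReal.ofReal_eq_zero]; linarith)]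
    exact le_top
  -- continuity facts
  have hc : Continuous φ := hφ.continuous
  have hd : Continuous (deriv φ) := hφ.continuous_deriv (by simp)
  have hgm : Measurable g := by
    have h1 : Measurable fun x : ℝ => x ^ μ := by fun_prop
    exact h1.mul ((hc.norm.pow 2).add (hd.norm.pow 2)).measurable
  have h0 : 0 ≤ᵐ[volume.restrict (Ioi (0:ℝ))] g := by
    filter_upwards [ae_restrict_mem measurableSet_Ioi] with x hx
    have hx0 : (0:ℝ) < x := hx
    have := Real.rpow_nonneg hx0.le μ
    positivity
  have hgint : IntegrableOn g (Ioi 0) := by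
    refine ⟨hgm.aestronglyMeasurable, ?_⟩
    rw [hasFiniteIntegral_iff_ofReal h0]
    exact hL.lt_top
  set I : ℝ := ∫ x in Ioi (0:ℝ), g x with hI_def
  have hI : ENNReal.ofReal I = L := ofReal_integral_eq_lintegral_ofReal hgint h0
  have hI0 : 0 ≤ I := integral_nonneg_of_ae h0
  rw [← hI, ← ENNReal.ofReal_mul hCpos.le]
  refine ENNReal.ofReal_le_ofReal ?_
  -- now a purely real inequality
  set d : ℝ → ℝ := fun t => ‖deriv φ t‖ with hd_def
  have hdint : IntegrableOn d (Ioo 0 2) :=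
    (hd.norm.integrableOn_Icc (a := 0) (b := 2)).mono_set Ioo_subset_Icc_self
  set A : ℝ := ∫ t in Ioo (0:ℝ) 2, d t with hA_def
  have hA0 : 0 ≤ A :=
    setIntegral_nonneg measurableSet_Ioo fun t _ => norm_nonneg _
  -- FTC bound
  have hftc : ∀ x ∈ Ioo (1:ℝ) 2, ‖φ 0‖ ≤ ‖φ x‖ + A := by
    intro x hx
    have hx0 : (0:ℝ) ≤ x := by linarith [hx.1]
    have heq : ∫ t in (0:ℝ)..x, deriv φ t = φ x - φ 0 :=
      intervalIntegral.integral_deriv_eq_sub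
        (fun t _ => (hφ.differentiable (by simp)).differentiableAt)
        (hd.intervalIntegrable 0 x)
    have h1 : ‖φ 0‖ ≤ ‖φ x‖ + ‖φ x - φ 0‖ := by
      calc ‖φ 0‖ = ‖φ x - (φ x - φ 0)‖ := by rw [sub_sub_cancel]
        _ ≤ ‖φ x‖ + ‖φ x - φ 0‖ := norm_sub_le _ _
    have h2 : ‖φ x - φ 0‖ ≤ ∫ t in (0:ℝ)..x, d t := by
      rw [← heq]
      exact intervalIntegral.norm_integral_le_integral_norm hx0
    have h3 : ∫ t in (0:ℝ)..x, d t ≤ A := by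
      rw [intervalIntegral.integral_of_le hx0]
      refine setIntegral_mono_set hdint ?_ ?_
      · filter_upwards [] with t; exact norm_nonneg _
      · exact (Ioc_subset_Ioo_right hx.2 : Ioc (0:ℝ) x ⊆ Ioo 0 2).eventuallyLE
    linarith
  -- Cauchy-Schwarz
  set J : ℝ := ∫ t in Ioo (0:ℝ) 2, t ^ μ * d t ^ 2 with hJ_def
  have hgint02 : IntegrableOn g (Ioo 0 2) := hgint.mono_set fun t ht => ht.1
  have hJm : Measurable fun t : ℝ => t ^ μ * d t ^ 2 :=
    (by fun_prop : Measurable fun t : ℝ => t ^ μ).mul (hd.norm.pow 2).measurable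
  have hJint : IntegrableOn (fun t => t ^ μ * d t ^ 2) (Ioo 0 2) := by
    refine hgint02.integrable.mono hJm.aestronglyMeasurable ?_
    filter_upwards [ae_restrict_mem measurableSet_Ioo] with t ht
    have ht0 : (0:ℝ) < t := ht.1
    have hr : (0:ℝ) ≤ t ^ μ := Real.rpow_nonneg ht0.le μ
    have hnn : (0:ℝ) ≤ ‖φ t‖ ^ 2 + ‖deriv φ t‖ ^ 2 := by positivity
    rw [Real.norm_of_nonneg (by positivity), Real.norm_of_nonneg (mul_nonneg hr hnn)]
    have hdt : d t ^ 2 ≤ ‖φ t‖ ^ 2 + ‖deriv φ t‖ ^ 2 := by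
      simp only [hd_def]; nlinarith [sq_nonneg ‖φ t‖]
    exact mul_le_mul_of_nonneg_left hdt hr
  have hJ0 : 0 ≤ J := setIntegral_nonneg measurableSet_Ioo fun t ht => by
    have := Real.rpow_nonneg ht.1.le μ; positivity
  have hCS : A ^ 2 ≤ K * J := by
    have hpq : Real.HolderConjugate 2 2 := Real.HolderConjugate.two_two
    set u : ℝ → ℝ := fun t => t ^ (-(μ/2)) with hu_def
    set v : ℝ → ℝ := fun t => t ^ (μ/2) * d t with hv_def
    have hum : Measurable u := by rw [hu_def]; fun_prop
    have hvm : Measurable v := by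
      rw [hv_def]
      exact (by fun_prop : Measurable fun t : ℝ => t ^ (μ/2)).mul hd.norm.measurable
    have hu2eq : (fun t : ℝ => t ^ (-μ)) =ᵐ[volume.restrict (Ioo (0:ℝ) 2)]
        fun t => u t ^ 2 := by
      filter_upwards [ae_restrict_mem measurableSet_Ioo] with t ht
      have ht0 : (0:ℝ) < t := ht.1
      rw [hu_def]; simp only
      rw [sq, ← Real.rpow_add ht0]
      congr 1; ring
    have hv2eq : (fun t : ℝ => t ^ μ * d t ^ 2) =ᵐ[volume.restrict (Ioo (0:ℝ) 2)]
        fun t => v t ^ 2 := by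
      filter_upwards [ae_restrict_mem measurableSet_Ioo] with t ht
      have ht0 : (0:ℝ) < t := ht.1
      rw [hv_def]; simp only
      have hsq : (t ^ (μ/2)) ^ 2 = t ^ μ := by
        rw [sq, ← Real.rpow_add ht0]; congr 1; ring
      rw [mul_pow, hsq]
    have huveq : (fun t : ℝ => d t) =ᵐ[volume.restrict (Ioo (0:ℝ) 2)]
        fun t => u t * v t := by
      filter_upwards [ae_restrict_mem measurableSet_Ioo] with t ht
      have ht0 : (0:ℝ) < t := ht.1
      rw [hu_def, hv_def]; simp only
      rw [← mul_assoc, ← Real.rpow_add ht0,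
        show -(μ/2) + μ/2 = (0:ℝ) by ring, Real.rpow_zero, one_mul]
    have hu2 : Integrable (fun t => u t ^ 2) (volume.restrict (Ioo (0:ℝ) 2)) :=
      hKint.integrable.congr hu2eq
    have hv2 : Integrable (fun t => v t ^ 2) (volume.restrict (Ioo (0:ℝ) 2)) :=
      hJint.integrable.congr hv2eq
    have humem : MemLp u (ENNReal.ofReal 2) (volume.restrict (Ioo (0:ℝ) 2)) := by
      rw [show ENNReal.ofReal 2 = 2 by norm_num]
      exact (memLp_two_iff_integrable_sq hum.aestronglyMeasurable).2 hu2
    have hvmem : MemLp v (ENNReal.ofReal 2) (volume.restrict (Ioo (0:ℝ) 2)) := by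
      rw [show ENNReal.ofReal 2 = 2 by norm_num]
      exact (memLp_two_iff_integrable_sq hvm.aestronglyMeasurable).2 hv2
    have hun : 0 ≤ᵐ[volume.restrict (Ioo (0:ℝ) 2)] u := by
      filter_upwards [ae_restrict_mem measurableSet_Ioo] with t ht
      exact Real.rpow_nonneg ht.1.le _
    have hvn : 0 ≤ᵐ[volume.restrict (Ioo (0:ℝ) 2)] v := by
      filter_upwards [ae_restrict_mem measurableSet_Ioo] with t ht
      exact mul_nonneg (Real.rpow_nonneg ht.1.le _) (norm_nonneg _)
    have hCS' := integral_mul_le_Lp_mul_Lq_of_nonneg hpq hun hvn humem hvmem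
    have hA_eq : A = ∫ t in Ioo (0:ℝ) 2, u t * v t := integral_congr_ae huveq
    have hKeq : (∫ t in Ioo (0:ℝ) 2, u t ^ (2:ℝ)) = K := by
      rw [hK_def]
      refine integral_congr_ae ?_
      filter_upwards [hu2eq] with t ht
      rw [show (2:ℝ) = ((2:ℕ):ℝ) by norm_num, Real.rpow_natCast, ← ht]
    have hJeq : (∫ t in Ioo (0:ℝ) 2, v t ^ (2:ℝ)) = J := by
      rw [hJ_def]
      refine integral_congr_ae ?_
      filter_upwards [hv2eq] with t ht
      rw [show (2:ℝ) = ((2:ℕ):ℝ) by norm_num, Real.rpow_natCast, ← ht]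
    rw [← hA_eq, hKeq, hJeq] at hCS'
    have hsq : (K ^ (1/(2:ℝ)) * J ^ (1/(2:ℝ))) ^ 2 = K * J := by
      rw [mul_pow, ← Real.rpow_natCast (K ^ (1/(2:ℝ))) 2,
        ← Real.rpow_natCast (J ^ (1/(2:ℝ))) 2,
        ← Real.rpow_mul hK0, ← Real.rpow_mul hJ0]
      norm_num
    calc A ^ 2 ≤ (K ^ (1/(2:ℝ)) * J ^ (1/(2:ℝ))) ^ 2 := by
          apply pow_le_pow_left₀ hA0 hCS'
      _ = K * J := hsq
  -- J ≤ I
  have hJI : J ≤ I := by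
    calc J ≤ ∫ t in Ioo (0:ℝ) 2, g t := by
          refine setIntegral_mono_on hJint hgint02 measurableSet_Ioo ?_
          intro t ht
          have hr : (0:ℝ) ≤ t ^ μ := Real.rpow_nonneg ht.1.le μ
          rw [hg_def]; simp only [hd_def]
          nlinarith [sq_nonneg ‖φ t‖, mul_nonneg hr (sq_nonneg ‖φ t‖)]
      _ ≤ I := setIntegral_mono_set hgint h0
          (HasSubset.Subset.eventuallyLE fun t ht => ht.1)
  -- bound on ∫_{(1,2)} ‖φ‖²
  set B : ℝ := ∫ x in Ioo (1:ℝ) 2, ‖φ x‖ ^ 2 with hB_def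
  have hBint : IntegrableOn (fun x => ‖φ x‖ ^ 2) (Ioo 1 2) :=
    ((hc.norm.pow 2).integrableOn_Icc (a := 1) (b := 2)).mono_set Ioo_subset_Icc_self
  have hgint12 : IntegrableOn g (Ioo 1 2) :=
    hgint.mono_set fun t ht => lt_trans one_pos ht.1
  have hBI : B ≤ I / m := by
    have h1 : B ≤ ∫ x in Ioo (1:ℝ) 2, g x / m := by
      refine setIntegral_mono_on hBint (hgint12.div_const m) measurableSet_Ioo ?_
      intro x hx
      have hx0 : (0:ℝ) < x := lt_trans one_pos hx.1
      have hxμ : m ≤ x ^ μ := by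
        rcases le_or_gt 0 μ with h | h
        · refine le_trans (min_le_left _ _) ?_
          calc (1:ℝ) = 1 ^ μ := (Real.one_rpow μ).symm
            _ ≤ x ^ μ := Real.rpow_le_rpow zero_le_one hx.1.le h
        · exact le_trans (min_le_right _ _)
            (Real.rpow_le_rpow_of_nonpos hx0 hx.2.le h.le)
      rw [le_div_iff₀ hm, hg_def]
      simp only
      nlinarith [sq_nonneg ‖φ x‖, sq_nonneg ‖deriv φ x‖,
        mul_nonneg (Real.rpow_nonneg hx0.le μ) (sq_nonneg ‖deriv φ x‖)]
    have h3 : (∫ x in Ioo (1:ℝ) 2, g x) ≤ I := setIntegral_mono_set hgint h0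
      (HasSubset.Subset.eventuallyLE fun t ht => lt_trans one_pos ht.1)
    calc B ≤ ∫ x in Ioo (1:ℝ) 2, g x / m := h1
      _ = (∫ x in Ioo (1:ℝ) 2, g x) / m := integral_div m g
      _ ≤ I / m := by gcongr
  -- combine
  have hvol : (volume (Ioo (1:ℝ) 2)).toReal = 1 := by
    rw [Real.volume_Ioo]; norm_num
  have hmain : ‖φ 0‖ ^ 2 ≤ 2 * B + 2 * A ^ 2 := by
    have hconst : IntegrableOn (fun _ : ℝ => 2 * A ^ 2) (Ioo 1 2) :=
      integrableOn_const (by rw [Real.volume_Ioo]; exact ENNReal.ofReal_ne_top)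
    calc ‖φ 0‖ ^ 2 = ∫ _ in Ioo (1:ℝ) 2, ‖φ 0‖ ^ 2 := by
          rw [setIntegral_const, measureReal_def, hvol, one_smul]
      _ ≤ ∫ x in Ioo (1:ℝ) 2, (2 * ‖φ x‖ ^ 2 + 2 * A ^ 2) := by
          refine setIntegral_mono_on
            (integrableOn_const (by rw [Real.volume_Ioo]; exact ENNReal.ofReal_ne_top))
            ((hBint.const_mul 2).add hconst) measurableSet_Ioo ?_
          intro x hx
          have := hftc x hx
          nlinarith [this, sq_nonneg (‖φ x‖ - A), norm_nonneg (φ 0), norm_nonneg (φ x), hA0]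
      _ = 2 * B + 2 * A ^ 2 := by
          rw [integral_add (hBint.const_mul 2) hconst, integral_const_mul,
            setIntegral_const, measureReal_def, hvol, one_smul, hB_def]
  have hKI : A ^ 2 ≤ K * I := hCS.trans (mul_le_mul_of_nonneg_left hJI hK0)
  have hexp : (2 / m + 2 * K + 1) * I = 2 * (I / m) + 2 * (K * I) + I := by
    field_simp
  rw [hexp]
  linarith [hBI, hKI, hI0, hmain]
end

section
/- For every real μ < 1 there exists a constant C > 0 such that for every smooth compactly supported function φ : ℝ → ℂ for which both A = ∫₀^∞ x^μ |φ(x)|² dx and B = ∫₀^∞ x^μ |φ'(x)|² dx are finite, one has the multiplicative trace interpolation inequality |φ(0)|² ≤ C · A^{(1−μ)/2} · B^{(1+μ)/2}. -/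
set_option maxHeartbeats 1000000

open MeasureTheory Set Real
/-- Optimization over the dilation parameter. -/
lemma wti_opt (μ : ℝ) (hμ1 : -1 < μ) (hμ2 : μ < 1) (L A B c₁ c₂ : ℝ)
    (hc₁ : 0 < c₁) (hc₂ : 0 < c₂) (hA : 0 ≤ A) (hB : 0 ≤ B) (hL : 0 ≤ L)
    (h : ∀ s : ℝ, 0 < s → L ≤ c₁ * s ^ (-1 - μ) * A + c₂ * s ^ (1 - μ) * B) :
    L ≤ (c₁ + c₂) * A ^ ((1 - μ) / 2) * B ^ ((1 + μ) / 2) := by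
  have h1μ : (0:ℝ) < 1 - μ := by linarith
  have h1μ' : (0:ℝ) < 1 + μ := by linarith
  rcases eq_or_lt_of_le hA with hA0 | hApos
  · -- A = 0 : let s → 0
    have hL0 : L ≤ 0 := by
      by_contra hc
      push_neg at hc
      rcases (lt_or_eq_of_le (mul_nonneg hc₂.le hB)) with hcB | hcB
      · set s : ℝ := (L / (2 * (c₂ * B))) ^ (1 - μ)⁻¹ with hs_def
        have hbase : 0 < L / (2 * (c₂ * B)) := by positivity
        have hs : 0 < s := rpow_pos_of_pos hbase _
        have hspow : s ^ (1 - μ) = L / (2 * (c₂ * B)) :=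
          Real.rpow_inv_rpow hbase.le (by linarith)
        have h2 := h s hs
        rw [← hA0, hspow] at h2
        have heq : c₂ * (L / (2 * (c₂ * B))) * B = L / 2 := by
          have hBne : B ≠ 0 := by rintro rfl; simp at hcB
          field_simp
        rw [mul_zero, zero_add, heq] at h2
        linarith
      · have h2 := h 1 one_pos
        rw [← hA0] at h2
        simp only [mul_zero, zero_add, one_rpow, mul_one] at h2
        nlinarith
    have hLz : L = 0 := le_antisymm hL0 hL
    rw [hLz, ← hA0, Real.zero_rpow (by positivity : (1 - μ)/2 ≠ 0)]
    have := rpow_nonneg hB ((1 + μ)/2)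
    nlinarith
  rcases eq_or_lt_of_le hB with hB0 | hBpos
  · -- B = 0 : let s → ∞
    have hL0 : L ≤ 0 := by
      by_contra hc
      push_neg at hc
      set s : ℝ := (L / (2 * (c₁ * A))) ^ (-1 - μ)⁻¹ with hs_def
      have hbase : 0 < L / (2 * (c₁ * A)) := by positivity
      have hs : 0 < s := rpow_pos_of_pos hbase _
      have hspow : s ^ (-1 - μ) = L / (2 * (c₁ * A)) :=
        Real.rpow_inv_rpow hbase.le (by linarith)
      have h2 := h s hs
      rw [← hB0, hspow] at h2
      have heq : c₁ * (L / (2 * (c₁ * A))) * A = L / 2 := by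
        field_simp
      rw [mul_zero, add_zero, heq] at h2
      linarith
    have hLz : L = 0 := le_antisymm hL0 hL
    rw [hLz, ← hB0, Real.zero_rpow (by positivity : (1 + μ)/2 ≠ 0)]
    have := rpow_nonneg hA ((1 - μ)/2)
    nlinarith
  · -- A, B > 0
    set s : ℝ := A ^ ((2:ℝ)⁻¹) * B ^ (-(2:ℝ)⁻¹) with hs_def
    have hs : 0 < s := mul_pos (rpow_pos_of_pos hApos _) (rpow_pos_of_pos hBpos _)
    have key : ∀ t : ℝ, s ^ t = A ^ (t/2) * B ^ (-t/2) := by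
      intro t
      rw [hs_def, Real.mul_rpow (rpow_nonneg hApos.le _) (rpow_nonneg hBpos.le _),
        ← Real.rpow_mul hApos.le, ← Real.rpow_mul hBpos.le]
      ring_nf
    have h2 := h s hs
    have e1 : c₁ * s ^ (-1 - μ) * A = c₁ * (A ^ ((1 - μ)/2) * B ^ ((1 + μ)/2)) := by
      rw [key]
      have : A ^ ((-1 - μ)/2) * A = A ^ ((1 - μ)/2) := by
        nth_rewrite 2 [← Real.rpow_one A]
        rw [← Real.rpow_add hApos]
        ring_nf
      have e2 : (-(-1 - μ)/2) = (1 + μ)/2 := by ring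
      calc c₁ * (A ^ ((-1 - μ)/2) * B ^ (-(-1 - μ)/2)) * A
          = c₁ * ((A ^ ((-1 - μ)/2) * A) * B ^ (-(-1 - μ)/2)) := by ring
        _ = c₁ * (A ^ ((1 - μ)/2) * B ^ ((1 + μ)/2)) := by rw [this, e2]
    have e3 : c₂ * s ^ (1 - μ) * B = c₂ * (A ^ ((1 - μ)/2) * B ^ ((1 + μ)/2)) := by
      rw [key]
      have : B ^ (-(1 - μ)/2) * B = B ^ ((1 + μ)/2) := by
        nth_rewrite 2 [← Real.rpow_one B]
        rw [← Real.rpow_add hBpos]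
        ring_nf
      calc c₂ * (A ^ ((1 - μ)/2) * B ^ (-(1 - μ)/2)) * B
          = c₂ * (A ^ ((1 - μ)/2) * (B ^ (-(1 - μ)/2) * B)) := by ring
        _ = c₂ * (A ^ ((1 - μ)/2) * B ^ ((1 + μ)/2)) := by rw [this]
    rw [e1, e3] at h2
    nlinarith [h2]
lemma wti_additive (μ : ℝ) (hμ1 : -1 < μ) (hμ2 : μ < 1) (φ : ℝ → ℂ)
    (hφ : ContDiff ℝ (⊤ : ℕ∞) φ)
    (hA : IntegrableOn (fun x : ℝ => x ^ μ * ‖φ x‖ ^ 2) (Ioi 0))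
    (hB : IntegrableOn (fun x : ℝ => x ^ μ * ‖deriv φ x‖ ^ 2) (Ioi 0))
    (s : ℝ) (hs : 0 < s) :
    ‖φ 0‖ ^ 2 ≤ (2 * (1 + μ)) * s ^ (-1 - μ) * (∫ x in Ioi (0:ℝ), x ^ μ * ‖φ x‖ ^ 2)
      + (2 / (1 - μ)) * s ^ (1 - μ) * (∫ x in Ioi (0:ℝ), x ^ μ * ‖deriv φ x‖ ^ 2) := by
  have h1μ : (0:ℝ) < 1 - μ := by linarith
  have h1μ' : (0:ℝ) < 1 + μ := by linarith
  have hderiv : Continuous (deriv φ) := hφ.continuous_deriv (by simp)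
  set A := ∫ x in Ioi (0:ℝ), x ^ μ * ‖φ x‖ ^ 2 with hA_def
  set B := ∫ x in Ioi (0:ℝ), x ^ μ * ‖deriv φ x‖ ^ 2 with hB_def
  set B' := ∫ x in Ioc (0:ℝ) s, x ^ μ * ‖deriv φ x‖ ^ 2 with hB'_def
  set W := s ^ (1 - μ) / (1 - μ) with hW_def
  have hrint : ∀ r : ℝ, -1 < r → IntegrableOn (fun x : ℝ => x ^ r) (Ioc (0:ℝ) s) := by
    intro r hr
    have h := intervalIntegral.intervalIntegrable_rpow' (a := 0) (b := s) hr
    rwa [intervalIntegrable_iff_integrableOn_Ioc_of_le hs.le] at h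
  have hrval : ∀ r : ℝ, -1 < r → ∫ x in Ioc (0:ℝ) s, x ^ r = s ^ (r + 1) / (r + 1) := by
    intro r hr
    rw [← intervalIntegral.integral_of_le hs.le, integral_rpow (Or.inl hr),
      Real.zero_rpow (by linarith)]
    ring
  have hW_nonneg : 0 ≤ W := by rw [hW_def]; positivity
  have hBIoc : IntegrableOn (fun x : ℝ => x ^ μ * ‖deriv φ x‖ ^ 2) (Ioc (0:ℝ) s) :=
    hB.mono_set Ioc_subset_Ioi_self
  have hAIoc : IntegrableOn (fun x : ℝ => x ^ μ * ‖φ x‖ ^ 2) (Ioc (0:ℝ) s) :=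
    hA.mono_set Ioc_subset_Ioi_self
  have hB'_nonneg : 0 ≤ B' := by
    rw [hB'_def]
    apply setIntegral_nonneg measurableSet_Ioc
    intro x hx
    have : (0:ℝ) ≤ x ^ μ := rpow_nonneg hx.1.le μ
    positivity
  have hA_nonneg : 0 ≤ A := by
    rw [hA_def]
    apply setIntegral_nonneg measurableSet_Ioi
    intro x hx
    have : (0:ℝ) ≤ x ^ μ := rpow_nonneg (le_of_lt hx) μ
    positivity
  have hB'B : B' ≤ B := by
    rw [hB'_def, hB_def]
    apply setIntegral_mono_set hB
    · filter_upwards [ae_restrict_mem measurableSet_Ioi] with x hx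
      have : (0:ℝ) ≤ x ^ μ := rpow_nonneg (le_of_lt hx) μ
      positivity
    · exact (Ioc_subset_Ioi_self).eventuallyLE
  -- Hölder/Cauchy-Schwarz step
  have hHolder : ∫ x in Ioc (0:ℝ) s, ‖deriv φ x‖ ≤ W ^ ((1:ℝ)/2) * B' ^ ((1:ℝ)/2) := by
    set ν := volume.restrict (Ioc (0:ℝ) s) with hν
    have hmes : ∀ᵐ x ∂ν, x ∈ Ioc (0:ℝ) s := ae_restrict_mem measurableSet_Ioc
    have hf_meas : AEStronglyMeasurable (fun x : ℝ => x ^ (-μ/2)) ν := by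
      apply Measurable.aestronglyMeasurable; measurability
    have hg_meas : AEStronglyMeasurable (fun x : ℝ => x ^ (μ/2) * ‖deriv φ x‖) ν := by
      apply AEStronglyMeasurable.mul
      · apply Measurable.aestronglyMeasurable; measurability
      · exact hderiv.norm.aestronglyMeasurable
    have hf_mem : MemLp (fun x : ℝ => x ^ (-μ/2)) (ENNReal.ofReal 2) ν := by
      rw [show ENNReal.ofReal 2 = 2 by norm_num]
      rw [memLp_two_iff_integrable_sq hf_meas]
      apply Integrable.congr ((hrint (-μ) (by linarith)))
      filter_upwards [hmes] with x hx
      rw [← Real.rpow_natCast (x ^ (-μ/2)) 2, ← Real.rpow_mul hx.1.le]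
      norm_num
    have hg_mem : MemLp (fun x : ℝ => x ^ (μ/2) * ‖deriv φ x‖) (ENNReal.ofReal 2) ν := by
      rw [show ENNReal.ofReal 2 = 2 by norm_num]
      rw [memLp_two_iff_integrable_sq hg_meas]
      apply Integrable.congr hBIoc
      filter_upwards [hmes] with x hx
      rw [mul_pow, ← Real.rpow_natCast (x ^ (μ/2)) 2, ← Real.rpow_mul hx.1.le]
      norm_num
    have hf_nonneg : 0 ≤ᵐ[ν] fun x : ℝ => x ^ (-μ/2) := by
      filter_upwards [hmes] with x hx
      exact rpow_nonneg hx.1.le _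
    have hg_nonneg : 0 ≤ᵐ[ν] fun x : ℝ => x ^ (μ/2) * ‖deriv φ x‖ := by
      filter_upwards [hmes] with x hx
      exact mul_nonneg (rpow_nonneg hx.1.le _) (norm_nonneg _)
    have hH := integral_mul_le_Lp_mul_Lq_of_nonneg
      (Real.HolderConjugate.two_two : (2:ℝ).HolderConjugate 2)
      hf_nonneg hg_nonneg hf_mem hg_mem
    have e1 : ∫ x, x ^ (-μ/2) * (x ^ (μ/2) * ‖deriv φ x‖) ∂ν
        = ∫ x in Ioc (0:ℝ) s, ‖deriv φ x‖ := by
      apply integral_congr_ae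
      filter_upwards [hmes] with x hx
      rw [← mul_assoc, ← Real.rpow_add hx.1, show -μ/2 + μ/2 = 0 by ring,
        Real.rpow_zero, one_mul]
    have e2 : ∫ x, (x ^ (-μ/2)) ^ (2:ℝ) ∂ν = W := by
      rw [hW_def, show (1:ℝ) - μ = -μ + 1 by ring, show s ^ (-μ + 1) / (-μ + 1)
        = ∫ x in Ioc (0:ℝ) s, x ^ (-μ) from (hrval (-μ) (by linarith)).symm]
      apply integral_congr_ae
      filter_upwards [hmes] with x hx
      rw [← Real.rpow_mul hx.1.le]
      norm_num
    have e3 : ∫ x, (x ^ (μ/2) * ‖deriv φ x‖) ^ (2:ℝ) ∂ν = B' := by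
      rw [hB'_def]
      apply integral_congr_ae
      filter_upwards [hmes] with x hx
      rw [Real.mul_rpow (rpow_nonneg hx.1.le _) (norm_nonneg _),
        ← Real.rpow_mul hx.1.le, show μ/2 * 2 = μ by ring,
        show ((2:ℝ)) = ((2:ℕ):ℝ) by norm_num, Real.rpow_natCast]
    rw [e1, e2, e3] at hH
    exact hH
  -- pointwise bound
  have hWB : (W ^ ((1:ℝ)/2) * B' ^ ((1:ℝ)/2)) ^ 2 = W * B' := by
    rw [mul_pow, ← Real.rpow_natCast (W ^ ((1:ℝ)/2)) 2, ← Real.rpow_natCast (B' ^ ((1:ℝ)/2)) 2,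
      ← Real.rpow_mul hW_nonneg, ← Real.rpow_mul hB'_nonneg]
    norm_num
  have key : ∀ t ∈ Ioc (0:ℝ) s, ‖φ 0‖ ^ 2 ≤ 2 * ‖φ t‖ ^ 2 + 2 * (W * B') := by
    intro t ht
    have hftc : ∫ x in (0:ℝ)..t, deriv φ x = φ t - φ 0 :=
      intervalIntegral.integral_deriv_eq_sub
        (fun x _ => (hφ.differentiable (by simp)).differentiableAt)
        (hderiv.intervalIntegrable 0 t)
    have h1 : ‖φ t - φ 0‖ ≤ ∫ x in Ioc (0:ℝ) s, ‖deriv φ x‖ := by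
      rw [← hftc]
      calc ‖∫ x in (0:ℝ)..t, deriv φ x‖ ≤ ∫ x in (0:ℝ)..t, ‖deriv φ x‖ :=
            intervalIntegral.norm_integral_le_integral_norm ht.1.le
        _ = ∫ x in Ioc (0:ℝ) t, ‖deriv φ x‖ := intervalIntegral.integral_of_le ht.1.le
        _ ≤ ∫ x in Ioc (0:ℝ) s, ‖deriv φ x‖ := by
            apply setIntegral_mono_set (hderiv.norm.integrableOn_Ioc)
            · filter_upwards with x using norm_nonneg _
            · exact (Ioc_subset_Ioc_right ht.2).eventuallyLE
    have h2 : ‖φ t - φ 0‖ ≤ W ^ ((1:ℝ)/2) * B' ^ ((1:ℝ)/2) := h1.trans hHolder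
    have h3 : ‖φ 0‖ ≤ ‖φ t‖ + ‖φ t - φ 0‖ := by
      calc ‖φ 0‖ = ‖φ t - (φ t - φ 0)‖ := by congr 1; ring
        _ ≤ ‖φ t‖ + ‖φ t - φ 0‖ := norm_sub_le _ _
    have h4 : (0:ℝ) ≤ ‖φ t - φ 0‖ := norm_nonneg _
    have h5 : (0:ℝ) ≤ ‖φ 0‖ := norm_nonneg _
    have h6 : (0:ℝ) ≤ ‖φ t‖ := norm_nonneg _
    have h7 : ‖φ 0‖ ^ 2 ≤ (‖φ t‖ + ‖φ t - φ 0‖) ^ 2 := by nlinarith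
    have h8 : ‖φ t - φ 0‖ ^ 2 ≤ W * B' := by
      nlinarith [pow_le_pow_left₀ h4 h2 2, hWB]
    nlinarith [sq_nonneg (‖φ t‖ - ‖φ t - φ 0‖)]
  -- integrate the pointwise bound
  have hmono : ∫ t in Ioc (0:ℝ) s, t ^ μ * ‖φ 0‖ ^ 2
      ≤ ∫ t in Ioc (0:ℝ) s, (2 * (t ^ μ * ‖φ t‖ ^ 2) + (2 * (W * B')) * t ^ μ) := by
    apply setIntegral_mono_on
    · exact (hrint μ hμ1).mul_const _
    · exact (hAIoc.const_mul 2).add ((hrint μ hμ1).const_mul _)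
    · exact measurableSet_Ioc
    · intro t ht
      have hk := key t ht
      have htp : (0:ℝ) ≤ t ^ μ := rpow_nonneg ht.1.le μ
      nlinarith [hk, htp]
  have hLHS : ∫ t in Ioc (0:ℝ) s, t ^ μ * ‖φ 0‖ ^ 2
      = (s ^ (μ + 1) / (μ + 1)) * ‖φ 0‖ ^ 2 := by
    rw [← hrval μ hμ1, integral_mul_const]
  have hRHS : ∫ t in Ioc (0:ℝ) s, (2 * (t ^ μ * ‖φ t‖ ^ 2) + (2 * (W * B')) * t ^ μ)
      = 2 * (∫ t in Ioc (0:ℝ) s, t ^ μ * ‖φ t‖ ^ 2) + (2 * (W * B')) * (s ^ (μ + 1) / (μ + 1)) := by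
    rw [integral_add ((hAIoc.const_mul 2)) ((hrint μ hμ1).const_mul _),
      integral_const_mul, integral_const_mul, hrval μ hμ1]
  have hA'A : (∫ t in Ioc (0:ℝ) s, t ^ μ * ‖φ t‖ ^ 2) ≤ A := by
    rw [hA_def]
    apply setIntegral_mono_set hA
    · filter_upwards [ae_restrict_mem measurableSet_Ioi] with x hx
      have : (0:ℝ) ≤ x ^ μ := rpow_nonneg (le_of_lt hx) μ
      positivity
    · exact (Ioc_subset_Ioi_self).eventuallyLE
  rw [hLHS, hRHS] at hmono
  -- final algebra
  have hQ : (0:ℝ) < s ^ (μ + 1) := rpow_pos_of_pos hs _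
  have hR : (0:ℝ) < s ^ (1 - μ) := rpow_pos_of_pos hs _
  have hneg : s ^ (-1 - μ) = (s ^ (μ + 1))⁻¹ := by
    rw [show -1 - μ = -(μ + 1) by ring, Real.rpow_neg hs.le]
  rw [hneg]
  have hB_nonneg : 0 ≤ B := le_trans hB'_nonneg hB'B
  have hfinal : (s ^ (μ + 1) / (μ + 1)) * ‖φ 0‖ ^ 2
      ≤ 2 * A + (2 * (W * B)) * (s ^ (μ + 1) / (μ + 1)) := by
    have : (2 * (W * B')) * (s ^ (μ + 1) / (μ + 1)) ≤ (2 * (W * B)) * (s ^ (μ + 1) / (μ + 1)) := by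
      apply mul_le_mul_of_nonneg_right _ (div_nonneg hQ.le (by linarith))
      nlinarith [hW_nonneg, hB'B]
    linarith [hmono, hA'A]
  -- divide by s^(μ+1)/(μ+1)
  have hμ10 : (μ + 1) ≠ 0 := by linarith
  have hQ0 : s ^ (μ + 1) ≠ 0 := hQ.ne'
  have hc : (0:ℝ) < (μ + 1) * (s ^ (μ + 1))⁻¹ := mul_pos (by linarith) (inv_pos.2 hQ)
  have h9 := mul_le_mul_of_nonneg_right hfinal hc.le
  have e4 : (s ^ (μ + 1) / (μ + 1)) * ‖φ 0‖ ^ 2 * ((μ + 1) * (s ^ (μ + 1))⁻¹)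
      = ‖φ 0‖ ^ 2 := by
    field_simp
  have e5 : (2 * A + (2 * (W * B)) * (s ^ (μ + 1) / (μ + 1))) * ((μ + 1) * (s ^ (μ + 1))⁻¹)
      = 2 * (1 + μ) * (s ^ (μ + 1))⁻¹ * A + 2 * (W * B) := by
    field_simp
    ring
  rw [e4, e5] at h9
  have e6 : 2 * (W * B) = 2 / (1 - μ) * s ^ (1 - μ) * B := by
    rw [hW_def]; ring
  linarith [h9, e6.le, e6.ge]
lemma wti_zero (μ : ℝ) (hμ : μ ≤ -1) (φ : ℝ → ℂ) (hc : Continuous φ)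
    (hA : IntegrableOn (fun x : ℝ => x ^ μ * ‖φ x‖ ^ 2) (Ioi 0)) : φ 0 = 0 := by
  by_contra h0
  have hn : 0 < ‖φ 0‖ := norm_pos_iff.2 h0
  obtain ⟨δ, hδ, hball⟩ := Metric.continuousAt_iff.1 hc.continuousAt (‖φ 0‖/2) (by linarith)
  have hlow : ∀ x ∈ Ioo (0:ℝ) δ, ‖φ 0‖/2 ≤ ‖φ x‖ := by
    intro x hx
    have hd : dist x 0 < δ := by
      rw [Real.dist_eq, sub_zero, abs_of_pos hx.1]
      exact hx.2
    have := hball hd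
    rw [dist_eq_norm] at this
    have h1 : ‖φ 0‖ ≤ ‖φ x‖ + ‖φ x - φ 0‖ := by
      calc ‖φ 0‖ = ‖φ x - (φ x - φ 0)‖ := by congr 1; ring
        _ ≤ ‖φ x‖ + ‖φ x - φ 0‖ := norm_sub_le _ _
    linarith
  have hint : IntegrableOn (fun x : ℝ => x ^ μ) (Ioo 0 δ) := by
    apply Integrable.mono'
      ((hA.mono_set (Ioo_subset_Ioi_self)).const_mul (4/‖φ 0‖^2))
    · apply Measurable.aestronglyMeasurable; measurability
    · filter_upwards [ae_restrict_mem measurableSet_Ioo] with x hx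
      have hxp : (0:ℝ) ≤ x ^ μ := rpow_nonneg hx.1.le μ
      rw [Real.norm_of_nonneg hxp]
      have h2 := hlow x hx
      have h3 : ‖φ 0‖^2/4 ≤ ‖φ x‖^2 := by nlinarith
      rw [div_mul_eq_mul_div, le_div_iff₀ (by positivity)]
      nlinarith
  rw [intervalIntegral.integrableOn_Ioo_rpow_iff hδ] at hint
  linarith

/-- Multiplicative trace interpolation inequality: for `μ < 1` there is `C > 0` such that
`|φ(0)|² ≤ C · A^{(1−μ)/2} · B^{(1+μ)/2}` with `A = ∫₀^∞ x^μ|φ|²`, `B = ∫₀^∞ x^μ|φ'|²`,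
whenever these integrals are finite. -/
theorem weighted_trace_interpolation (μ : ℝ) (hμ : μ < 1) :
    ∃ C : ℝ, 0 < C ∧ ∀ φ : ℝ → ℂ, ContDiff ℝ (⊤ : ℕ∞) φ → HasCompactSupport φ →
      MeasureTheory.IntegrableOn (fun x : ℝ => x ^ μ * ‖φ x‖ ^ 2) (Set.Ioi 0) →
      MeasureTheory.IntegrableOn (fun x : ℝ => x ^ μ * ‖deriv φ x‖ ^ 2) (Set.Ioi 0) →
      ‖φ 0‖ ^ 2
        ≤ C * (∫ x in Set.Ioi (0 : ℝ), x ^ μ * ‖φ x‖ ^ 2) ^ ((1 - μ) / 2)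
            * (∫ x in Set.Ioi (0 : ℝ), x ^ μ * ‖deriv φ x‖ ^ 2) ^ ((1 + μ) / 2) := by
  rcases le_or_gt μ (-1) with hle | hgt
  · refine ⟨1, one_pos, fun φ hφ _ hA hB => ?_⟩
    have h0 : φ 0 = 0 := wti_zero μ hle φ hφ.continuous hA
    rw [h0, norm_zero]
    have hAn : 0 ≤ ∫ x in Set.Ioi (0:ℝ), x ^ μ * ‖φ x‖ ^ 2 := by
      apply setIntegral_nonneg measurableSet_Ioi
      intro x hx
      have : (0:ℝ) ≤ x ^ μ := rpow_nonneg (le_of_lt hx) μ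
      positivity
    have hBn : 0 ≤ ∫ x in Set.Ioi (0:ℝ), x ^ μ * ‖deriv φ x‖ ^ 2 := by
      apply setIntegral_nonneg measurableSet_Ioi
      intro x hx
      have : (0:ℝ) ≤ x ^ μ := rpow_nonneg (le_of_lt hx) μ
      positivity
    have := mul_nonneg (mul_nonneg zero_le_one (rpow_nonneg hAn ((1 - μ)/2)))
      (rpow_nonneg hBn ((1 + μ)/2))
    simpa using this
  · refine ⟨2 * (1 + μ) + 2 / (1 - μ), ?_, fun φ hφ _ hA hB => ?_⟩
    · have h1 : (0:ℝ) < 1 + μ := by linarith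
      have h2 : (0:ℝ) < 1 - μ := by linarith
      positivity
    · have hAn : 0 ≤ ∫ x in Set.Ioi (0:ℝ), x ^ μ * ‖φ x‖ ^ 2 := by
        apply setIntegral_nonneg measurableSet_Ioi
        intro x hx
        have : (0:ℝ) ≤ x ^ μ := rpow_nonneg (le_of_lt hx) μ
        positivity
      have hBn : 0 ≤ ∫ x in Set.Ioi (0:ℝ), x ^ μ * ‖deriv φ x‖ ^ 2 := by
        apply setIntegral_nonneg measurableSet_Ioi
        intro x hx
        have : (0:ℝ) ≤ x ^ μ := rpow_nonneg (le_of_lt hx) μ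
        positivity
      exact wti_opt μ hgt hμ _ _ _ _ _ (by linarith) (div_pos two_pos (by linarith)) hAn hBn (by positivity)
        (fun s hs => wti_additive μ hgt hμ φ hφ hA hB s hs)
end

section
/- Fix an integer d ≥ 1 and a real μ < 1. There exists a constant C > 0 such that for every family (φ_q)_{q ∈ ℤ^d} of smooth compactly supported functions ℝ → ℂ, ∑_{q ∈ ℤ^d} (1 + |q|²)^{(1−μ)/2} |φ_q(0)|² ≤ C ∑_{q ∈ ℤ^d} ∫₀^∞ x^μ ( (1 + |q|²)|φ_q(x)|² + |φ_q'(x)|² ) dx, where all sums and integrals take values in [0,∞]. -/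
open MeasureTheory Set

open scoped ENNReal

private lemma lintegral_rpow_Ioc_aux {r : ℝ} (hr : -1 < r) {T : ℝ} (hT : 0 < T) :
    ∫⁻ x in Ioc (0:ℝ) T, ENNReal.ofReal (x ^ r) = ENNReal.ofReal (T ^ (r+1) / (r+1)) := by
  rw [← ofReal_integral_eq_lintegral_ofReal
      ((intervalIntegral.intervalIntegrable_rpow' hr (a := 0) (b := T)).1)
      (by filter_upwards [ae_restrict_mem measurableSet_Ioc] with x hx
          exact Real.rpow_nonneg hx.1.le r)]
  rw [← intervalIntegral.integral_of_le hT.le, integral_rpow (Or.inl hr),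
    Real.zero_rpow (by linarith), sub_zero]

private lemma trace_mode_aux (μ : ℝ) (hμ : μ < 1) {A : ℝ} (hA : 1 ≤ A) (φ : ℝ → ℂ)
    (hφ : ContDiff ℝ (⊤ : ℕ∞) φ) :
    ENNReal.ofReal (A ^ ((1 - μ) / 2) * ‖φ 0‖ ^ 2)
      ≤ ENNReal.ofReal (4 * max 1 (2 ^ μ) + 2 / (1 - μ)) *
        ∫⁻ x in Ioi (0:ℝ), ENNReal.ofReal (x ^ μ * (A * ‖φ x‖ ^ 2 + ‖deriv φ x‖ ^ 2)) := by
  have hA0 : (0:ℝ) < A := lt_of_lt_of_le one_pos hA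
  set T : ℝ := A ^ (-(1/2) : ℝ) with hTdef
  have hT0 : 0 < T := Real.rpow_pos_of_pos hA0 _
  have hT1 : T ≤ 1 := Real.rpow_le_one_of_one_le_of_nonpos hA (by norm_num)
  have hcont : Continuous φ := hφ.continuous
  have hcd : Continuous (deriv φ) := hφ.continuous_deriv (by simp)
  set cμ : ℝ := max 1 ((2:ℝ) ^ μ) with hcμdef
  have hcμ1 : (1:ℝ) ≤ cμ := le_max_left _ _
  have hcμ0 : (0:ℝ) < cμ := lt_of_lt_of_le one_pos hcμ1
  set S : ℝ := ∫ x in Ioc (0:ℝ) T, ‖deriv φ x‖ with hSdef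
  have hS0 : 0 ≤ S := integral_nonneg fun x => norm_nonneg _
  set J1 : ℝ≥0∞ := ∫⁻ x in Ioi (0:ℝ), ENNReal.ofReal (x ^ μ * ‖φ x‖ ^ 2) with hJ1def
  set J2 : ℝ≥0∞ := ∫⁻ x in Ioi (0:ℝ), ENNReal.ofReal (x ^ μ * ‖deriv φ x‖ ^ 2) with hJ2def
  -- pointwise bound from FTC
  have hbd : ∀ x ∈ Icc (T/2) T, ‖φ 0‖ ≤ ‖φ x‖ + S := by
    intro x hx
    have hx0 : (0:ℝ) ≤ x := le_trans (by positivity) hx.1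
    have hFTC : ∫ t in (0:ℝ)..x, deriv φ t = φ x - φ 0 :=
      intervalIntegral.integral_deriv_eq_sub
        (fun y _ => (hφ.differentiable (by simp)).differentiableAt)
        (hcd.intervalIntegrable 0 x)
    have h1 : ‖φ x - φ 0‖ ≤ ∫ t in (0:ℝ)..x, ‖deriv φ t‖ := by
      rw [← hFTC]; exact intervalIntegral.norm_integral_le_integral_norm hx0
    have h2 : (∫ t in (0:ℝ)..x, ‖deriv φ t‖) ≤ S := by
      rw [intervalIntegral.integral_of_le hx0]
      exact setIntegral_mono_set (hcd.norm.integrableOn_Ioc)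
        (Filter.Eventually.of_forall fun y => norm_nonneg _)
        (HasSubset.Subset.eventuallyLE (Ioc_subset_Ioc_right hx.2))
    calc ‖φ 0‖ = ‖φ x - (φ x - φ 0)‖ := by ring_nf
      _ ≤ ‖φ x‖ + ‖φ x - φ 0‖ := norm_sub_le _ _
      _ ≤ ‖φ x‖ + S := by linarith
  have hsq : ∀ x ∈ Icc (T/2) T, ‖φ 0‖^2 ≤ 2*‖φ x‖^2 + 2*S^2 := by
    intro x hx
    have h := hbd x hx
    nlinarith [norm_nonneg (φ x), norm_nonneg (φ 0), sq_nonneg (‖φ x‖ - S)]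
  set R1' : ℝ := ∫ x in Ioc (T/2) T, ‖φ x‖^2 with hR1'def
  set R1 : ℝ := ∫ x in Ioc (T/2) T, x ^ μ * ‖φ x‖^2 with hR1def
  have hvol : (volume (Ioc (T/2) T)).toReal = T/2 := by
    rw [Real.volume_Ioc, ENNReal.toReal_ofReal (by linarith)]; ring
  have havg : ‖φ 0‖^2 * (T/2) ≤ 2*R1' + 2*S^2*(T/2) := by
    have hint2 : IntegrableOn (fun x => 2*‖φ x‖^2 + 2*S^2) (Ioc (T/2) T) volume := by
      apply Integrable.add
      · exact ((continuous_const.mul (hcont.norm.pow 2)).integrableOn_Ioc)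
      · exact integrableOn_const measure_Ioc_lt_top.ne
    have h := setIntegral_mono_on
      (integrableOn_const measure_Ioc_lt_top.ne) hint2 measurableSet_Ioc
      (fun x hx => hsq x (Ioc_subset_Icc_self hx))
    rw [setIntegral_const, measureReal_def, hvol, smul_eq_mul] at h
    rw [integral_add (f := fun x => 2*‖φ x‖^2) (g := fun _ => 2*S^2)
        (μ := volume.restrict (Ioc (T/2) T))
        (by exact (continuous_const.mul (hcont.norm.pow 2)).integrableOn_Ioc)
        (by exact integrableOn_const measure_Ioc_lt_top.ne),
      integral_const_mul, setIntegral_const, measureReal_def, hvol, smul_eq_mul] at h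
    linarith
  -- weight comparison on (T/2, T]
  have hwt : ∀ x ∈ Ioc (T/2) T, ‖φ x‖^2 ≤ (cμ * T^(-μ)) * (x ^ μ * ‖φ x‖^2) := by
    intro x hx
    have hx0 : (0:ℝ) < x := lt_of_le_of_lt (by positivity) hx.1
    have hxc : x ^ (-μ) ≤ cμ * T^(-μ) := by
      rcases le_or_gt μ 0 with h | h
      · calc x ^ (-μ) ≤ T ^ (-μ) := Real.rpow_le_rpow hx0.le hx.2 (neg_nonneg.2 h)
          _ ≤ cμ * T^(-μ) := le_mul_of_one_le_left (Real.rpow_nonneg hT0.le _) hcμ1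
      · have h1 : x ^ (-μ) ≤ (T/2) ^ (-μ) :=
          Real.rpow_le_rpow_of_nonpos (by positivity) hx.1.le (by linarith)
        have h2 : (T/2 : ℝ) ^ (-μ) = 2^μ * T^(-μ) := by
          rw [Real.div_rpow hT0.le (by norm_num : (0:ℝ) ≤ 2), div_eq_mul_inv,
            ← Real.rpow_neg (by norm_num : (0:ℝ) ≤ 2), neg_neg, mul_comm]
        calc x ^ (-μ) ≤ 2^μ * T^(-μ) := by rw [← h2]; exact h1
          _ ≤ cμ * T^(-μ) :=
            mul_le_mul_of_nonneg_right (le_max_right _ _) (Real.rpow_nonneg hT0.le _)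
    have hone : (1:ℝ) ≤ (cμ * T^(-μ)) * x ^ μ := by
      have := mul_le_mul_of_nonneg_right hxc (Real.rpow_nonneg hx0.le μ)
      rwa [← Real.rpow_add hx0, neg_add_cancel, Real.rpow_zero] at this
    calc ‖φ x‖^2 = 1 * ‖φ x‖^2 := (one_mul _).symm
      _ ≤ ((cμ * T^(-μ)) * x ^ μ) * ‖φ x‖^2 :=
          mul_le_mul_of_nonneg_right hone (sq_nonneg _)
      _ = (cμ * T^(-μ)) * (x ^ μ * ‖φ x‖^2) := by ring
  have hconμ : ContinuousOn (fun x : ℝ => x ^ μ * ‖φ x‖^2) (Icc (T/2) T) := by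
    apply ContinuousOn.mul ?_ ((hcont.norm.pow 2).continuousOn)
    intro x hx
    exact (Real.continuousAt_rpow_const x μ
      (Or.inl (ne_of_gt (lt_of_lt_of_le (by positivity) hx.1)))).continuousWithinAt
  have hR1int : IntegrableOn (fun x : ℝ => x ^ μ * ‖φ x‖^2) (Ioc (T/2) T) volume :=
    (hconμ.integrableOn_compact isCompact_Icc).mono_set Ioc_subset_Icc_self
  have hR1'le : R1' ≤ (cμ * T^(-μ)) * R1 := by
    have h := setIntegral_mono_on ((hcont.norm.pow 2).integrableOn_Ioc)
      (hR1int.const_mul (cμ * T^(-μ))) measurableSet_Ioc hwt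
    rwa [integral_const_mul] at h
  have hreal : ‖φ 0‖^2 * T ≤ 4*cμ*T^(-μ)*R1 + 2*S^2*T := by linarith
  -- pass to ENNReal
  have hR1nn : 0 ≤ R1 := by
    apply integral_nonneg_of_ae
    filter_upwards [ae_restrict_mem measurableSet_Ioc] with x hx
    have hx0 : (0:ℝ) < x := lt_of_le_of_lt (by positivity) hx.1
    positivity
  have key2 : ENNReal.ofReal R1 ≤ J1 := by
    rw [hR1def, ofReal_integral_eq_lintegral_ofReal hR1int
      (by filter_upwards [ae_restrict_mem measurableSet_Ioc] with x hx
          have hx0 : (0:ℝ) < x := lt_of_le_of_lt (by positivity) hx.1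
          positivity)]
    exact lintegral_mono_set fun x hx => lt_of_le_of_lt (by positivity) hx.1
  -- Cauchy-Schwarz for the derivative term
  set D : ℝ≥0∞ := ENNReal.ofReal (T^(1-μ)/(1-μ)) with hDdef
  have hS2 : ENNReal.ofReal (S^2) ≤ D * J2 := by
    have hSof : ENNReal.ofReal S = ∫⁻ x in Ioc (0:ℝ) T, ENNReal.ofReal ‖deriv φ x‖ :=
      ofReal_integral_eq_lintegral_ofReal (hcd.norm.integrableOn_Ioc)
        (Filter.Eventually.of_forall fun y => norm_nonneg _)
    set f : ℝ → ℝ≥0∞ := fun x => ENNReal.ofReal (x ^ (-μ/2)) with hfdef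
    set g : ℝ → ℝ≥0∞ := fun x => ENNReal.ofReal (x ^ (μ/2) * ‖deriv φ x‖) with hgdef
    have hfm : AEMeasurable f (volume.restrict (Ioc (0:ℝ) T)) := by
      apply AEMeasurable.ennreal_ofReal
      apply ContinuousOn.aemeasurable ?_ measurableSet_Ioc
      exact fun x hx => (Real.continuousAt_rpow_const x _
        (Or.inl (ne_of_gt hx.1))).continuousWithinAt
    have hgm : AEMeasurable g (volume.restrict (Ioc (0:ℝ) T)) := by
      apply AEMeasurable.ennreal_ofReal
      apply ContinuousOn.aemeasurable ?_ measurableSet_Ioc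
      exact ContinuousOn.mul (fun x hx => (Real.continuousAt_rpow_const x _
        (Or.inl (ne_of_gt hx.1))).continuousWithinAt) (hcd.norm.continuousOn)
    have hpq : Real.HolderConjugate 2 2 := Real.HolderConjugate.two_two
    have hCS := ENNReal.lintegral_mul_le_Lp_mul_Lq (volume.restrict (Ioc (0:ℝ) T)) hpq hfm hgm
    have hfg : (∫⁻ x in Ioc (0:ℝ) T, (f * g) x) = ENNReal.ofReal S := by
      rw [hSof]
      apply lintegral_congr_ae
      filter_upwards [ae_restrict_mem measurableSet_Ioc] with x hx
      simp only [Pi.mul_apply, hfdef, hgdef]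
      rw [← ENNReal.ofReal_mul (Real.rpow_nonneg hx.1.le _), ← mul_assoc,
        ← Real.rpow_add hx.1, show -μ/2 + μ/2 = 0 by ring, Real.rpow_zero, one_mul]
    have hf2 : (∫⁻ x in Ioc (0:ℝ) T, f x ^ (2:ℝ)) = D := by
      have he : ∀ᵐ x ∂(volume.restrict (Ioc (0:ℝ) T)),
          f x ^ (2:ℝ) = ENNReal.ofReal (x ^ (-μ)) := by
        filter_upwards [ae_restrict_mem measurableSet_Ioc] with x hx
        rw [hfdef]
        rw [ENNReal.ofReal_rpow_of_nonneg (Real.rpow_nonneg hx.1.le _) (by norm_num),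
          ← Real.rpow_mul hx.1.le, show -μ/2*2 = -μ by ring]
      rw [lintegral_congr_ae he, lintegral_rpow_Ioc_aux (by linarith) hT0, hDdef,
        show -μ + 1 = 1 - μ by ring]
    have hg2 : (∫⁻ x in Ioc (0:ℝ) T, g x ^ (2:ℝ)) ≤ J2 := by
      have he : ∀ᵐ x ∂(volume.restrict (Ioc (0:ℝ) T)),
          g x ^ (2:ℝ) = ENNReal.ofReal (x ^ μ * ‖deriv φ x‖^2) := by
        filter_upwards [ae_restrict_mem measurableSet_Ioc] with x hx
        rw [hgdef]
        rw [ENNReal.ofReal_rpow_of_nonneg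
            (mul_nonneg (Real.rpow_nonneg hx.1.le _) (norm_nonneg _)) (by norm_num)]
        congr 1
        rw [Real.mul_rpow (Real.rpow_nonneg hx.1.le _) (norm_nonneg _),
          ← Real.rpow_mul hx.1.le, show μ/2*2 = μ by ring,
          show (2:ℝ) = ((2:ℕ):ℝ) by norm_num, Real.rpow_natCast]
      rw [lintegral_congr_ae he]
      exact lintegral_mono_set fun x hx => hx.1
    have hCS' : ENNReal.ofReal S ≤ D ^ (1/2 : ℝ) * J2 ^ (1/2 : ℝ) := by
      rw [← hfg]
      refine le_trans hCS ?_
      rw [hf2]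
      exact mul_le_mul_right (ENNReal.rpow_le_rpow hg2 (by norm_num)) _
    have hhalf : ∀ x : ℝ≥0∞, x ^ (1/2 : ℝ) * x ^ (1/2 : ℝ) = x := by
      intro x
      rw [← ENNReal.rpow_add_of_nonneg _ _ (by norm_num) (by norm_num)]
      norm_num
    calc ENNReal.ofReal (S^2) = ENNReal.ofReal S * ENNReal.ofReal S := by
          rw [← ENNReal.ofReal_mul hS0]; ring_nf
      _ ≤ (D ^ (1/2:ℝ) * J2 ^ (1/2:ℝ)) * (D ^ (1/2:ℝ) * J2 ^ (1/2:ℝ)) := mul_le_mul' hCS' hCS'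
      _ = (D ^ (1/2:ℝ) * D ^ (1/2:ℝ)) * (J2 ^ (1/2:ℝ) * J2 ^ (1/2:ℝ)) := by ring
      _ = D * J2 := by rw [hhalf, hhalf]
  -- exponent identities
  have hID : A ^ ((1-μ)/2) * T ^ (-μ) = A * T := by
    rw [hTdef, ← Real.rpow_mul hA0.le, ← Real.rpow_add hA0]
    nth_rewrite 2 [← Real.rpow_one A]
    rw [← Real.rpow_add hA0]
    congr 1; ring
  have hID2 : A ^ ((1-μ)/2) * T ^ (1-μ) = 1 := by
    rw [hTdef, ← Real.rpow_mul hA0.le, ← Real.rpow_add hA0,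
      show (1-μ)/2 + -(1/2)*(1-μ) = 0 by ring, Real.rpow_zero]
  -- main real inequality
  have hmain : A^((1-μ)/2) * ‖φ 0‖^2 ≤ (4*cμ*A) * R1 + (2 * A^((1-μ)/2)) * S^2 := by
    have h5 := mul_le_mul_of_nonneg_left hreal (Real.rpow_nonneg hA0.le ((1-μ)/2))
    have h6 : (A^((1-μ)/2) * ‖φ 0‖^2) * T ≤ ((4*cμ*A)*R1 + (2*A^((1-μ)/2))*S^2) * T := by
      calc (A^((1-μ)/2) * ‖φ 0‖^2) * T = A^((1-μ)/2) * (‖φ 0‖^2 * T) := by ring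
        _ ≤ A^((1-μ)/2) * (4*cμ*T^(-μ)*R1 + 2*S^2*T) := h5
        _ = (A^((1-μ)/2)*T^(-μ))*(4*cμ*R1) + (2*A^((1-μ)/2))*S^2*T := by ring
        _ = (A*T)*(4*cμ*R1) + (2*A^((1-μ)/2))*S^2*T := by rw [hID]
        _ = ((4*cμ*A)*R1 + (2*A^((1-μ)/2))*S^2) * T := by ring
    exact le_of_mul_le_mul_right h6 hT0
  -- split of the RHS integral
  have hmeasJ1 : AEMeasurable (fun x : ℝ => ENNReal.ofReal (x ^ μ * ‖φ x‖^2))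
      (volume.restrict (Ioi (0:ℝ))) := by
    apply AEMeasurable.ennreal_ofReal
    apply ContinuousOn.aemeasurable ?_ measurableSet_Ioi
    exact ContinuousOn.mul (fun x hx => (Real.continuousAt_rpow_const x _
      (Or.inl (ne_of_gt hx))).continuousWithinAt) ((hcont.norm.pow 2).continuousOn)
  have hIsplit : (∫⁻ x in Ioi (0:ℝ),
        ENNReal.ofReal (x ^ μ * (A * ‖φ x‖ ^ 2 + ‖deriv φ x‖ ^ 2)))
      = ENNReal.ofReal A * J1 + J2 := by
    have hae : ∀ᵐ x ∂(volume.restrict (Ioi (0:ℝ))),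
        ENNReal.ofReal (x ^ μ * (A * ‖φ x‖ ^ 2 + ‖deriv φ x‖ ^ 2))
          = ENNReal.ofReal A * ENNReal.ofReal (x ^ μ * ‖φ x‖^2)
            + ENNReal.ofReal (x ^ μ * ‖deriv φ x‖^2) := by
      filter_upwards [ae_restrict_mem measurableSet_Ioi] with x hx
      have hxμ : (0:ℝ) ≤ x ^ μ := Real.rpow_nonneg (le_of_lt hx) μ
      rw [show x^μ*(A*‖φ x‖^2+‖deriv φ x‖^2) = A*(x^μ*‖φ x‖^2) + x^μ*‖deriv φ x‖^2 by ring,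
        ENNReal.ofReal_add (by positivity) (by positivity), ENNReal.ofReal_mul hA0.le]
    rw [lintegral_congr_ae hae,
      lintegral_add_left' (hmeasJ1.const_mul _),
      lintegral_const_mul' _ _ ENNReal.ofReal_ne_top]
  -- final assembly
  rw [hIsplit]
  have hc2 : (0:ℝ) ≤ 2 * A ^ ((1-μ)/2) := mul_nonneg (by norm_num) (Real.rpow_nonneg hA0.le _)
  have hc1 : (0:ℝ) ≤ 4 * cμ := by linarith
  have e1 : ENNReal.ofReal ((4*cμ*A)*R1)
      = ENNReal.ofReal (4*cμ) * (ENNReal.ofReal A * ENNReal.ofReal R1) := by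
    rw [← ENNReal.ofReal_mul hA0.le, ← ENNReal.ofReal_mul hc1]
    congr 1; ring
  have e2 : ENNReal.ofReal ((2*A^((1-μ)/2))*S^2)
      = ENNReal.ofReal (2*A^((1-μ)/2)) * ENNReal.ofReal (S^2) := ENNReal.ofReal_mul hc2
  have e3 : ENNReal.ofReal (2*A^((1-μ)/2)) * D = ENNReal.ofReal (2/(1-μ)) := by
    rw [hDdef, ← ENNReal.ofReal_mul hc2]
    congr 1
    rw [show (2*A^((1-μ)/2)) * (T^(1-μ)/(1-μ)) = 2*(A^((1-μ)/2)*T^(1-μ))/(1-μ) by ring, hID2]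
    ring
  calc ENNReal.ofReal (A^((1-μ)/2)*‖φ 0‖^2)
      ≤ ENNReal.ofReal ((4*cμ*A)*R1 + (2*A^((1-μ)/2))*S^2) := ENNReal.ofReal_le_ofReal hmain
    _ ≤ ENNReal.ofReal ((4*cμ*A)*R1) + ENNReal.ofReal ((2*A^((1-μ)/2))*S^2) :=
        ENNReal.ofReal_add_le
    _ = ENNReal.ofReal (4*cμ) * (ENNReal.ofReal A * ENNReal.ofReal R1)
        + ENNReal.ofReal (2*A^((1-μ)/2)) * ENNReal.ofReal (S^2) := by rw [e1, e2]
    _ ≤ ENNReal.ofReal (4*cμ) * (ENNReal.ofReal A * J1)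
        + ENNReal.ofReal (2*A^((1-μ)/2)) * (D * J2) := by gcongr
    _ = ENNReal.ofReal (4*cμ) * (ENNReal.ofReal A * J1)
        + ENNReal.ofReal (2/(1-μ)) * J2 := by rw [← mul_assoc (ENNReal.ofReal (2*A^((1-μ)/2))) D J2, e3]
    _ ≤ ENNReal.ofReal (4*cμ + 2/(1-μ)) * (ENNReal.ofReal A * J1)
        + ENNReal.ofReal (4*cμ + 2/(1-μ)) * J2 := by
        have d1 : (0:ℝ) ≤ 2/(1-μ) := div_nonneg (by norm_num) (by linarith)
        exact add_le_add
          (mul_le_mul_left (ENNReal.ofReal_le_ofReal (by linarith)) _)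
          (mul_le_mul_left (ENNReal.ofReal_le_ofReal (by linarith)) _)
    _ = ENNReal.ofReal (4*cμ + 2/(1-μ)) * (ENNReal.ofReal A * J1 + J2) := (mul_add _ _ _).symm

/-- Fourier-mode formulation of the boundedness of the trace map
`H¹_μ(𝕋^{d+1}_+) → H^{(1−μ)/2}(𝕋^d)` for `μ < 1`:
`∑_q (1+|q|²)^{(1−μ)/2}|φ_q(0)|² ≤ C ∑_q ∫₀^∞ x^μ((1+|q|²)|φ_q|² + |φ_q'|²) dx`,
with all sums and integrals valued in `[0,∞]`. -/
theorem trace_bound_fourier_modes (d : ℕ) (hd : 1 ≤ d) (μ : ℝ) (hμ : μ < 1) :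
    ∃ C : ℝ, 0 < C ∧ ∀ φ : (Fin d → ℤ) → ℝ → ℂ,
      (∀ q, ContDiff ℝ (⊤ : ℕ∞) (φ q)) → (∀ q, HasCompactSupport (φ q)) →
      ∑' q : Fin d → ℤ,
          ENNReal.ofReal
            ((1 + ∑ i, ((q i : ℝ)) ^ 2) ^ ((1 - μ) / 2) * ‖φ q 0‖ ^ 2)
        ≤ ENNReal.ofReal C *
            ∑' q : Fin d → ℤ,
              ∫⁻ x in Set.Ioi (0 : ℝ),
                ENNReal.ofReal
                  (x ^ μ * ((1 + ∑ i, ((q i : ℝ)) ^ 2) * ‖φ q x‖ ^ 2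
                    + ‖deriv (φ q) x‖ ^ 2)) := by
  refine ⟨4 * max 1 (2 ^ μ) + 2 / (1 - μ), ?_, ?_⟩
  · have h1 : (0:ℝ) < 2/(1-μ) := div_pos (by norm_num) (by linarith)
    have h2 : (1:ℝ) ≤ max 1 ((2:ℝ)^μ) := le_max_left _ _
    linarith
  · intro φ hs _
    calc (∑' q : Fin d → ℤ, ENNReal.ofReal
            ((1 + ∑ i, ((q i : ℝ)) ^ 2) ^ ((1 - μ) / 2) * ‖φ q 0‖ ^ 2))
        ≤ ∑' q : Fin d → ℤ, ENNReal.ofReal (4 * max 1 (2 ^ μ) + 2 / (1 - μ)) *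
            ∫⁻ x in Set.Ioi (0 : ℝ), ENNReal.ofReal
              (x ^ μ * ((1 + ∑ i, ((q i : ℝ)) ^ 2) * ‖φ q x‖ ^ 2
                + ‖deriv (φ q) x‖ ^ 2)) := by
          refine ENNReal.tsum_le_tsum fun q => ?_
          exact trace_mode_aux μ hμ
            (le_add_of_nonneg_right (Finset.sum_nonneg fun i _ => sq_nonneg _))
            (φ q) (hs q)
      _ = _ := ENNReal.tsum_mul_left
end

section
/- Let 0 < ν < 1 and let u_−, u_+, v_−, v_+ : ℝ → ℂ be smooth compactly supported functions. Define u(x) = x^{1/2−ν}u_−(x²) + x^{1/2+ν}u_+(x²) and v(x) = x^{1/2−ν}v_−(x²) + x^{1/2+ν}v_+(x²) for x > 0. Then the integrands below are Lebesgue integrable on (0,∞) and the Green formula holds: ∫₀^∞ ( −u''(x) + (ν² − 1/4)x⁻²u(x) ) · conj(v(x)) dx = ∫₀^∞ ( u'(x) + (ν − 1/2)x⁻¹u(x) ) · conj( v'(x) + (ν − 1/2)x⁻¹v(x) ) dx + 2ν u_+(0) · conj(v_−(0)). -/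
open MeasureTheory Set
open Filter

noncomputable section GreenAux

/-- Building block `x ^ p * f (x ^ 2)`. -/
def Tm (p : ℝ) (f : ℝ → ℂ) (x : ℝ) : ℂ := ((x ^ p : ℝ) : ℂ) * f (x ^ 2)

lemma Tm_add_one {x : ℝ} (hx : 0 < x) (p : ℝ) (f : ℝ → ℂ) :
    Tm (p + 1) f x = (x : ℂ) * Tm p f x := by
  simp only [Tm, Real.rpow_add_one hx.ne' p]
  push_cast; ring

lemma Tm_sub_one {x : ℝ} (hx : 0 < x) (p : ℝ) (f : ℝ → ℂ) :
    Tm (p - 1) f x = Tm p f x / (x : ℂ) := by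
  have hxC : (x : ℂ) ≠ 0 := by exact_mod_cast hx.ne'
  simp only [Tm, Real.rpow_sub_one hx.ne' p]
  push_cast
  field_simp

lemma Tm_hasDerivAt {p : ℝ} {f : ℝ → ℂ} (hf : ContDiff ℝ (⊤ : ℕ∞) f) {x : ℝ} (hx : 0 < x) :
    HasDerivAt (Tm p f) ((p : ℂ) * Tm (p - 1) f x + 2 * Tm (p + 1) (deriv f) x) x := by
  have hxC : (x : ℂ) ≠ 0 := by exact_mod_cast hx.ne'
  have h1 : HasDerivAt (fun y : ℝ => ((y ^ p : ℝ) : ℂ)) ((p * x ^ (p - 1) : ℝ) : ℂ) x :=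
    (Real.hasDerivAt_rpow_const (Or.inl hx.ne')).ofReal_comp
  have h2 : HasDerivAt (fun y : ℝ => f (y ^ 2))
      ((((2 : ℕ) : ℝ) * x ^ (2 - 1)) • deriv f (x ^ 2)) x :=
    ((hf.differentiable (by simp) (x ^ 2)).hasDerivAt).scomp x (hasDerivAt_pow 2 x)
  have h3 : HasDerivAt (Tm p f) _ x := h1.mul h2
  convert h3 using 1
  rw [Tm_sub_one hx, Tm_add_one hx, Real.rpow_sub_one hx.ne' p]
  simp only [Tm, Complex.real_smul]
  push_cast
  field_simp


/-! ### Model functions -/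

def Umod (nu : ℝ) (fm fp : ℝ → ℂ) (x : ℝ) : ℂ :=
  Tm (1/2 - nu) fm x + Tm (1/2 + nu) fp x

def U1mod (nu : ℝ) (fm fp : ℝ → ℂ) (x : ℝ) : ℂ :=
  ((1/2 - nu : ℝ) : ℂ) * Tm (1/2 - nu - 1) fm x + 2 * Tm (1/2 - nu + 1) (deriv fm) x
    + ((1/2 + nu : ℝ) : ℂ) * Tm (1/2 + nu - 1) fp x + 2 * Tm (1/2 + nu + 1) (deriv fp) x

def U2mod (nu : ℝ) (fm fp : ℝ → ℂ) (x : ℝ) : ℂ :=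
  ((1/2 - nu : ℝ) : ℂ) * (((1/2 - nu - 1 : ℝ) : ℂ) * Tm (1/2 - nu - 1 - 1) fm x
      + 2 * Tm (1/2 - nu - 1 + 1) (deriv fm) x)
  + 2 * (((1/2 - nu + 1 : ℝ) : ℂ) * Tm (1/2 - nu + 1 - 1) (deriv fm) x
      + 2 * Tm (1/2 - nu + 1 + 1) (deriv (deriv fm)) x)
  + ((1/2 + nu : ℝ) : ℂ) * (((1/2 + nu - 1 : ℝ) : ℂ) * Tm (1/2 + nu - 1 - 1) fp x
      + 2 * Tm (1/2 + nu - 1 + 1) (deriv fp) x)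
  + 2 * (((1/2 + nu + 1 : ℝ) : ℂ) * Tm (1/2 + nu + 1 - 1) (deriv fp) x
      + 2 * Tm (1/2 + nu + 1 + 1) (deriv (deriv fp)) x)

def Wmod (nu : ℝ) (fm fp : ℝ → ℂ) (x : ℝ) : ℂ :=
  2 * Tm (1/2 - nu + 1) (deriv fm) x + ((2 * nu : ℝ) : ℂ) * Tm (1/2 + nu - 1) fp x
    + 2 * Tm (1/2 + nu + 1) (deriv fp) x

def W1mod (nu : ℝ) (fm fp : ℝ → ℂ) (x : ℝ) : ℂ :=
  2 * (((1/2 - nu + 1 : ℝ) : ℂ) * Tm (1/2 - nu + 1 - 1) (deriv fm) x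
      + 2 * Tm (1/2 - nu + 1 + 1) (deriv (deriv fm)) x)
  + ((2 * nu : ℝ) : ℂ) * (((1/2 + nu - 1 : ℝ) : ℂ) * Tm (1/2 + nu - 1 - 1) fp x
      + 2 * Tm (1/2 + nu - 1 + 1) (deriv fp) x)
  + 2 * (((1/2 + nu + 1 : ℝ) : ℂ) * Tm (1/2 + nu + 1 - 1) (deriv fp) x
      + 2 * Tm (1/2 + nu + 1 + 1) (deriv (deriv fp)) x)

def Smod (nu : ℝ) (fm fp : ℝ → ℂ) (x : ℝ) : ℂ :=
  ((4 * nu - 4 : ℝ) : ℂ) * Tm (1/2 - nu) (deriv fm) x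
    + (-4) * Tm (1/2 - nu + 1 + 1) (deriv (deriv fm)) x
    + ((-(4 * nu) - 4 : ℝ) : ℂ) * Tm (1/2 + nu) (deriv fp) x
    + (-4) * Tm (1/2 + nu + 1 + 1) (deriv (deriv fp)) x

variable {nu : ℝ} {fm fp : ℝ → ℂ}

lemma Umod_hasDerivAt (hfm : ContDiff ℝ (⊤ : ℕ∞) fm) (hfp : ContDiff ℝ (⊤ : ℕ∞) fp) {x : ℝ} (hx : 0 < x) :
    HasDerivAt (Umod nu fm fp) (U1mod nu fm fp x) x := by
  have h : HasDerivAt (Umod nu fm fp) _ x := (Tm_hasDerivAt hfm hx (p := 1/2 - nu)).add (Tm_hasDerivAt hfp hx (p := 1/2 + nu))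
  convert h using 1
  all_goals simp only [U1mod]; push_cast; ring

lemma U1mod_hasDerivAt (hfm : ContDiff ℝ (⊤ : ℕ∞) fm) (hfp : ContDiff ℝ (⊤ : ℕ∞) fp) {x : ℝ} (hx : 0 < x) :
    HasDerivAt (U1mod nu fm fp) (U2mod nu fm fp x) x := by
  have hfm1 : ContDiff ℝ (⊤ : ℕ∞) (deriv fm) := (contDiff_infty_iff_deriv.mp hfm).2
  have hfp1 : ContDiff ℝ (⊤ : ℕ∞) (deriv fp) := (contDiff_infty_iff_deriv.mp hfp).2
  have h : HasDerivAt (U1mod nu fm fp) _ x := ((((Tm_hasDerivAt hfm hx (p := 1/2 - nu - 1)).const_mul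
        (((1/2 - nu : ℝ) : ℂ))).add
      ((Tm_hasDerivAt hfm1 hx (p := 1/2 - nu + 1)).const_mul (2 : ℂ))).add
      ((Tm_hasDerivAt hfp hx (p := 1/2 + nu - 1)).const_mul (((1/2 + nu : ℝ) : ℂ)))).add
      ((Tm_hasDerivAt hfp1 hx (p := 1/2 + nu + 1)).const_mul (2 : ℂ))
  convert h using 1
  all_goals simp only [U2mod]

lemma Wmod_hasDerivAt (hfm : ContDiff ℝ (⊤ : ℕ∞) fm) (hfp : ContDiff ℝ (⊤ : ℕ∞) fp) {x : ℝ} (hx : 0 < x) :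
    HasDerivAt (Wmod nu fm fp) (W1mod nu fm fp x) x := by
  have hfm1 : ContDiff ℝ (⊤ : ℕ∞) (deriv fm) := (contDiff_infty_iff_deriv.mp hfm).2
  have hfp1 : ContDiff ℝ (⊤ : ℕ∞) (deriv fp) := (contDiff_infty_iff_deriv.mp hfp).2
  have h : HasDerivAt (Wmod nu fm fp) _ x := (((Tm_hasDerivAt hfm1 hx (p := 1/2 - nu + 1)).const_mul (2 : ℂ)).add
      ((Tm_hasDerivAt hfp hx (p := 1/2 + nu - 1)).const_mul (((2 * nu : ℝ) : ℂ)))).add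
      ((Tm_hasDerivAt hfp1 hx (p := 1/2 + nu + 1)).const_mul (2 : ℂ))
  convert h using 1
  all_goals simp only [W1mod]

/-! ### Algebraic identities -/

lemma L4 (nu : ℝ) (fm fp : ℝ → ℂ) {x : ℝ} (hx : 0 < x) :
    U1mod nu fm fp x + ((nu - 1/2 : ℝ) : ℂ) * (x : ℂ)⁻¹ * Umod nu fm fp x
      = Wmod nu fm fp x := by
  have hxC : (x : ℂ) ≠ 0 := by exact_mod_cast hx.ne'
  simp only [U1mod, Umod, Wmod, Tm_add_one hx, Tm_sub_one hx]
  push_cast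
  field_simp
  ring

lemma L5 (nu : ℝ) (fm fp : ℝ → ℂ) {x : ℝ} (hx : 0 < x) :
    -(U2mod nu fm fp x) + ((nu ^ 2 - 1/4 : ℝ) : ℂ) * ((x : ℂ) ^ 2)⁻¹ * Umod nu fm fp x
      = Smod nu fm fp x := by
  have hxC : (x : ℂ) ≠ 0 := by exact_mod_cast hx.ne'
  simp only [U2mod, Umod, Smod, Tm_add_one hx, Tm_sub_one hx]
  push_cast
  field_simp
  ring

lemma L6 (nu : ℝ) (fm fp : ℝ → ℂ) {x : ℝ} (hx : 0 < x) :
    -(W1mod nu fm fp x) + ((nu - 1/2 : ℝ) : ℂ) * (x : ℂ)⁻¹ * Wmod nu fm fp x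
      = Smod nu fm fp x := by
  have hxC : (x : ℂ) ≠ 0 := by exact_mod_cast hx.ne'
  simp only [W1mod, Wmod, Smod, Tm_add_one hx, Tm_sub_one hx]
  push_cast
  field_simp
  ring


/-! ### Integrability -/

lemma greenContOn {r : ℝ} {h : ℝ → ℂ} (hc : Continuous h) :
    ContinuousOn (Tm r h) (Ioi 0) := by
  intro y hy
  have h1 : ContinuousAt (fun t : ℝ => ((t ^ r : ℝ) : ℂ)) y :=
    Complex.continuous_ofReal.continuousAt.comp
      (Real.continuousAt_rpow_const y r (Or.inl (ne_of_gt hy)))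
  exact (h1.mul ((hc.continuousAt).comp ((continuous_pow 2).continuousAt))).continuousWithinAt

lemma green_vanish {h : ℝ → ℂ} (hs : HasCompactSupport h) :
    ∃ R : ℝ, 1 ≤ R ∧ ∀ y : ℝ, R ≤ y → h y = 0 := by
  obtain ⟨rr, hrr⟩ := (Metric.isBounded_iff_subset_closedBall 0).1 hs.isBounded
  refine ⟨max 1 (rr + 1), le_max_left _ _, fun y hy => ?_⟩
  apply image_eq_zero_of_notMem_tsupport
  intro hmem
  have h1 := hrr hmem
  simp only [Metric.mem_closedBall, Real.dist_eq, sub_zero] at h1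
  have h2 : rr + 1 ≤ y := le_trans (le_max_right _ _) hy
  have h3 := le_abs_self y
  linarith

lemma integrableOn_Tm {r : ℝ} (hr : -1 < r) {h : ℝ → ℂ} (hc : Continuous h)
    (hs : HasCompactSupport h) : IntegrableOn (Tm r h) (Ioi 0) := by
  obtain ⟨C, hC⟩ := hs.exists_bound_of_continuous hc
  obtain ⟨R, hR1, hR0⟩ := green_vanish hs
  have hIoc : IntegrableOn (Tm r h) (Ioc 0 1) := by
    have hmaj : IntegrableOn (fun x : ℝ => C * x ^ r) (Ioc 0 1) :=
      ((intervalIntegral.intervalIntegrable_rpow' hr (a := 0) (b := 1)).1).const_mul C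
    apply Integrable.mono' hmaj
    · exact ((greenContOn hc).mono Ioc_subset_Ioi_self).aestronglyMeasurable measurableSet_Ioc
    · filter_upwards [ae_restrict_mem measurableSet_Ioc] with y hy
      have hy0 : 0 < y := hy.1
      have hnorm : ‖Tm r h y‖ = y ^ r * ‖h (y ^ 2)‖ := by
        simp [Tm, norm_mul, Real.norm_eq_abs, abs_of_nonneg (Real.rpow_nonneg hy0.le r)]
      rw [hnorm]
      calc y ^ r * ‖h (y ^ 2)‖ ≤ y ^ r * C :=
            mul_le_mul_of_nonneg_left (hC _) (Real.rpow_nonneg hy0.le r)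
        _ = C * y ^ r := mul_comm _ _
  have hzero : ∀ x : ℝ, R ≤ x → Tm r h x = 0 := by
    intro x hxR
    have hx1 : (1 : ℝ) ≤ x := le_trans hR1 hxR
    have hx2 : R ≤ x ^ 2 := le_trans hxR (by nlinarith)
    simp [Tm, hR0 _ hx2]
  have h1 : IntegrableOn (Tm r h) (Ioc 1 R) := by
    have hsub : Icc (1:ℝ) R ⊆ Ioi 0 := fun y hy => lt_of_lt_of_le one_pos hy.1
    have hIcc : IntegrableOn (Tm r h) (Icc 1 R) volume :=
      ((greenContOn hc).mono hsub).integrableOn_Icc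
    exact hIcc.mono_set Ioc_subset_Icc_self
  have h2 : IntegrableOn (Tm r h) (Ioi R) :=
    (integrableOn_zero).congr_fun (fun x hx => (hzero x (le_of_lt hx)).symm) measurableSet_Ioi
  have h3 := (h1.union h2).mono_set (?_ : Ioi (1:ℝ) ⊆ Ioc 1 R ∪ Ioi R)
  · have h4 := hIoc.union h3
    rwa [Ioc_union_Ioi_eq_Ioi zero_le_one] at h4
  · intro x hx
    rcases le_or_gt x R with hc1 | hc2
    · exact Or.inl ⟨hx, hc1⟩
    · exact Or.inr hc2

lemma integrableOn_Tm_mul {p q : ℝ} (hpq : -1 < p + q) {f g : ℝ → ℂ}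
    (hfc : Continuous f) (hgc : Continuous g) (hgs : HasCompactSupport g) :
    IntegrableOn (fun x => Tm p f x * Tm q g x) (Ioi 0) := by
  have base : IntegrableOn (Tm (p + q) (fun t => f t * g t)) (Ioi 0) :=
    integrableOn_Tm hpq (hfc.mul hgc) (hgs.mul_left)
  apply base.congr_fun _ measurableSet_Ioi
  intro x hx
  simp only [Tm, Real.rpow_add hx]
  push_cast
  ring

/-! ### Limits -/

lemma green_tendsto_zero {p : ℝ} (hp : 0 < p) {h : ℝ → ℂ} (hc : Continuous h) :
    Tendsto (fun x : ℝ => ((x ^ p : ℝ) : ℂ) * h x) (nhdsWithin 0 (Ioi 0)) (nhds 0) := by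
  have h1 : Tendsto (fun x : ℝ => x ^ p) (nhds 0) (nhds 0) := by
    have := (Real.continuousAt_rpow_const 0 p (Or.inr hp.le)).tendsto
    rwa [Real.zero_rpow hp.ne'] at this
  have h2 : Tendsto (fun x : ℝ => ((x ^ p : ℝ) : ℂ)) (nhds 0) (nhds 0) := by
    have := (Complex.continuous_ofReal.tendsto 0).comp h1
    exact this
  have h3 := h2.mul (hc.tendsto 0)
  rw [zero_mul] at h3
  exact h3.mono_left nhdsWithin_le_nhds

end GreenAux


/-- One-dimensional Green formula `⟨|D_ν|²u, v⟩ = ⟨D_ν u, D_ν v⟩ + γ₊u · conj(γ₋v)` for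
model functions `u(x) = x^{1/2−ν}u₋(x²) + x^{1/2+ν}u₊(x²)`,
`v(x) = x^{1/2−ν}v₋(x²) + x^{1/2+ν}v₊(x²)`, `0 < ν < 1`, including the integrability
of both integrands on `(0,∞)`. -/
theorem green_formula_one (ν : ℝ) (hν0 : 0 < ν) (hν1 : ν < 1)
    (um up vm vp : ℝ → ℂ)
    (hum : ContDiff ℝ (⊤ : ℕ∞) um) (hup : ContDiff ℝ (⊤ : ℕ∞) up)
    (hvm : ContDiff ℝ (⊤ : ℕ∞) vm) (hvp : ContDiff ℝ (⊤ : ℕ∞) vp)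
    (hum' : HasCompactSupport um) (hup' : HasCompactSupport up)
    (hvm' : HasCompactSupport vm) (hvp' : HasCompactSupport vp)
    (u v : ℝ → ℂ)
    (hu : ∀ x ∈ Set.Ioi (0 : ℝ),
      u x = ((x ^ (1/2 - ν) : ℝ) : ℂ) * um (x ^ 2)
              + ((x ^ (1/2 + ν) : ℝ) : ℂ) * up (x ^ 2))
    (hv : ∀ x ∈ Set.Ioi (0 : ℝ),
      v x = ((x ^ (1/2 - ν) : ℝ) : ℂ) * vm (x ^ 2)
              + ((x ^ (1/2 + ν) : ℝ) : ℂ) * vp (x ^ 2)) :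
    MeasureTheory.IntegrableOn
        (fun x : ℝ =>
          (-(deriv (deriv u) x) + ((ν ^ 2 - 1/4 : ℝ) : ℂ) * ((x : ℂ) ^ 2)⁻¹ * u x)
            * (starRingEnd ℂ) (v x)) (Set.Ioi 0) ∧
    MeasureTheory.IntegrableOn
        (fun x : ℝ =>
          (deriv u x + ((ν - 1/2 : ℝ) : ℂ) * (x : ℂ)⁻¹ * u x)
            * (starRingEnd ℂ)
                (deriv v x + ((ν - 1/2 : ℝ) : ℂ) * (x : ℂ)⁻¹ * v x)) (Set.Ioi 0) ∧
    ∫ x in Set.Ioi (0 : ℝ),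
        (-(deriv (deriv u) x) + ((ν ^ 2 - 1/4 : ℝ) : ℂ) * ((x : ℂ) ^ 2)⁻¹ * u x)
          * (starRingEnd ℂ) (v x)
      = (∫ x in Set.Ioi (0 : ℝ),
          (deriv u x + ((ν - 1/2 : ℝ) : ℂ) * (x : ℂ)⁻¹ * u x)
            * (starRingEnd ℂ)
                (deriv v x + ((ν - 1/2 : ℝ) : ℂ) * (x : ℂ)⁻¹ * v x))
        + ((2 * ν : ℝ) : ℂ) * up 0 * (starRingEnd ℂ) (vm 0) := by
  -- downgrade smoothness to `C^∞`
  have hum0 : ContDiff ℝ (⊤ : ℕ∞) um := hum.of_le (by simp)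
  have hup0 : ContDiff ℝ (⊤ : ℕ∞) up := hup.of_le (by simp)
  have hvm0 : ContDiff ℝ (⊤ : ℕ∞) vm := hvm.of_le (by simp)
  have hvp0 : ContDiff ℝ (⊤ : ℕ∞) vp := hvp.of_le (by simp)
  have hum1 : ContDiff ℝ (⊤ : ℕ∞) (deriv um) := (contDiff_infty_iff_deriv.mp hum0).2
  have hup1 : ContDiff ℝ (⊤ : ℕ∞) (deriv up) := (contDiff_infty_iff_deriv.mp hup0).2
  have hvm1 : ContDiff ℝ (⊤ : ℕ∞) (deriv vm) := (contDiff_infty_iff_deriv.mp hvm0).2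
  have hvp1 : ContDiff ℝ (⊤ : ℕ∞) (deriv vp) := (contDiff_infty_iff_deriv.mp hvp0).2
  have cum1 : Continuous (deriv um) := hum1.continuous
  have cup1 : Continuous (deriv up) := hup1.continuous
  have cum2 : Continuous (deriv (deriv um)) := (contDiff_infty_iff_deriv.mp hum1).2.continuous
  have cup2 : Continuous (deriv (deriv up)) := (contDiff_infty_iff_deriv.mp hup1).2.continuous
  -- conjugated companions
  have svmc : Continuous (fun t => (starRingEnd ℂ) (vm t)) :=
    Complex.continuous_conj.comp hvm0.continuous
  have svpc : Continuous (fun t => (starRingEnd ℂ) (vp t)) :=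
    Complex.continuous_conj.comp hvp0.continuous
  have svm1c : Continuous (fun t => (starRingEnd ℂ) (deriv vm t)) :=
    Complex.continuous_conj.comp hvm1.continuous
  have svp1c : Continuous (fun t => (starRingEnd ℂ) (deriv vp t)) :=
    Complex.continuous_conj.comp hvp1.continuous
  have svms : HasCompactSupport (fun t => (starRingEnd ℂ) (vm t)) :=
    hvm'.comp_left (by simp)
  have svps : HasCompactSupport (fun t => (starRingEnd ℂ) (vp t)) :=
    hvp'.comp_left (by simp)
  have svm1s : HasCompactSupport (fun t => (starRingEnd ℂ) (deriv vm t)) :=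
    hvm'.deriv.comp_left (by simp)
  have svp1s : HasCompactSupport (fun t => (starRingEnd ℂ) (deriv vp t)) :=
    hvp'.deriv.comp_left (by simp)
  -- derivatives of `u` and `v` on `(0,∞)`
  have huder : ∀ x ∈ Ioi (0:ℝ), HasDerivAt u (U1mod ν um up x) x := by
    intro x hx
    refine (Umod_hasDerivAt hum0 hup0 hx).congr_of_eventuallyEq ?_
    filter_upwards [Ioi_mem_nhds hx] with y hy
    rw [hu y hy]; simp [Umod, Tm]
  have hvder : ∀ x ∈ Ioi (0:ℝ), HasDerivAt v (U1mod ν vm vp x) x := by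
    intro x hx
    refine (Umod_hasDerivAt hvm0 hvp0 hx).congr_of_eventuallyEq ?_
    filter_upwards [Ioi_mem_nhds hx] with y hy
    rw [hv y hy]; simp [Umod, Tm]
  have hud1 : ∀ x ∈ Ioi (0:ℝ), deriv u x = U1mod ν um up x := fun x hx => (huder x hx).deriv
  have hvd1 : ∀ x ∈ Ioi (0:ℝ), deriv v x = U1mod ν vm vp x := fun x hx => (hvder x hx).deriv
  have hud2 : ∀ x ∈ Ioi (0:ℝ), deriv (deriv u) x = U2mod ν um up x := by
    intro x hx
    have hev : deriv u =ᶠ[nhds x] U1mod ν um up := by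
      filter_upwards [Ioi_mem_nhds hx] with y hy; exact hud1 y hy
    exact ((U1mod_hasDerivAt hum0 hup0 hx).congr_of_eventuallyEq hev).deriv
  have hux : ∀ x ∈ Ioi (0:ℝ), u x = Umod ν um up x := by
    intro x hx; rw [hu x hx]; simp [Umod, Tm]
  have hvx : ∀ x ∈ Ioi (0:ℝ), v x = Umod ν vm vp x := by
    intro x hx; rw [hv x hx]; simp [Umod, Tm]
  -- pointwise identifications of the two integrands on `(0,∞)`
  have heq1 : ∀ x ∈ Ioi (0:ℝ),
      (-(deriv (deriv u) x) + ((ν ^ 2 - 1/4 : ℝ) : ℂ) * ((x : ℂ) ^ 2)⁻¹ * u x)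
          * (starRingEnd ℂ) (v x)
        = Smod ν um up x * (starRingEnd ℂ) (Umod ν vm vp x) := by
    intro x hx
    rw [hud2 x hx, hux x hx, hvx x hx, L5 ν um up hx]
  have heq2 : ∀ x ∈ Ioi (0:ℝ),
      (deriv u x + ((ν - 1/2 : ℝ) : ℂ) * (x : ℂ)⁻¹ * u x)
          * (starRingEnd ℂ) (deriv v x + ((ν - 1/2 : ℝ) : ℂ) * (x : ℂ)⁻¹ * v x)
        = Wmod ν um up x * (starRingEnd ℂ) (Wmod ν vm vp x) := by
    intro x hx
    rw [hud1 x hx, hux x hx, hvd1 x hx, hvx x hx, L4 ν um up hx, L4 ν vm vp hx]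
  -- integrability of the model integrands
  have key1 : IntegrableOn
      (fun x => Smod ν um up x * (starRingEnd ℂ) (Umod ν vm vp x)) (Ioi 0) := by
    have hexp : (fun x => Smod ν um up x * (starRingEnd ℂ) (Umod ν vm vp x))
        = fun x =>
          ((4 * ν - 4 : ℝ) : ℂ) *
              (Tm (1/2 - ν) (deriv um) x * Tm (1/2 - ν) (fun t => (starRingEnd ℂ) (vm t)) x)
          + ((4 * ν - 4 : ℝ) : ℂ) *
              (Tm (1/2 - ν) (deriv um) x * Tm (1/2 + ν) (fun t => (starRingEnd ℂ) (vp t)) x)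
          + (-4) * (Tm (1/2 - ν + 1 + 1) (deriv (deriv um)) x
              * Tm (1/2 - ν) (fun t => (starRingEnd ℂ) (vm t)) x)
          + (-4) * (Tm (1/2 - ν + 1 + 1) (deriv (deriv um)) x
              * Tm (1/2 + ν) (fun t => (starRingEnd ℂ) (vp t)) x)
          + ((-(4 * ν) - 4 : ℝ) : ℂ) *
              (Tm (1/2 + ν) (deriv up) x * Tm (1/2 - ν) (fun t => (starRingEnd ℂ) (vm t)) x)
          + ((-(4 * ν) - 4 : ℝ) : ℂ) *
              (Tm (1/2 + ν) (deriv up) x * Tm (1/2 + ν) (fun t => (starRingEnd ℂ) (vp t)) x)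
          + (-4) * (Tm (1/2 + ν + 1 + 1) (deriv (deriv up)) x
              * Tm (1/2 - ν) (fun t => (starRingEnd ℂ) (vm t)) x)
          + (-4) * (Tm (1/2 + ν + 1 + 1) (deriv (deriv up)) x
              * Tm (1/2 + ν) (fun t => (starRingEnd ℂ) (vp t)) x) := by
      funext x
      simp only [Smod, Umod, Tm, map_add, map_mul, map_ofNat, Complex.conj_ofReal]
      ring
    rw [hexp]
    exact (((((((((integrableOn_Tm_mul (by linarith) cum1 svmc svms).const_mul _).add
      ((integrableOn_Tm_mul (by linarith) cum1 svpc svps).const_mul _)).add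
      ((integrableOn_Tm_mul (by linarith) cum2 svmc svms).const_mul _)).add
      ((integrableOn_Tm_mul (by linarith) cum2 svpc svps).const_mul _)).add
      ((integrableOn_Tm_mul (by linarith) cup1 svmc svms).const_mul _)).add
      ((integrableOn_Tm_mul (by linarith) cup1 svpc svps).const_mul _)).add
      ((integrableOn_Tm_mul (by linarith) cup2 svmc svms).const_mul _)).add
      ((integrableOn_Tm_mul (by linarith) cup2 svpc svps).const_mul _))
  have key2 : IntegrableOn
      (fun x => Wmod ν um up x * (starRingEnd ℂ) (Wmod ν vm vp x)) (Ioi 0) := by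
    have hexp : (fun x => Wmod ν um up x * (starRingEnd ℂ) (Wmod ν vm vp x))
        = fun x =>
          (4 : ℂ) * (Tm (1/2 - ν + 1) (deriv um) x
              * Tm (1/2 - ν + 1) (fun t => (starRingEnd ℂ) (deriv vm t)) x)
          + (2 * ((2 * ν : ℝ) : ℂ)) * (Tm (1/2 - ν + 1) (deriv um) x
              * Tm (1/2 + ν - 1) (fun t => (starRingEnd ℂ) (vp t)) x)
          + (4 : ℂ) * (Tm (1/2 - ν + 1) (deriv um) x
              * Tm (1/2 + ν + 1) (fun t => (starRingEnd ℂ) (deriv vp t)) x)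
          + (2 * ((2 * ν : ℝ) : ℂ)) * (Tm (1/2 + ν - 1) up x
              * Tm (1/2 - ν + 1) (fun t => (starRingEnd ℂ) (deriv vm t)) x)
          + (((2 * ν : ℝ) : ℂ) * ((2 * ν : ℝ) : ℂ)) * (Tm (1/2 + ν - 1) up x
              * Tm (1/2 + ν - 1) (fun t => (starRingEnd ℂ) (vp t)) x)
          + (2 * ((2 * ν : ℝ) : ℂ)) * (Tm (1/2 + ν - 1) up x
              * Tm (1/2 + ν + 1) (fun t => (starRingEnd ℂ) (deriv vp t)) x)
          + (4 : ℂ) * (Tm (1/2 + ν + 1) (deriv up) x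
              * Tm (1/2 - ν + 1) (fun t => (starRingEnd ℂ) (deriv vm t)) x)
          + (2 * ((2 * ν : ℝ) : ℂ)) * (Tm (1/2 + ν + 1) (deriv up) x
              * Tm (1/2 + ν - 1) (fun t => (starRingEnd ℂ) (vp t)) x)
          + (4 : ℂ) * (Tm (1/2 + ν + 1) (deriv up) x
              * Tm (1/2 + ν + 1) (fun t => (starRingEnd ℂ) (deriv vp t)) x) := by
      funext x
      simp only [Wmod, Tm, map_add, map_mul, map_ofNat, Complex.conj_ofReal]
      ring
    rw [hexp]
    exact ((((((((((integrableOn_Tm_mul (by linarith) cum1 svm1c svm1s).const_mul _).add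
      ((integrableOn_Tm_mul (by linarith) cum1 svpc svps).const_mul _)).add
      ((integrableOn_Tm_mul (by linarith) cum1 svp1c svp1s).const_mul _)).add
      ((integrableOn_Tm_mul (by linarith) hup0.continuous svm1c svm1s).const_mul _)).add
      ((integrableOn_Tm_mul (by linarith) hup0.continuous svpc svps).const_mul _)).add
      ((integrableOn_Tm_mul (by linarith) hup0.continuous svp1c svp1s).const_mul _)).add
      ((integrableOn_Tm_mul (by linarith) cup1 svm1c svm1s).const_mul _)).add
      ((integrableOn_Tm_mul (by linarith) cup1 svpc svps).const_mul _)).add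
      ((integrableOn_Tm_mul (by linarith) cup1 svp1c svp1s).const_mul _))
  have hint1 : IntegrableOn
      (fun x : ℝ =>
        (-(deriv (deriv u) x) + ((ν ^ 2 - 1/4 : ℝ) : ℂ) * ((x : ℂ) ^ 2)⁻¹ * u x)
          * (starRingEnd ℂ) (v x)) (Ioi 0) :=
    key1.congr_fun (fun x hx => (heq1 x hx).symm) measurableSet_Ioi
  have hint2 : IntegrableOn
      (fun x : ℝ =>
        (deriv u x + ((ν - 1/2 : ℝ) : ℂ) * (x : ℂ)⁻¹ * u x)
          * (starRingEnd ℂ)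
              (deriv v x + ((ν - 1/2 : ℝ) : ℂ) * (x : ℂ)⁻¹ * v x)) (Ioi 0) :=
    key2.congr_fun (fun x hx => (heq2 x hx).symm) measurableSet_Ioi
  -- the boundary function and its derivative
  have hGd : ∀ x ∈ Ioi (0:ℝ), HasDerivAt
      (fun y => Wmod ν um up y * (starRingEnd ℂ) (Umod ν vm vp y))
      (W1mod ν um up x * (starRingEnd ℂ) (Umod ν vm vp x)
        + Wmod ν um up x * (starRingEnd ℂ) (U1mod ν vm vp x)) x := by
    intro x hx
    have h2 : HasDerivAt (fun y => (starRingEnd ℂ) (Umod ν vm vp y))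
        ((starRingEnd ℂ) (U1mod ν vm vp x)) x := by
      simpa only [starRingEnd_apply] using (Umod_hasDerivAt hvm0 hvp0 hx).star
    exact (Wmod_hasDerivAt hum0 hup0 hx).mul h2
  have hI6 : ∀ x ∈ Ioi (0:ℝ),
      W1mod ν um up x * (starRingEnd ℂ) (Umod ν vm vp x)
        + Wmod ν um up x * (starRingEnd ℂ) (U1mod ν vm vp x)
      = Wmod ν um up x * (starRingEnd ℂ) (Wmod ν vm vp x)
        - Smod ν um up x * (starRingEnd ℂ) (Umod ν vm vp x) := by
    intro x hx
    rw [← L6 ν um up hx, ← L4 ν vm vp hx]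
    simp only [map_add, map_mul, map_neg, map_inv₀, Complex.conj_ofReal]
    ring
  have hk21 : IntegrableOn (fun x =>
      Wmod ν um up x * (starRingEnd ℂ) (Wmod ν vm vp x)
        - Smod ν um up x * (starRingEnd ℂ) (Umod ν vm vp x)) (Ioi 0) := key2.sub key1
  have hGint : IntegrableOn (fun x =>
      W1mod ν um up x * (starRingEnd ℂ) (Umod ν vm vp x)
        + Wmod ν um up x * (starRingEnd ℂ) (U1mod ν vm vp x)) (Ioi 0) :=
    hk21.congr_fun (fun x hx => (hI6 x hx).symm) measurableSet_Ioi
  -- limit of the boundary function at infinity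
  obtain ⟨Rm, hRm1, hRm0⟩ := green_vanish hvm'
  obtain ⟨Rp, hRp1, hRp0⟩ := green_vanish hvp'
  have hGtop : Tendsto (fun y => Wmod ν um up y * (starRingEnd ℂ) (Umod ν vm vp y))
      atTop (nhds (0:ℂ)) := by
    apply Tendsto.congr' _ tendsto_const_nhds
    filter_upwards [eventually_ge_atTop (max Rm Rp)] with x hxR
    have hx1 : (1:ℝ) ≤ x := le_trans (le_trans hRm1 (le_max_left _ _)) hxR
    have hm : Rm ≤ x ^ 2 := by nlinarith [le_trans (le_max_left Rm Rp) hxR]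
    have hp : Rp ≤ x ^ 2 := by nlinarith [le_trans (le_max_right Rm Rp) hxR]
    have hU : Umod ν vm vp x = 0 := by simp [Umod, Tm, hRm0 _ hm, hRp0 _ hp]
    show (0:ℂ) = _
    rw [hU]
    simp
  -- limit of the boundary function at zero from the right
  have hG0 : Tendsto (fun y => Wmod ν um up y * (starRingEnd ℂ) (Umod ν vm vp y))
      (nhdsWithin 0 (Ioi 0)) (nhds (((2 * ν : ℝ) : ℂ) * up 0 * (starRingEnd ℂ) (vm 0))) := by
    have hEq : ∀ x ∈ Ioi (0:ℝ),
        Wmod ν um up x * (starRingEnd ℂ) (Umod ν vm vp x)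
        = ((2 * ν : ℝ) : ℂ) * up (x^2) * (starRingEnd ℂ) (vm (x^2))
          + ((x ^ (2 - 2*ν) : ℝ) : ℂ) * (2 * deriv um (x^2) * (starRingEnd ℂ) (vm (x^2)))
          + ((x ^ (2:ℝ) : ℝ) : ℂ) * (2 * deriv um (x^2) * (starRingEnd ℂ) (vp (x^2)))
          + ((x ^ (2*ν) : ℝ) : ℂ) *
              (((2 * ν : ℝ) : ℂ) * up (x^2) * (starRingEnd ℂ) (vp (x^2)))
          + ((x ^ (2:ℝ) : ℝ) : ℂ) * (2 * deriv up (x^2) * (starRingEnd ℂ) (vm (x^2)))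
          + ((x ^ (2 + 2*ν) : ℝ) : ℂ) * (2 * deriv up (x^2) * (starRingEnd ℂ) (vp (x^2))) := by
      intro x hx
      have hxC : (x:ℂ) ≠ 0 := by exact_mod_cast (ne_of_gt hx)
      have e1 : (x:ℝ) ^ (2 - 2*ν) = x ^ (1/2 - ν) * x ^ (1/2 - ν) * x := by
        rw [show (2 - 2*ν : ℝ) = (1/2 - ν) + ((1/2 - ν) + 1) by ring,
          Real.rpow_add hx (1/2 - ν) ((1/2 - ν) + 1), Real.rpow_add hx (1/2 - ν) 1,
          Real.rpow_one]
        ring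
      have e5 : ((x ^ (1/2 - ν) : ℝ) : ℂ) * ((x ^ (1/2 + ν) : ℝ) : ℂ) = (x : ℂ) := by
        rw [← Complex.ofReal_mul, ← Real.rpow_add hx,
          show ((1/2 - ν) + (1/2 + ν) : ℝ) = 1 by ring, Real.rpow_one]
      have e2 : (x:ℝ) ^ (2:ℝ) = x ^ (1/2 - ν) * x ^ (1/2 + ν) * x := by
        rw [← Real.rpow_add hx, show ((1/2 - ν) + (1/2 + ν) : ℝ) = 1 by ring, Real.rpow_one,
          show (2:ℝ) = ((2:ℕ):ℝ) by norm_num, Real.rpow_natCast]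
        ring
      have e3 : (x:ℝ) ^ (2*ν) = x ^ (1/2 + ν) * (x ^ (1/2 + ν) / x) := by
        rw [show (2*ν : ℝ) = (1/2 + ν) + ((1/2 + ν) - 1) by ring,
          Real.rpow_add hx (1/2 + ν) ((1/2 + ν) - 1), Real.rpow_sub hx (1/2 + ν) 1,
          Real.rpow_one]
      have e4 : (x:ℝ) ^ (2 + 2*ν) = x ^ (1/2 + ν) * x ^ (1/2 + ν) * x := by
        rw [show (2 + 2*ν : ℝ) = (1/2 + ν) + ((1/2 + ν) + 1) by ring,
          Real.rpow_add hx (1/2 + ν) ((1/2 + ν) + 1), Real.rpow_add hx (1/2 + ν) 1,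
          Real.rpow_one]
        ring
      simp only [Wmod, Umod, Tm, map_add, map_mul, map_ofNat, Complex.conj_ofReal,
        Real.rpow_add_one hx.ne', Real.rpow_sub_one hx.ne', e1, e2, e3, e4]
      push_cast
      field_simp
      ring_nf at e5 ⊢
      linear_combination ((ν:ℂ) * up (x^2) * (starRingEnd ℂ) (vm (x^2))) * e5
    have t0 : Tendsto (fun x : ℝ => ((2 * ν : ℝ) : ℂ) * up (x^2) * (starRingEnd ℂ) (vm (x^2)))
        (nhdsWithin 0 (Ioi 0)) (nhds (((2 * ν : ℝ) : ℂ) * up 0 * (starRingEnd ℂ) (vm 0))) := by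
      have hc : Continuous fun x : ℝ => ((2 * ν : ℝ) : ℂ) * up (x^2) * (starRingEnd ℂ) (vm (x^2)) :=
        (continuous_const.mul (hup0.continuous.comp (continuous_pow 2))).mul
          (svmc.comp (continuous_pow 2))
      have h' := (hc.tendsto 0).mono_left (nhdsWithin_le_nhds (s := Ioi (0:ℝ)))
      simpa using h'
    have t1 := green_tendsto_zero (p := 2 - 2*ν) (by linarith)
      (h := fun x : ℝ => 2 * deriv um (x^2) * (starRingEnd ℂ) (vm (x^2)))
      (by exact (continuous_const.mul (cum1.comp (continuous_pow 2))).mul (svmc.comp (continuous_pow 2)))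
    have t2 := green_tendsto_zero (p := (2:ℝ)) (by norm_num)
      (h := fun x : ℝ => 2 * deriv um (x^2) * (starRingEnd ℂ) (vp (x^2)))
      (by exact (continuous_const.mul (cum1.comp (continuous_pow 2))).mul (svpc.comp (continuous_pow 2)))
    have t3 := green_tendsto_zero (p := 2*ν) (by linarith)
      (h := fun x : ℝ => ((2 * ν : ℝ) : ℂ) * up (x^2) * (starRingEnd ℂ) (vp (x^2)))
      (by exact (continuous_const.mul (hup0.continuous.comp (continuous_pow 2))).mul (svpc.comp (continuous_pow 2)))
    have t4 := green_tendsto_zero (p := (2:ℝ)) (by norm_num)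
      (h := fun x : ℝ => 2 * deriv up (x^2) * (starRingEnd ℂ) (vm (x^2)))
      (by exact (continuous_const.mul (cup1.comp (continuous_pow 2))).mul (svmc.comp (continuous_pow 2)))
    have t5 := green_tendsto_zero (p := 2 + 2*ν) (by linarith)
      (h := fun x : ℝ => 2 * deriv up (x^2) * (starRingEnd ℂ) (vp (x^2)))
      (by exact (continuous_const.mul (cup1.comp (continuous_pow 2))).mul (svpc.comp (continuous_pow 2)))
    have hLF := ((((t0.add t1).add t2).add t3).add t4).add t5
    rw [show (((2 * ν : ℝ) : ℂ) * up 0 * (starRingEnd ℂ) (vm 0) + 0 + 0 + 0 + 0 + 0 : ℂ)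
      = ((2 * ν : ℝ) : ℂ) * up 0 * (starRingEnd ℂ) (vm 0) by ring] at hLF
    apply Tendsto.congr' _ hLF
    filter_upwards [self_mem_nhdsWithin] with x hx
    exact (hEq x hx).symm
  -- fundamental theorem of calculus on `(ε, ∞)` and a limiting argument
  have hIntIoi : ∀ ε : ℝ, 0 < ε →
      (∫ x in Ioi ε, (W1mod ν um up x * (starRingEnd ℂ) (Umod ν vm vp x)
        + Wmod ν um up x * (starRingEnd ℂ) (U1mod ν vm vp x)))
      = 0 - Wmod ν um up ε * (starRingEnd ℂ) (Umod ν vm vp ε) := by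
    intro ε hε
    exact integral_Ioi_of_hasDerivAt_of_tendsto
      ((hGd ε hε).continuousAt.continuousWithinAt)
      (fun x hx => hGd x (lt_trans hε hx))
      (hGint.mono_set (Ioi_subset_Ioi hε.le)) hGtop
  have hseq : Tendsto (fun n : ℕ => ((n:ℝ)+1)⁻¹) atTop (nhdsWithin 0 (Ioi 0)) := by
    rw [tendsto_nhdsWithin_iff]
    constructor
    · have := tendsto_one_div_add_atTop_nhds_zero_nat (𝕜 := ℝ)
      simpa [one_div] using this
    · exact Eventually.of_forall fun n => by
        simp only [mem_Ioi]; positivity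
  have hmono : Monotone fun n : ℕ => Ioi (((n:ℝ)+1)⁻¹) := by
    intro m n hmn
    apply Ioi_subset_Ioi
    have hc : ((m:ℝ)) ≤ n := Nat.cast_le.mpr hmn
    exact inv_anti₀ (by positivity) (by linarith)
  have hunion : (⋃ n : ℕ, Ioi (((n:ℝ)+1)⁻¹)) = Ioi (0:ℝ) := by
    ext x
    simp only [mem_iUnion, mem_Ioi]
    constructor
    · rintro ⟨n, hn⟩; exact lt_trans (by positivity) hn
    · intro hx
      obtain ⟨n, hn⟩ := exists_nat_gt x⁻¹
      refine ⟨n, ?_⟩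
      have h1 : x⁻¹ < (n:ℝ) + 1 := by linarith
      calc ((n:ℝ)+1)⁻¹ < (x⁻¹)⁻¹ := inv_strictAnti₀ (inv_pos.mpr hx) h1
        _ = x := inv_inv x
  have htend1 : Tendsto (fun n : ℕ => ∫ x in Ioi (((n:ℝ)+1)⁻¹),
      (W1mod ν um up x * (starRingEnd ℂ) (Umod ν vm vp x)
        + Wmod ν um up x * (starRingEnd ℂ) (U1mod ν vm vp x))) atTop
      (nhds (∫ x in Ioi (0:ℝ),
        (W1mod ν um up x * (starRingEnd ℂ) (Umod ν vm vp x)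
          + Wmod ν um up x * (starRingEnd ℂ) (U1mod ν vm vp x)))) := by
    have h := tendsto_setIntegral_of_monotone (fun n : ℕ => measurableSet_Ioi) hmono
      (by rw [hunion]; exact hGint)
    rwa [hunion] at h
  have htend2 : Tendsto (fun n : ℕ => ∫ x in Ioi (((n:ℝ)+1)⁻¹),
      (W1mod ν um up x * (starRingEnd ℂ) (Umod ν vm vp x)
        + Wmod ν um up x * (starRingEnd ℂ) (U1mod ν vm vp x))) atTop
      (nhds (0 - ((2 * ν : ℝ) : ℂ) * up 0 * (starRingEnd ℂ) (vm 0))) := by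
    have hcomp := hG0.comp hseq
    have h := (tendsto_const_nhds (x := (0:ℂ)) (f := atTop (α := ℕ))).sub hcomp
    rw [show ((0:ℂ) - ((2 * ν : ℝ) : ℂ) * up 0 * (starRingEnd ℂ) (vm 0))
      = 0 - (((2 * ν : ℝ) : ℂ) * up 0 * (starRingEnd ℂ) (vm 0)) by ring]
    refine Tendsto.congr ?_ h
    intro n
    exact (hIntIoi _ (by positivity)).symm
  have hgval : (∫ x in Ioi (0:ℝ),
      (W1mod ν um up x * (starRingEnd ℂ) (Umod ν vm vp x)
        + Wmod ν um up x * (starRingEnd ℂ) (U1mod ν vm vp x)))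
      = 0 - ((2 * ν : ℝ) : ℂ) * up 0 * (starRingEnd ℂ) (vm 0) :=
    tendsto_nhds_unique htend1 htend2
  refine ⟨hint1, hint2, ?_⟩
  have hsub : (∫ x in Ioi (0:ℝ),
        ((-(deriv (deriv u) x) + ((ν ^ 2 - 1/4 : ℝ) : ℂ) * ((x : ℂ) ^ 2)⁻¹ * u x)
            * (starRingEnd ℂ) (v x)
          - (deriv u x + ((ν - 1/2 : ℝ) : ℂ) * (x : ℂ)⁻¹ * u x)
            * (starRingEnd ℂ) (deriv v x + ((ν - 1/2 : ℝ) : ℂ) * (x : ℂ)⁻¹ * v x)))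
      = (∫ x in Ioi (0:ℝ),
          (-(deriv (deriv u) x) + ((ν ^ 2 - 1/4 : ℝ) : ℂ) * ((x : ℂ) ^ 2)⁻¹ * u x)
            * (starRingEnd ℂ) (v x))
        - (∫ x in Ioi (0:ℝ),
            (deriv u x + ((ν - 1/2 : ℝ) : ℂ) * (x : ℂ)⁻¹ * u x)
              * (starRingEnd ℂ)
                  (deriv v x + ((ν - 1/2 : ℝ) : ℂ) * (x : ℂ)⁻¹ * v x)) :=
    integral_sub hint1 hint2
  have hdiff : (∫ x in Ioi (0:ℝ),
        ((-(deriv (deriv u) x) + ((ν ^ 2 - 1/4 : ℝ) : ℂ) * ((x : ℂ) ^ 2)⁻¹ * u x)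
            * (starRingEnd ℂ) (v x)
          - (deriv u x + ((ν - 1/2 : ℝ) : ℂ) * (x : ℂ)⁻¹ * u x)
            * (starRingEnd ℂ) (deriv v x + ((ν - 1/2 : ℝ) : ℂ) * (x : ℂ)⁻¹ * v x)))
      = ∫ x in Ioi (0:ℝ), -(W1mod ν um up x * (starRingEnd ℂ) (Umod ν vm vp x)
          + Wmod ν um up x * (starRingEnd ℂ) (U1mod ν vm vp x)) := by
    apply setIntegral_congr_fun measurableSet_Ioi
    intro x hx
    dsimp only
    rw [heq1 x hx, heq2 x hx, hI6 x hx]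
    ring
  have hneg : (∫ x in Ioi (0:ℝ),
      -(W1mod ν um up x * (starRingEnd ℂ) (Umod ν vm vp x)
        + Wmod ν um up x * (starRingEnd ℂ) (U1mod ν vm vp x)))
      = -(∫ x in Ioi (0:ℝ),
        (W1mod ν um up x * (starRingEnd ℂ) (Umod ν vm vp x)
          + Wmod ν um up x * (starRingEnd ℂ) (U1mod ν vm vp x))) := integral_neg _
  have hfin : (∫ x in Ioi (0:ℝ),
        (-(deriv (deriv u) x) + ((ν ^ 2 - 1/4 : ℝ) : ℂ) * ((x : ℂ) ^ 2)⁻¹ * u x)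
          * (starRingEnd ℂ) (v x))
      - (∫ x in Ioi (0:ℝ),
          (deriv u x + ((ν - 1/2 : ℝ) : ℂ) * (x : ℂ)⁻¹ * u x)
            * (starRingEnd ℂ)
                (deriv v x + ((ν - 1/2 : ℝ) : ℂ) * (x : ℂ)⁻¹ * v x))
      = ((2 * ν : ℝ) : ℂ) * up 0 * (starRingEnd ℂ) (vm 0) := by
    rw [← hsub, hdiff, hneg, hgval]
    ring
  exact sub_eq_iff_eq_add'.mp hfin
end

section
/- Let 0 < ν < 1 and let u_−, u_+, v_−, v_+ : ℝ → ℂ be smooth compactly supported functions. Define the model functions u(x) = x^{1/2−ν}u_−(x²) + x^{1/2+ν}u_+(x²) and v(x) = x^{1/2−ν}v_−(x²) + x^{1/2+ν}v_+(x²) for x > 0. Then, with |D_ν|²w = −w'' + (ν² − 1/4)x⁻²w, both integrals below are absolutely convergent and ∫₀^∞ (|D_ν|²u)(x) · conj(v(x)) dx − ∫₀^∞ u(x) · conj( (|D_ν|²v)(x) ) dx = 2ν ( u_+(0) · conj(v_−(0)) − u_−(0) · conj(v_+(0)) ). -/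
open MeasureTheory Set

open Filter Complex


noncomputable def Mfun (r : ℝ) (f : ℝ → ℂ) : ℝ → ℂ := fun x => ((x ^ r : ℝ) : ℂ) * f (x ^ 2)

lemma hasDerivAt_Mfun {f : ℝ → ℂ} (hf : ContDiff ℝ (⊤ : ℕ∞) f) (r : ℝ) {x : ℝ} (hx : 0 < x) :
    HasDerivAt (Mfun r f)
      (((r : ℝ) : ℂ) * Mfun (r - 1) f x + 2 * Mfun (r + 1) (deriv f) x) x := by
  have h1 : HasDerivAt (fun y : ℝ => ((y ^ r : ℝ) : ℂ)) ((r * x ^ (r - 1) : ℝ) : ℂ) x :=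
    (Real.hasDerivAt_rpow_const (Or.inl hx.ne')).ofReal_comp
  have h2 : HasDerivAt (fun y : ℝ => y ^ 2) (2 * x) x := by
    simpa using hasDerivAt_pow 2 x
  have h3 : HasDerivAt f (deriv f (x ^ 2)) (x ^ 2) :=
    (hf.differentiable (by simp) (x ^ 2)).hasDerivAt
  have h4 : HasDerivAt (fun y : ℝ => f (y ^ 2)) ((2 * x) • deriv f (x ^ 2)) x :=
    HasDerivAt.scomp_of_eq x h3 h2 rfl
  have h5 := h1.mul h4
  refine h5.congr_deriv ?_
  simp only [Mfun, real_smul]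
  push_cast [Real.rpow_add_one hx.ne']
  ring

lemma continuousOn_Mfun (r : ℝ) {f : ℝ → ℂ} (hf : Continuous f) :
    ContinuousOn (Mfun r f) (Ioi 0) := by
  apply ContinuousOn.mul
  · exact Complex.continuous_ofReal.comp_continuousOn
      (continuousOn_id.rpow_const fun x hx => Or.inl (ne_of_gt hx))
  · exact (hf.comp (continuous_pow 2)).continuousOn

lemma Mfun_eventually_zero (r : ℝ) {f : ℝ → ℂ} (hf : HasCompactSupport f) :
    ∀ᶠ x in atTop, Mfun r f x = 0 := by
  obtain ⟨R, hR⟩ := hf.isCompact.isBounded.subset_closedBall 0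
  filter_upwards [eventually_ge_atTop (max 1 (R + 1))] with x hx
  have hx1 : (1:ℝ) ≤ x := le_trans (le_max_left _ _) hx
  have hxR : R + 1 ≤ x := le_trans (le_max_right _ _) hx
  have hx2 : R < x ^ 2 := by nlinarith
  have : f (x ^ 2) = 0 := by
    apply image_eq_zero_of_notMem_tsupport
    intro hmem
    have := hR hmem
    simp only [Metric.mem_closedBall, Real.dist_eq, sub_zero] at this
    have : x ^ 2 ≤ R := le_trans (le_abs_self _) this
    linarith
  simp [Mfun, this]

lemma integrableOn_Mfun (r : ℝ) (hr : -1 < r) {f : ℝ → ℂ} (hf : Continuous f)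
    (hf' : HasCompactSupport f) : IntegrableOn (Mfun r f) (Ioi 0) := by
  obtain ⟨R, hR⟩ := hf'.isCompact.isBounded.subset_closedBall 0
  obtain ⟨C, hC⟩ := hf'.exists_bound_of_continuous hf
  set S : ℝ := max 1 (R + 1) with hS
  have hS0 : (0:ℝ) < S := lt_of_lt_of_le one_pos (le_max_left _ _)
  have hzero : ∀ x ∈ Ioi S, Mfun r f x = 0 := by
    intro x hx
    have hx1 : (1:ℝ) < x := lt_of_le_of_lt (le_max_left _ _) hx
    have hxR : R + 1 < x := lt_of_le_of_lt (le_max_right _ _) hx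
    have : f (x ^ 2) = 0 := by
      apply image_eq_zero_of_notMem_tsupport
      intro hmem
      have := hR hmem
      simp only [Metric.mem_closedBall, Real.dist_eq, sub_zero] at this
      have : x ^ 2 ≤ R := le_trans (le_abs_self _) this
      nlinarith
    simp [Mfun, this]
  have hioc : IntegrableOn (Mfun r f) (Ioc 0 S) := by
    have hint : IntegrableOn (fun x : ℝ => C * x ^ r) (Ioc 0 S) := by
      have := (intervalIntegral.intervalIntegrable_rpow' (a := 0) (b := S) hr).const_mul C
      rw [intervalIntegrable_iff_integrableOn_Ioc_of_le hS0.le] at this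
      exact this
    apply Integrable.mono' hint
    · exact ((continuousOn_Mfun r hf).mono Ioc_subset_Ioi_self).aestronglyMeasurable
        measurableSet_Ioc
    · filter_upwards [ae_restrict_mem measurableSet_Ioc] with x hx
      have hx0 : 0 < x := hx.1
      have : ‖Mfun r f x‖ = x ^ r * ‖f (x ^ 2)‖ := by
        simp [Mfun, abs_of_pos (Real.rpow_pos_of_pos hx0 r)]
      rw [this, mul_comm]
      exact mul_le_mul (hC _) le_rfl (Real.rpow_nonneg hx0.le r)
        (le_trans (norm_nonneg _) (hC (x^2)))
  have : IntegrableOn (Mfun r f) (Ioc 0 S ∪ Ioi S) := by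
    apply hioc.union
    exact (integrableOn_zero).congr_fun (fun x hx => (hzero x hx).symm) measurableSet_Ioi
  apply this.mono_set
  intro x hx
  rcases le_or_gt x S with h | h
  · exact Or.inl ⟨hx, h⟩
  · exact Or.inr h

lemma Mfun_mul_conj (a b : ℝ) (f g : ℝ → ℂ) {x : ℝ} (hx : 0 < x) :
    Mfun a f x * (starRingEnd ℂ) (Mfun b g x)
      = Mfun (a + b) (fun t => f t * (starRingEnd ℂ) (g t)) x := by
  simp only [Mfun, map_mul, Complex.conj_ofReal, Real.rpow_add hx]
  push_cast
  ring

lemma tendsto_Mfun_zero {f : ℝ → ℂ} (hf : Continuous f) :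
    Tendsto (Mfun 0 f) (nhdsWithin 0 (Ioi 0)) (nhds (f 0)) := by
  have : Mfun 0 f = fun x => f (x ^ 2) := by
    funext x; simp [Mfun]
  rw [this]
  have : Tendsto (fun x : ℝ => f (x ^ 2)) (nhds 0) (nhds (f 0)) := by
    have := (hf.comp (continuous_pow 2)).tendsto 0
    simpa [Function.comp_def] using this
  exact this.mono_left nhdsWithin_le_nhds

lemma tendsto_Mfun_pos {r : ℝ} (hr : 0 < r) {f : ℝ → ℂ} (hf : Continuous f) :
    Tendsto (Mfun r f) (nhdsWithin 0 (Ioi 0)) (nhds 0) := by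
  have h1 : Tendsto (fun x : ℝ => ((x ^ r : ℝ) : ℂ)) (nhds 0) (nhds 0) := by
    have : ContinuousAt (fun x : ℝ => x ^ r) 0 :=
      Real.continuousAt_rpow_const 0 r (Or.inr hr.le)
    have h2 := (Complex.continuous_ofReal.continuousAt).comp this
    have : (fun x : ℝ => ((x ^ r : ℝ) : ℂ)) 0 = 0 := by
      simp [Real.zero_rpow hr.ne']
    simpa [this, Function.comp_def] using h2.tendsto
  have h2 : Tendsto (fun x : ℝ => f (x ^ 2)) (nhds 0) (nhds (f 0)) := by
    simpa [Function.comp_def] using (hf.comp (continuous_pow 2)).tendsto 0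
  have := h1.mul h2
  rw [zero_mul] at this
  exact this.mono_left nhdsWithin_le_nhds

noncomputable def W0 (ν : ℝ) (fm fp : ℝ → ℂ) : ℝ → ℂ := fun x =>
  Mfun (1/2 - ν) fm x + Mfun (1/2 + ν) fp x

noncomputable def W1 (ν : ℝ) (fm fp : ℝ → ℂ) : ℝ → ℂ := fun x =>
  (((1/2 - ν : ℝ)) : ℂ) * Mfun (1/2 - ν - 1) fm x + 2 * Mfun (1/2 - ν + 1) (deriv fm) x
  + ((((1/2 + ν : ℝ)) : ℂ) * Mfun (1/2 + ν - 1) fp x + 2 * Mfun (1/2 + ν + 1) (deriv fp) x)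

noncomputable def W2 (ν : ℝ) (fm fp : ℝ → ℂ) : ℝ → ℂ := fun x =>
  (((1/2 - ν : ℝ)) : ℂ) * ((((1/2 - ν - 1 : ℝ)) : ℂ) * Mfun (1/2 - ν - 1 - 1) fm x
      + 2 * Mfun (1/2 - ν - 1 + 1) (deriv fm) x)
  + 2 * ((((1/2 - ν + 1 : ℝ)) : ℂ) * Mfun (1/2 - ν + 1 - 1) (deriv fm) x
      + 2 * Mfun (1/2 - ν + 1 + 1) (deriv (deriv fm)) x)
  + ((((1/2 + ν : ℝ)) : ℂ) * ((((1/2 + ν - 1 : ℝ)) : ℂ) * Mfun (1/2 + ν - 1 - 1) fp x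
      + 2 * Mfun (1/2 + ν - 1 + 1) (deriv fp) x)
    + 2 * ((((1/2 + ν + 1 : ℝ)) : ℂ) * Mfun (1/2 + ν + 1 - 1) (deriv fp) x
      + 2 * Mfun (1/2 + ν + 1 + 1) (deriv (deriv fp)) x))

noncomputable def DW (ν : ℝ) (fm fp : ℝ → ℂ) : ℝ → ℂ := fun x =>
  -(((4 * (1/2 - ν) + 2 : ℝ)) : ℂ) * Mfun (1/2 - ν) (deriv fm) x
  - 4 * Mfun (1/2 - ν + 2) (deriv (deriv fm)) x
  - (((4 * (1/2 + ν) + 2 : ℝ)) : ℂ) * Mfun (1/2 + ν) (deriv fp) x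
  - 4 * Mfun (1/2 + ν + 2) (deriv (deriv fp)) x

lemma W0_hasDeriv (ν : ℝ) {fm fp : ℝ → ℂ} (hfm : ContDiff ℝ (⊤ : ℕ∞) fm) (hfp : ContDiff ℝ (⊤ : ℕ∞) fp)
    {x : ℝ} (hx : 0 < x) : HasDerivAt (W0 ν fm fp) (W1 ν fm fp x) x :=
  ((hasDerivAt_Mfun hfm _ hx).add (hasDerivAt_Mfun hfp _ hx))

lemma W1_hasDeriv (ν : ℝ) {fm fp : ℝ → ℂ} (hfm : ContDiff ℝ (⊤ : ℕ∞) fm) (hfp : ContDiff ℝ (⊤ : ℕ∞) fp)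
    {x : ℝ} (hx : 0 < x) : HasDerivAt (W1 ν fm fp) (W2 ν fm fp x) x := by
  have hfm1 : ContDiff ℝ (⊤ : ℕ∞) (deriv fm) := (contDiff_infty_iff_deriv.mp hfm).2
  have hfp1 : ContDiff ℝ (⊤ : ℕ∞) (deriv fp) := (contDiff_infty_iff_deriv.mp hfp).2
  exact (((hasDerivAt_Mfun hfm _ hx).const_mul _).add
      ((hasDerivAt_Mfun hfm1 _ hx).const_mul 2)).add
    (((hasDerivAt_Mfun hfp _ hx).const_mul _).add
      ((hasDerivAt_Mfun hfp1 _ hx).const_mul 2))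

lemma Mfun_inv_sq (r : ℝ) (f : ℝ → ℂ) {x : ℝ} (hx : 0 < x) :
    ((x : ℂ) ^ 2)⁻¹ * Mfun r f x = Mfun (r - 2) f x := by
  have hx2 : ((x : ℂ) ^ 2) ≠ 0 := pow_ne_zero 2 (Complex.ofReal_ne_zero.mpr hx.ne')
  have h : (x : ℝ) ^ (r - 2) = x ^ r / x ^ 2 := by
    rw [Real.rpow_sub hx, Real.rpow_two]
  simp only [Mfun, h]
  push_cast
  field_simp

lemma DW_eq (ν : ℝ) (fm fp : ℝ → ℂ) {x : ℝ} (hx : 0 < x) :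
    -(W2 ν fm fp x) + ((ν ^ 2 - 1/4 : ℝ) : ℂ) * ((x : ℂ) ^ 2)⁻¹ * W0 ν fm fp x
      = DW ν fm fp x := by
  simp only [W0, W2, DW, mul_assoc, mul_add ((( (x:ℂ))^2)⁻¹)]
  rw [Mfun_inv_sq _ _ hx, Mfun_inv_sq _ _ hx]
  simp only [show (1/2 - ν - 1 - 1 : ℝ) = 1/2 - ν - 2 from by ring,
    show (1/2 - ν - 1 + 1 : ℝ) = 1/2 - ν from by ring,
    show (1/2 - ν + 1 - 1 : ℝ) = 1/2 - ν from by ring,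
    show (1/2 - ν + 1 + 1 : ℝ) = 1/2 - ν + 2 from by ring,
    show (1/2 + ν - 1 - 1 : ℝ) = 1/2 + ν - 2 from by ring,
    show (1/2 + ν - 1 + 1 : ℝ) = 1/2 + ν from by ring,
    show (1/2 + ν + 1 - 1 : ℝ) = 1/2 + ν from by ring,
    show (1/2 + ν + 1 + 1 : ℝ) = 1/2 + ν + 2 from by ring]
  push_cast
  ring

lemma integrableOn_pair {a b : ℝ} (h : -1 < a + b) {f g : ℝ → ℂ}
    (hf : Continuous f) (hg : Continuous g) (hf' : HasCompactSupport f) :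
    IntegrableOn (fun x => Mfun a f x * (starRingEnd ℂ) (Mfun b g x)) (Ioi 0) := by
  have hc : Continuous fun t => f t * (starRingEnd ℂ) (g t) := hf.mul (Complex.continuous_conj.comp hg)
  have hcs : HasCompactSupport fun t => f t * (starRingEnd ℂ) (g t) := hf'.mul_right
  exact (integrableOn_Mfun (a + b) h hc hcs).congr_fun
    (fun x hx => (Mfun_mul_conj a b f g hx).symm) measurableSet_Ioi

lemma tendsto_wronskian (ν : ℝ) (hν0 : 0 < ν) (hν1 : ν < 1) (fm fp gm gp : ℝ → ℂ)
    (hfm : Continuous fm) (hfp : Continuous fp) (hgm : Continuous gm) (hgp : Continuous gp)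
    (hfm1 : Continuous (deriv fm)) (hfp1 : Continuous (deriv fp))
    (hgm1 : Continuous (deriv gm)) (hgp1 : Continuous (deriv gp)) :
    Tendsto (fun x => W1 ν fm fp x * (starRingEnd ℂ) (W0 ν gm gp x)
        - W0 ν fm fp x * (starRingEnd ℂ) (W1 ν gm gp x)) (nhdsWithin 0 (Ioi 0))
      (nhds (((2 * ν : ℝ) : ℂ) * (fp 0 * (starRingEnd ℂ) (gm 0)
        - fm 0 * (starRingEnd ℂ) (gp 0)))) := by
  set G : ℝ → ℂ := fun x =>
    ((1/2 - ν : ℝ) : ℂ) * Mfun ((1/2 - ν - 1) + (1/2 + ν)) (fun t => fm t * (starRingEnd ℂ) (gp t)) x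
    + ((1/2 + ν : ℝ) : ℂ) * Mfun ((1/2 + ν - 1) + (1/2 - ν)) (fun t => fp t * (starRingEnd ℂ) (gm t)) x
    + 2 * Mfun ((1/2 - ν + 1) + (1/2 - ν)) (fun t => deriv fm t * (starRingEnd ℂ) (gm t)) x
    + 2 * Mfun ((1/2 - ν + 1) + (1/2 + ν)) (fun t => deriv fm t * (starRingEnd ℂ) (gp t)) x
    + 2 * Mfun ((1/2 + ν + 1) + (1/2 - ν)) (fun t => deriv fp t * (starRingEnd ℂ) (gm t)) x
    + 2 * Mfun ((1/2 + ν + 1) + (1/2 + ν)) (fun t => deriv fp t * (starRingEnd ℂ) (gp t)) x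
    - ((1/2 - ν : ℝ) : ℂ) * Mfun ((1/2 + ν) + (1/2 - ν - 1)) (fun t => fp t * (starRingEnd ℂ) (gm t)) x
    - ((1/2 + ν : ℝ) : ℂ) * Mfun ((1/2 - ν) + (1/2 + ν - 1)) (fun t => fm t * (starRingEnd ℂ) (gp t)) x
    - 2 * Mfun ((1/2 - ν) + (1/2 - ν + 1)) (fun t => fm t * (starRingEnd ℂ) (deriv gm t)) x
    - 2 * Mfun ((1/2 + ν) + (1/2 - ν + 1)) (fun t => fp t * (starRingEnd ℂ) (deriv gm t)) x
    - 2 * Mfun ((1/2 - ν) + (1/2 + ν + 1)) (fun t => fm t * (starRingEnd ℂ) (deriv gp t)) x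
    - 2 * Mfun ((1/2 + ν) + (1/2 + ν + 1)) (fun t => fp t * (starRingEnd ℂ) (deriv gp t)) x
    with hGdef
  have hG : ∀ x ∈ Ioi (0:ℝ), W1 ν fm fp x * (starRingEnd ℂ) (W0 ν gm gp x)
      - W0 ν fm fp x * (starRingEnd ℂ) (W1 ν gm gp x) = G x := by
    intro x hx
    have e1 : ∀ r s : ℝ, ((x ^ (r + s) : ℝ) : ℂ) = ((x ^ r : ℝ) : ℂ) * ((x ^ s : ℝ) : ℂ) := by
      intro r s
      rw [Real.rpow_add hx]
      push_cast
      ring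
    simp only [hGdef, W0, W1, Mfun, map_add, map_mul, Complex.conj_ofReal, map_ofNat, e1]
    ring
  have h1 : Tendsto (fun x => ((1/2 - ν : ℝ) : ℂ)
      * Mfun ((1/2 - ν - 1) + (1/2 + ν)) (fun t => fm t * (starRingEnd ℂ) (gp t)) x)
      (nhdsWithin 0 (Ioi 0)) (nhds (((1/2 - ν : ℝ) : ℂ) * (fm 0 * (starRingEnd ℂ) (gp 0)))) := by
    rw [show (1/2 - ν - 1) + (1/2 + ν) = (0:ℝ) by ring]
    exact (tendsto_Mfun_zero (hfm.mul (Complex.continuous_conj.comp hgp))).const_mul _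
  have h2 : Tendsto (fun x => ((1/2 + ν : ℝ) : ℂ)
      * Mfun ((1/2 + ν - 1) + (1/2 - ν)) (fun t => fp t * (starRingEnd ℂ) (gm t)) x)
      (nhdsWithin 0 (Ioi 0)) (nhds (((1/2 + ν : ℝ) : ℂ) * (fp 0 * (starRingEnd ℂ) (gm 0)))) := by
    rw [show (1/2 + ν - 1) + (1/2 - ν) = (0:ℝ) by ring]
    exact (tendsto_Mfun_zero (hfp.mul (Complex.continuous_conj.comp hgm))).const_mul _
  have h7 : Tendsto (fun x => ((1/2 - ν : ℝ) : ℂ)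
      * Mfun ((1/2 + ν) + (1/2 - ν - 1)) (fun t => fp t * (starRingEnd ℂ) (gm t)) x)
      (nhdsWithin 0 (Ioi 0)) (nhds (((1/2 - ν : ℝ) : ℂ) * (fp 0 * (starRingEnd ℂ) (gm 0)))) := by
    rw [show (1/2 + ν) + (1/2 - ν - 1) = (0:ℝ) by ring]
    exact (tendsto_Mfun_zero (hfp.mul (Complex.continuous_conj.comp hgm))).const_mul _
  have h8 : Tendsto (fun x => ((1/2 + ν : ℝ) : ℂ)
      * Mfun ((1/2 - ν) + (1/2 + ν - 1)) (fun t => fm t * (starRingEnd ℂ) (gp t)) x)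
      (nhdsWithin 0 (Ioi 0)) (nhds (((1/2 + ν : ℝ) : ℂ) * (fm 0 * (starRingEnd ℂ) (gp 0)))) := by
    rw [show (1/2 - ν) + (1/2 + ν - 1) = (0:ℝ) by ring]
    exact (tendsto_Mfun_zero (hfm.mul (Complex.continuous_conj.comp hgp))).const_mul _
  have h3 := ((tendsto_Mfun_pos (by linarith : (0:ℝ) < (1/2 - ν + 1) + (1/2 - ν))
    (hfm1.mul (Complex.continuous_conj.comp hgm))).const_mul (2:ℂ))
  have h4 := ((tendsto_Mfun_pos (by linarith : (0:ℝ) < (1/2 - ν + 1) + (1/2 + ν))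
    (hfm1.mul (Complex.continuous_conj.comp hgp))).const_mul (2:ℂ))
  have h5 := ((tendsto_Mfun_pos (by linarith : (0:ℝ) < (1/2 + ν + 1) + (1/2 - ν))
    (hfp1.mul (Complex.continuous_conj.comp hgm))).const_mul (2:ℂ))
  have h6 := ((tendsto_Mfun_pos (by linarith : (0:ℝ) < (1/2 + ν + 1) + (1/2 + ν))
    (hfp1.mul (Complex.continuous_conj.comp hgp))).const_mul (2:ℂ))
  have h9 := ((tendsto_Mfun_pos (by linarith : (0:ℝ) < (1/2 - ν) + (1/2 - ν + 1))
    (hfm.mul (Complex.continuous_conj.comp hgm1))).const_mul (2:ℂ))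
  have h10 := ((tendsto_Mfun_pos (by linarith : (0:ℝ) < (1/2 + ν) + (1/2 - ν + 1))
    (hfp.mul (Complex.continuous_conj.comp hgm1))).const_mul (2:ℂ))
  have h11 := ((tendsto_Mfun_pos (by linarith : (0:ℝ) < (1/2 - ν) + (1/2 + ν + 1))
    (hfm.mul (Complex.continuous_conj.comp hgp1))).const_mul (2:ℂ))
  have h12 := ((tendsto_Mfun_pos (by linarith : (0:ℝ) < (1/2 + ν) + (1/2 + ν + 1))
    (hfp.mul (Complex.continuous_conj.comp hgp1))).const_mul (2:ℂ))
  have hT : Tendsto G (nhdsWithin 0 (Ioi 0))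
      (nhds ((((1/2 - ν : ℝ) : ℂ) * (fm 0 * (starRingEnd ℂ) (gp 0))
        + ((1/2 + ν : ℝ) : ℂ) * (fp 0 * (starRingEnd ℂ) (gm 0)) + 2 * 0 + 2 * 0 + 2 * 0 + 2 * 0
        - ((1/2 - ν : ℝ) : ℂ) * (fp 0 * (starRingEnd ℂ) (gm 0))
        - ((1/2 + ν : ℝ) : ℂ) * (fm 0 * (starRingEnd ℂ) (gp 0))
        - 2 * 0 - 2 * 0 - 2 * 0 - 2 * 0))) :=
    (((((((((((h1.add h2).add h3).add h4).add h5).add h6).sub h7).sub h8).sub h9).sub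
      h10).sub h11).sub h12)
  have hev : (fun x => W1 ν fm fp x * (starRingEnd ℂ) (W0 ν gm gp x)
      - W0 ν fm fp x * (starRingEnd ℂ) (W1 ν gm gp x)) =ᶠ[nhdsWithin 0 (Ioi 0)] G :=
    eventuallyEq_of_mem self_mem_nhdsWithin hG
  have hfin := hT.congr' hev.symm
  convert hfin using 2
  push_cast
  ring

lemma integrableOn_DW_mul (ν : ℝ) (hν0 : 0 < ν) (hν1 : ν < 1) (fm fp gm gp : ℝ → ℂ)
    (hfm1 : Continuous (deriv fm)) (hfm2 : Continuous (deriv (deriv fm)))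
    (hfp1 : Continuous (deriv fp)) (hfp2 : Continuous (deriv (deriv fp)))
    (hgm : Continuous gm) (hgp : Continuous gp)
    (sfm1 : HasCompactSupport (deriv fm)) (sfm2 : HasCompactSupport (deriv (deriv fm)))
    (sfp1 : HasCompactSupport (deriv fp)) (sfp2 : HasCompactSupport (deriv (deriv fp))) :
    IntegrableOn (fun x => DW ν fm fp x * (starRingEnd ℂ) (W0 ν gm gp x)) (Ioi 0) := by
  have p1 := integrableOn_pair (by linarith : (-1:ℝ) < (1/2 - ν) + (1/2 - ν)) hfm1 hgm sfm1
  have p2 := integrableOn_pair (by linarith : (-1:ℝ) < (1/2 - ν) + (1/2 + ν)) hfm1 hgp sfm1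
  have p3 := integrableOn_pair (by linarith : (-1:ℝ) < (1/2 - ν + 2) + (1/2 - ν)) hfm2 hgm sfm2
  have p4 := integrableOn_pair (by linarith : (-1:ℝ) < (1/2 - ν + 2) + (1/2 + ν)) hfm2 hgp sfm2
  have p5 := integrableOn_pair (by linarith : (-1:ℝ) < (1/2 + ν) + (1/2 - ν)) hfp1 hgm sfp1
  have p6 := integrableOn_pair (by linarith : (-1:ℝ) < (1/2 + ν) + (1/2 + ν)) hfp1 hgp sfp1
  have p7 := integrableOn_pair (by linarith : (-1:ℝ) < (1/2 + ν + 2) + (1/2 - ν)) hfp2 hgm sfp2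
  have p8 := integrableOn_pair (by linarith : (-1:ℝ) < (1/2 + ν + 2) + (1/2 + ν)) hfp2 hgp sfp2
  have S := (((((((p1.const_mul (-(((4 * (1/2 - ν) + 2 : ℝ)) : ℂ))).add
    (p2.const_mul (-(((4 * (1/2 - ν) + 2 : ℝ)) : ℂ)))).add
    (p3.const_mul (-4 : ℂ))).add (p4.const_mul (-4 : ℂ))).add
    (p5.const_mul (-(((4 * (1/2 + ν) + 2 : ℝ)) : ℂ)))).add
    (p6.const_mul (-(((4 * (1/2 + ν) + 2 : ℝ)) : ℂ)))).add
    (p7.const_mul (-4 : ℂ))).add (p8.const_mul (-4 : ℂ))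
  apply MeasureTheory.IntegrableOn.congr_fun S ?_ measurableSet_Ioi
  intro x _
  simp only [Pi.add_apply, DW, W0, map_add]
  ring

lemma integrableOn_mul_DW (ν : ℝ) (hν0 : 0 < ν) (hν1 : ν < 1) (fm fp gm gp : ℝ → ℂ)
    (hfm : Continuous fm) (hfp : Continuous fp)
    (hgm1 : Continuous (deriv gm)) (hgm2 : Continuous (deriv (deriv gm)))
    (hgp1 : Continuous (deriv gp)) (hgp2 : Continuous (deriv (deriv gp)))
    (sfm : HasCompactSupport fm) (sfp : HasCompactSupport fp) :
    IntegrableOn (fun x => W0 ν fm fp x * (starRingEnd ℂ) (DW ν gm gp x)) (Ioi 0) := by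
  have p1 := integrableOn_pair (by linarith : (-1:ℝ) < (1/2 - ν) + (1/2 - ν)) hfm hgm1 sfm
  have p2 := integrableOn_pair (by linarith : (-1:ℝ) < (1/2 - ν) + (1/2 - ν + 2)) hfm hgm2 sfm
  have p3 := integrableOn_pair (by linarith : (-1:ℝ) < (1/2 - ν) + (1/2 + ν)) hfm hgp1 sfm
  have p4 := integrableOn_pair (by linarith : (-1:ℝ) < (1/2 - ν) + (1/2 + ν + 2)) hfm hgp2 sfm
  have p5 := integrableOn_pair (by linarith : (-1:ℝ) < (1/2 + ν) + (1/2 - ν)) hfp hgm1 sfp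
  have p6 := integrableOn_pair (by linarith : (-1:ℝ) < (1/2 + ν) + (1/2 - ν + 2)) hfp hgm2 sfp
  have p7 := integrableOn_pair (by linarith : (-1:ℝ) < (1/2 + ν) + (1/2 + ν)) hfp hgp1 sfp
  have p8 := integrableOn_pair (by linarith : (-1:ℝ) < (1/2 + ν) + (1/2 + ν + 2)) hfp hgp2 sfp
  have S := (((((((p1.const_mul (-(((4 * (1/2 - ν) + 2 : ℝ)) : ℂ))).add
    (p2.const_mul (-4 : ℂ))).add
    (p3.const_mul (-(((4 * (1/2 + ν) + 2 : ℝ)) : ℂ)))).add (p4.const_mul (-4 : ℂ))).add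
    (p5.const_mul (-(((4 * (1/2 - ν) + 2 : ℝ)) : ℂ)))).add (p6.const_mul (-4 : ℂ))).add
    (p7.const_mul (-(((4 * (1/2 + ν) + 2 : ℝ)) : ℂ)))).add (p8.const_mul (-4 : ℂ))
  apply MeasureTheory.IntegrableOn.congr_fun S ?_ measurableSet_Ioi
  intro x _
  simp only [Pi.add_apply, DW, W0, map_add, map_sub, map_neg, map_mul,
    Complex.conj_ofReal, map_ofNat]
  ring

/-- Symmetric one-dimensional Green formula
`⟨|D_ν|²u, v⟩ − ⟨u, |D_ν|²v⟩ = 2ν(u₊(0)conj(v₋(0)) − u₋(0)conj(v₊(0)))`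
for model functions of order `ν ∈ (0,1)`, including absolute convergence of both
integrals. -/
theorem green_formula_symmetric (ν : ℝ) (hν0 : 0 < ν) (hν1 : ν < 1)
    (um up vm vp : ℝ → ℂ)
    (hum : ContDiff ℝ (⊤ : ℕ∞) um) (hup : ContDiff ℝ (⊤ : ℕ∞) up)
    (hvm : ContDiff ℝ (⊤ : ℕ∞) vm) (hvp : ContDiff ℝ (⊤ : ℕ∞) vp)
    (hum' : HasCompactSupport um) (hup' : HasCompactSupport up)
    (hvm' : HasCompactSupport vm) (hvp' : HasCompactSupport vp)
    (u v : ℝ → ℂ)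
    (hu : ∀ x ∈ Set.Ioi (0 : ℝ),
      u x = ((x ^ (1/2 - ν) : ℝ) : ℂ) * um (x ^ 2)
              + ((x ^ (1/2 + ν) : ℝ) : ℂ) * up (x ^ 2))
    (hv : ∀ x ∈ Set.Ioi (0 : ℝ),
      v x = ((x ^ (1/2 - ν) : ℝ) : ℂ) * vm (x ^ 2)
              + ((x ^ (1/2 + ν) : ℝ) : ℂ) * vp (x ^ 2)) :
    MeasureTheory.IntegrableOn
        (fun x : ℝ =>
          (-(deriv (deriv u) x) + ((ν ^ 2 - 1/4 : ℝ) : ℂ) * ((x : ℂ) ^ 2)⁻¹ * u x)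
            * (starRingEnd ℂ) (v x)) (Set.Ioi 0) ∧
    MeasureTheory.IntegrableOn
        (fun x : ℝ =>
          u x * (starRingEnd ℂ)
            (-(deriv (deriv v) x) + ((ν ^ 2 - 1/4 : ℝ) : ℂ) * ((x : ℂ) ^ 2)⁻¹ * v x))
        (Set.Ioi 0) ∧
    (∫ x in Set.Ioi (0 : ℝ),
        (-(deriv (deriv u) x) + ((ν ^ 2 - 1/4 : ℝ) : ℂ) * ((x : ℂ) ^ 2)⁻¹ * u x)
          * (starRingEnd ℂ) (v x))
      - (∫ x in Set.Ioi (0 : ℝ),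
          u x * (starRingEnd ℂ)
            (-(deriv (deriv v) x) + ((ν ^ 2 - 1/4 : ℝ) : ℂ) * ((x : ℂ) ^ 2)⁻¹ * v x))
      = ((2 * ν : ℝ) : ℂ)
          * (up 0 * (starRingEnd ℂ) (vm 0) - um 0 * (starRingEnd ℂ) (vp 0)) := by
  -- smoothness bookkeeping
  have Hum : ContDiff ℝ (⊤ : ℕ∞) um := hum.of_le (by simp)
  have Hup : ContDiff ℝ (⊤ : ℕ∞) up := hup.of_le (by simp)
  have Hvm : ContDiff ℝ (⊤ : ℕ∞) vm := hvm.of_le (by simp)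
  have Hvp : ContDiff ℝ (⊤ : ℕ∞) vp := hvp.of_le (by simp)
  have Hum1 : ContDiff ℝ (⊤ : ℕ∞) (deriv um) := (contDiff_infty_iff_deriv.mp Hum).2
  have Hup1 : ContDiff ℝ (⊤ : ℕ∞) (deriv up) := (contDiff_infty_iff_deriv.mp Hup).2
  have Hvm1 : ContDiff ℝ (⊤ : ℕ∞) (deriv vm) := (contDiff_infty_iff_deriv.mp Hvm).2
  have Hvp1 : ContDiff ℝ (⊤ : ℕ∞) (deriv vp) := (contDiff_infty_iff_deriv.mp Hvp).2
  have Hum2 : ContDiff ℝ (⊤ : ℕ∞) (deriv (deriv um)) := (contDiff_infty_iff_deriv.mp Hum1).2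
  have Hup2 : ContDiff ℝ (⊤ : ℕ∞) (deriv (deriv up)) := (contDiff_infty_iff_deriv.mp Hup1).2
  have Hvm2 : ContDiff ℝ (⊤ : ℕ∞) (deriv (deriv vm)) := (contDiff_infty_iff_deriv.mp Hvm1).2
  have Hvp2 : ContDiff ℝ (⊤ : ℕ∞) (deriv (deriv vp)) := (contDiff_infty_iff_deriv.mp Hvp1).2
  -- u, v agree with the model functions on `Ioi 0`
  have humE : Set.EqOn u (W0 ν um up) (Set.Ioi 0) := by
    intro x hx; rw [hu x hx]; rfl
  have hvmE : Set.EqOn v (W0 ν vm vp) (Set.Ioi 0) := by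
    intro x hx; rw [hv x hx]; rfl
  -- first and second derivatives on `Ioi 0`
  have hu1 : ∀ x ∈ Set.Ioi (0:ℝ), deriv u x = W1 ν um up x := by
    intro x hx
    have hev : u =ᶠ[nhds x] W0 ν um up :=
      Filter.eventually_of_mem (Ioi_mem_nhds hx) humE
    rw [hev.deriv_eq]
    exact (W0_hasDeriv ν Hum Hup hx).deriv
  have hv1 : ∀ x ∈ Set.Ioi (0:ℝ), deriv v x = W1 ν vm vp x := by
    intro x hx
    have hev : v =ᶠ[nhds x] W0 ν vm vp :=
      Filter.eventually_of_mem (Ioi_mem_nhds hx) hvmE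
    rw [hev.deriv_eq]
    exact (W0_hasDeriv ν Hvm Hvp hx).deriv
  have hu2 : ∀ x ∈ Set.Ioi (0:ℝ), deriv (deriv u) x = W2 ν um up x := by
    intro x hx
    have hev : deriv u =ᶠ[nhds x] W1 ν um up :=
      Filter.eventually_of_mem (Ioi_mem_nhds hx) fun y hy => hu1 y hy
    rw [hev.deriv_eq]
    exact (W1_hasDeriv ν Hum Hup hx).deriv
  have hv2 : ∀ x ∈ Set.Ioi (0:ℝ), deriv (deriv v) x = W2 ν vm vp x := by
    intro x hx
    have hev : deriv v =ᶠ[nhds x] W1 ν vm vp :=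
      Filter.eventually_of_mem (Ioi_mem_nhds hx) fun y hy => hv1 y hy
    rw [hev.deriv_eq]
    exact (W1_hasDeriv ν Hvm Hvp hx).deriv
  -- the theorem's integrands agree with explicit model expressions on `Ioi 0`
  have hAeq : Set.EqOn
      (fun x : ℝ =>
        (-(deriv (deriv u) x) + ((ν ^ 2 - 1/4 : ℝ) : ℂ) * ((x : ℂ) ^ 2)⁻¹ * u x)
          * (starRingEnd ℂ) (v x))
      (fun x => DW ν um up x * (starRingEnd ℂ) (W0 ν vm vp x)) (Set.Ioi 0) := by
    intro x hx
    simp only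
    rw [hu2 x hx, humE hx, hvmE hx, DW_eq ν um up hx]
  have hBeq : Set.EqOn
      (fun x : ℝ =>
        u x * (starRingEnd ℂ)
          (-(deriv (deriv v) x) + ((ν ^ 2 - 1/4 : ℝ) : ℂ) * ((x : ℂ) ^ 2)⁻¹ * v x))
      (fun x => W0 ν um up x * (starRingEnd ℂ) (DW ν vm vp x)) (Set.Ioi 0) := by
    intro x hx
    simp only
    rw [hv2 x hx, humE hx, hvmE hx, DW_eq ν vm vp hx]
  -- integrability of the model expressions
  have hAint : MeasureTheory.IntegrableOn
      (fun x => DW ν um up x * (starRingEnd ℂ) (W0 ν vm vp x)) (Set.Ioi 0) :=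
    integrableOn_DW_mul ν hν0 hν1 um up vm vp Hum1.continuous Hum2.continuous
      Hup1.continuous Hup2.continuous Hvm.continuous Hvp.continuous
      hum'.deriv hum'.deriv.deriv hup'.deriv hup'.deriv.deriv
  have hBint : MeasureTheory.IntegrableOn
      (fun x => W0 ν um up x * (starRingEnd ℂ) (DW ν vm vp x)) (Set.Ioi 0) :=
    integrableOn_mul_DW ν hν0 hν1 um up vm vp Hum.continuous Hup.continuous
      Hvm1.continuous Hvm2.continuous Hvp1.continuous Hvp2.continuous hum' hup'
  -- the Wronskian
  set L : ℂ := ((2 * ν : ℝ) : ℂ)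
      * (up 0 * (starRingEnd ℂ) (vm 0) - um 0 * (starRingEnd ℂ) (vp 0)) with hLdef
  set Wt : ℝ → ℂ := fun x => if x ≤ 0 then L else
      W1 ν um up x * (starRingEnd ℂ) (W0 ν vm vp x)
        - W0 ν um up x * (starRingEnd ℂ) (W1 ν vm vp x) with hWtdef
  set gW : ℝ → ℂ := fun x =>
      W2 ν um up x * (starRingEnd ℂ) (W0 ν vm vp x)
        - W0 ν um up x * (starRingEnd ℂ) (W2 ν vm vp x) with hgWdef
  have hWt_on : ∀ x ∈ Set.Ioi (0:ℝ), Wt x =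
      W1 ν um up x * (starRingEnd ℂ) (W0 ν vm vp x)
        - W0 ν um up x * (starRingEnd ℂ) (W1 ν vm vp x) := by
    intro x hx
    rw [hWtdef]
    simp only [if_neg (not_le.mpr (Set.mem_Ioi.mp hx))]
  have hWt0 : Wt 0 = L := by rw [hWtdef]; simp
  have hderivW : ∀ x ∈ Set.Ioi (0:ℝ), HasDerivAt Wt (gW x) x := by
    intro x hx
    have h0u := W0_hasDeriv ν Hum Hup hx
    have h1u := W1_hasDeriv ν Hum Hup hx
    have h0v := W0_hasDeriv ν Hvm Hvp hx
    have h1v := W1_hasDeriv ν Hvm Hvp hx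
    have hW : HasDerivAt (fun y => W1 ν um up y * (starRingEnd ℂ) (W0 ν vm vp y)
        - W0 ν um up y * (starRingEnd ℂ) (W1 ν vm vp y)) (gW x) x := by
      have hd := (h1u.mul h0v.star).sub (h0u.mul h1v.star)
      refine hd.congr_deriv ?_
      simp only [hgWdef, RCLike.star_def]
      ring
    exact hW.congr_of_eventuallyEq
      (Filter.eventually_of_mem (Ioi_mem_nhds hx) fun y hy => hWt_on y hy)
  have hgWint : MeasureTheory.IntegrableOn gW (Set.Ioi 0) := by
    apply MeasureTheory.IntegrableOn.congr_fun (hBint.sub hAint) ?_ measurableSet_Ioi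
    intro x hx
    simp only [Pi.sub_apply]
    rw [← DW_eq ν um up hx, ← DW_eq ν vm vp hx, hgWdef]
    simp only [map_add, map_neg, map_mul, map_inv₀, map_pow, Complex.conj_ofReal]
    ring
  have hlim := tendsto_wronskian ν hν0 hν1 um up vm vp Hum.continuous Hup.continuous
    Hvm.continuous Hvp.continuous Hum1.continuous Hup1.continuous
    Hvm1.continuous Hvp1.continuous
  have hWtlim : Filter.Tendsto Wt (nhdsWithin 0 (Set.Ioi 0)) (nhds L) := by
    apply hlim.congr'
    exact Filter.eventuallyEq_of_mem self_mem_nhdsWithin fun y hy => (hWt_on y hy).symm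
  have hcont : ContinuousWithinAt Wt (Set.Ici 0) 0 := by
    rw [show (Set.Ici (0:ℝ)) = insert 0 (Set.Ioi 0) from Set.Ioi_insert.symm,
      continuousWithinAt_insert_self]
    show Filter.Tendsto Wt (nhdsWithin 0 (Set.Ioi 0)) (nhds (Wt 0))
    rw [hWt0]
    exact hWtlim
  have htop : Filter.Tendsto Wt Filter.atTop (nhds 0) := by
    have hz : ∀ᶠ x in Filter.atTop, Wt x = 0 := by
      filter_upwards [Mfun_eventually_zero (1/2 - ν - 1) hum',
        Mfun_eventually_zero (1/2 - ν + 1) hum'.deriv,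
        Mfun_eventually_zero (1/2 + ν - 1) hup',
        Mfun_eventually_zero (1/2 + ν + 1) hup'.deriv,
        Mfun_eventually_zero (1/2 - ν) hvm',
        Mfun_eventually_zero (1/2 + ν) hvp',
        Mfun_eventually_zero (1/2 - ν) hum',
        Mfun_eventually_zero (1/2 + ν) hup',
        Mfun_eventually_zero (1/2 - ν - 1) hvm',
        Mfun_eventually_zero (1/2 - ν + 1) hvm'.deriv,
        Mfun_eventually_zero (1/2 + ν - 1) hvp',
        Mfun_eventually_zero (1/2 + ν + 1) hvp'.deriv,
        Filter.eventually_gt_atTop (0:ℝ)]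
        with x h1 h2 h3 h4 h5 h6 h7 h8 h9 h10 h11 h12 hx
      rw [hWt_on x hx]
      simp only [W0, W1, h1, h2, h3, h4, h5, h6, h7, h8, h9, h10, h11, h12]
      simp
    have hz' : Wt =ᶠ[Filter.atTop] (fun _ => (0:ℂ)) := hz
    exact Filter.Tendsto.congr' hz'.symm tendsto_const_nhds
  have key := MeasureTheory.integral_Ioi_of_hasDerivAt_of_tendsto hcont hderivW hgWint htop
  rw [hWt0] at key
  refine ⟨hAint.congr_fun hAeq.symm measurableSet_Ioi,
    hBint.congr_fun hBeq.symm measurableSet_Ioi, ?_⟩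
  rw [MeasureTheory.setIntegral_congr_fun measurableSet_Ioi hAeq,
    MeasureTheory.setIntegral_congr_fun measurableSet_Ioi hBeq,
    ← MeasureTheory.integral_sub hAint hBint]
  have hneg : Set.EqOn
      (fun x => DW ν um up x * (starRingEnd ℂ) (W0 ν vm vp x)
        - W0 ν um up x * (starRingEnd ℂ) (DW ν vm vp x))
      (fun x => -gW x) (Set.Ioi 0) := by
    intro x hx
    simp only
    rw [← DW_eq ν um up hx, ← DW_eq ν vm vp hx, hgWdef]
    simp only [map_add, map_neg, map_mul, map_inv₀, map_pow, Complex.conj_ofReal]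
    ring
  rw [MeasureTheory.setIntegral_congr_fun measurableSet_Ioi hneg,
    MeasureTheory.integral_neg, key]
  ring
end

section
/- Let X be a Hilbert space, let Y and Z be normed spaces, let A : X → Y be a bounded linear map and K : X → Z a compact linear map, and suppose there is C > 0 with ‖u‖_X ≤ C ( ‖Au‖_Y + ‖Ku‖_Z ) for all u ∈ X. Let V ⊆ X be a closed subspace such that V ∩ ker A = {0}. Then there exists a constant C' > 0 such that ‖v‖_X ≤ C' ‖Av‖_Y for every v ∈ V. -/
/-!
If the estimate failed on `V`, there would be unit vectors `uₙ ∈ V` with `A uₙ → 0`. Since `K` is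
compact, `K uₙ` converges along a subsequence, and the estimate
`‖uₘ - uₙ‖ ≤ C (‖A uₘ - A uₙ‖ + ‖K uₘ - K uₙ‖)` makes that subsequence Cauchy. Its limit is then a
unit vector of `V` (closed) lying in `ker A`, contradicting `V ⊓ ker A = ⊥`.
-/

open Filter Topology

section

variable {𝕜 E F G : Type*} [NontriviallyNormedField 𝕜]
  [SeminormedAddCommGroup E] [NormedSpace 𝕜 E]
  [SeminormedAddCommGroup F] [NormedSpace 𝕜 F]
  [NormedAddCommGroup G] [NormedSpace 𝕜 G]

theorem IsCompactOperator.exists_tendsto_subseq {K : E →ₗ[𝕜] G} (hK : IsCompactOperator K)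
    {u : ℕ → E} (hu : Bornology.IsBounded (Set.range u)) :
    ∃ z, ∃ φ : ℕ → ℕ, StrictMono φ ∧ Tendsto (K ∘ u ∘ φ) atTop (𝓝 z) := by
  obtain ⟨z, -, φ, hφ, hz⟩ := (hK.isCompact_closure_image_of_bounded hu).tendsto_subseq
    fun n => subset_closure ⟨u n, Set.mem_range_self n, rfl⟩
  exact ⟨z, φ, hφ, hz⟩

theorem cauchySeq_of_norm_le_mul_add {A : E →ₗ[𝕜] F} {K : E →ₗ[𝕜] G} {C : ℝ}
    (hest : ∀ u, ‖u‖ ≤ C * (‖A u‖ + ‖K u‖)) {u : ℕ → E}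
    (hA : CauchySeq (A ∘ u)) (hK : CauchySeq (K ∘ u)) : CauchySeq u := by
  rw [cauchySeq_iff_tendsto_dist_atTop_0] at hA hK ⊢
  refine squeeze_zero (fun _ => dist_nonneg) (fun p => ?_)
    (by simpa using (hA.add hK).const_mul C)
  simpa only [dist_eq_norm, map_sub] using hest (u p.1 - u p.2)

theorem exists_tendsto_subseq_of_norm_le_mul_add [CompleteSpace E] {A : E →ₗ[𝕜] F}
    {K : E →ₗ[𝕜] G} (hK : IsCompactOperator K) {C : ℝ}
    (hest : ∀ u, ‖u‖ ≤ C * (‖A u‖ + ‖K u‖)) {u : ℕ → E}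
    (hu : Bornology.IsBounded (Set.range u)) (hAu : CauchySeq (A ∘ u)) :
    ∃ x, ∃ φ : ℕ → ℕ, StrictMono φ ∧ Tendsto (u ∘ φ) atTop (𝓝 x) := by
  obtain ⟨z, φ, hφ, hKu⟩ := hK.exists_tendsto_subseq hu
  have hcauchy : CauchySeq (u ∘ φ) :=
    cauchySeq_of_norm_le_mul_add hest (hAu.comp_tendsto hφ.tendsto_atTop) hKu.cauchySeq
  obtain ⟨x, hx⟩ := cauchySeq_tendsto_of_complete hcauchy
  exact ⟨x, φ, hφ, hx⟩

end

theorem exists_seq_norm_eq_one_tendsto_zero_of_not_bounded_below {𝕜 E F : Type*} [RCLike 𝕜]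
    [NormedAddCommGroup E] [NormedSpace 𝕜 E] [SeminormedAddCommGroup F] [NormedSpace 𝕜 F]
    {A : E →ₗ[𝕜] F} {V : Submodule 𝕜 E}
    (h : ¬ ∃ C : ℝ, 0 < C ∧ ∀ v ∈ V, ‖v‖ ≤ C * ‖A v‖) :
    ∃ u : ℕ → E, (∀ n, u n ∈ V) ∧ (∀ n, ‖u n‖ = 1) ∧ Tendsto (A ∘ u) atTop (𝓝 0) := by
  push Not at h
  have hseq : ∀ n : ℕ, ∃ u ∈ V, ‖u‖ = 1 ∧ ‖A u‖ ≤ 1 / (n + 1) := by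
    intro n
    obtain ⟨v, hvV, hv⟩ := h (n + 1) (by positivity)
    have hv0 : 0 < ‖v‖ := (by positivity : (0 : ℝ) ≤ _).trans_lt hv
    refine ⟨(‖v‖⁻¹ : 𝕜) • v, V.smul_mem _ hvV, norm_smul_inv_norm (norm_pos_iff.1 hv0), ?_⟩
    rw [map_smul, norm_smul, norm_inv, RCLike.norm_ofReal, abs_norm, inv_mul_le_iff₀ hv0,
      mul_one_div, le_div_iff₀' (by positivity)]
    exact hv.le
  choose u huV hu1 huA using hseq
  exact ⟨u, huV, hu1, squeeze_zero_norm huA tendsto_one_div_add_atTop_nhds_zero_nat⟩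

theorem apriori_estimate_on_complement_general
    (X Y Z : Type*)
    [NormedAddCommGroup X] [InnerProductSpace ℝ X] [CompleteSpace X]
    [NormedAddCommGroup Y] [NormedSpace ℝ Y]
    [NormedAddCommGroup Z] [NormedSpace ℝ Z]
    (A : X →L[ℝ] Y) (K : X →L[ℝ] Z) (hK : IsCompactOperator ⇑K)
    (C : ℝ)
    (hest : ∀ u : X, ‖u‖ ≤ C * (‖A u‖ + ‖K u‖))
    (V : Submodule ℝ X) (hVclosed : IsClosed (V : Set X))
    (hVker : V ⊓ LinearMap.ker (A : X →ₗ[ℝ] Y) = ⊥) :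
    ∃ C' : ℝ, 0 < C' ∧ ∀ v ∈ V, ‖v‖ ≤ C' * ‖A v‖ := by
  by_contra h
  obtain ⟨u, huV, hu1, hAu⟩ :=
    exists_seq_norm_eq_one_tendsto_zero_of_not_bounded_below (A := (A : X →ₗ[ℝ] Y)) h
  have hu : Bornology.IsBounded (Set.range u) :=
    isBounded_iff_forall_norm_le.2 ⟨1, Set.forall_mem_range.2 fun n => (hu1 n).le⟩
  obtain ⟨x, φ, hφ, hx⟩ := exists_tendsto_subseq_of_norm_le_mul_add
    (A := (A : X →ₗ[ℝ] Y)) (K := (K : X →ₗ[ℝ] Z)) hK hest hu hAu.cauchySeq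
  have hxV : x ∈ V := hVclosed.mem_of_tendsto hx (.of_forall fun n => huV _)
  have hAx : A x = 0 :=
    tendsto_nhds_unique ((A.continuous.tendsto x).comp hx) (hAu.comp hφ.tendsto_atTop)
  have hx0 : x = 0 := Submodule.disjoint_def.1 (disjoint_iff.2 hVker) x hxV hAx
  have hx1 : ‖x‖ = 1 := tendsto_nhds_unique hx.norm (by simp [hu1])
  simp [hx0] at hx1

/-- A priori estimate on a closed complement of the kernel: if `‖u‖ ≤ C(‖Au‖ + ‖Ku‖)`
on a Hilbert space `X` with `K` compact, and `V` is a closed subspace with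
`V ∩ ker A = {0}`, then `‖v‖ ≤ C'‖Av‖` for all `v ∈ V`. -/
theorem apriori_estimate_on_complement
    (X Y Z : Type*)
    [NormedAddCommGroup X] [InnerProductSpace ℝ X] [CompleteSpace X]
    [NormedAddCommGroup Y] [NormedSpace ℝ Y]
    [NormedAddCommGroup Z] [NormedSpace ℝ Z]
    (A : X →L[ℝ] Y) (K : X →L[ℝ] Z) (hK : IsCompactOperator ⇑K)
    (C : ℝ) (hC : 0 < C)
    (hest : ∀ u : X, ‖u‖ ≤ C * (‖A u‖ + ‖K u‖))
    (V : Submodule ℝ X) (hVclosed : IsClosed (V : Set X))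
    (hVker : V ⊓ LinearMap.ker (A : X →ₗ[ℝ] Y) = ⊥) :
    ∃ C' : ℝ, 0 < C' ∧ ∀ v ∈ V, ‖v‖ ≤ C' * ‖A v‖ :=
  apriori_estimate_on_complement_general X Y Z A K hK C hest V hVclosed hVker
end

section
/- Let 0 < ν < 1 and let u_−, u_+ : ℝ → ℂ be smooth compactly supported functions. Define u(x) = x^{1/2−ν}u_−(x²) + x^{1/2+ν}u_+(x²) for x > 0. Then each of the three functions u, ∂_ν u(x) = u'(x) + (ν − 1/2)x⁻¹u(x), and |D_ν|²u(x) = −u''(x) + (ν² − 1/4)x⁻²u(x) is square-integrable on (0,∞) with respect to Lebesgue measure. -/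
open MeasureTheory Set
open scoped ContDiff

/-- Model term `x ↦ c · x^α · h(x²)`. -/
noncomputable def modelTerm (c : ℂ) (α : ℝ) (h : ℝ → ℂ) (x : ℝ) : ℂ :=
  c * ((x ^ α : ℝ) : ℂ) * h (x ^ 2)

lemma memLp_modelTerm (c : ℂ) (α : ℝ) (hα : c = 0 ∨ (-1/2 : ℝ) < α) (h : ℝ → ℂ)
    (hcont : Continuous h) (hsupp : HasCompactSupport h) :
    MemLp (modelTerm c α h) 2 (volume.restrict (Set.Ioi 0)) := by
  rcases hα with rfl | hα
  · have : modelTerm 0 α h = fun _ => (0 : ℂ) := funext fun x => by simp [modelTerm]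
    rw [this]
    exact MemLp.zero'
  obtain ⟨R, hR0, hR⟩ := hsupp.exists_pos_le_norm
  obtain ⟨C, hC⟩ := hsupp.exists_bound_of_continuous hcont
  have hC0 : 0 ≤ C := le_trans (norm_nonneg _) (hC 0)
  set S : ℝ := Real.sqrt R with hS
  have hS0 : 0 < S := Real.sqrt_pos.mpr hR0
  have hmeas : AEStronglyMeasurable (modelTerm c α h) (volume.restrict (Set.Ioi 0)) := by
    refine ContinuousOn.aestronglyMeasurable (fun x hx => ?_) measurableSet_Ioi
    have h1 : ContinuousAt (fun y : ℝ => ((y ^ α : ℝ) : ℂ)) x :=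
      Complex.continuous_ofReal.continuousAt.comp
        (Real.continuousAt_rpow_const x α (Or.inl (ne_of_gt hx)))
    have h2 : ContinuousAt (fun y : ℝ => h (y ^ 2)) x :=
      (hcont.comp (continuous_pow 2)).continuousAt
    exact ((continuousAt_const.mul h1).mul h2).continuousWithinAt
  rw [memLp_two_iff_integrable_sq_norm hmeas]
  have hsqmeas : AEStronglyMeasurable (fun x => ‖modelTerm c α h x‖ ^ 2)
      (volume.restrict (Set.Ioi 0)) := by
    have : (fun x => ‖modelTerm c α h x‖ ^ 2)
        = fun x => ‖modelTerm c α h x‖ * ‖modelTerm c α h x‖ := by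
      funext x; ring
    rw [this]
    exact hmeas.norm.mul hmeas.norm
  have hint : Integrable
      (fun x => (Set.Ioo (0:ℝ) S).indicator (fun y => (‖c‖ * C) ^ 2 * y ^ (2 * α)) x)
      (volume.restrict (Set.Ioi 0)) := by
    have h1 : IntegrableOn (fun y : ℝ => y ^ (2 * α)) (Set.Ioo 0 S) volume := by
      rw [intervalIntegral.integrableOn_Ioo_rpow_iff hS0]
      linarith
    have h2 : IntegrableOn (fun y : ℝ => (‖c‖ * C) ^ 2 * y ^ (2 * α)) (Set.Ioo 0 S) volume :=
      h1.const_mul _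
    have h3 : Integrable
        ((Set.Ioo (0:ℝ) S).indicator (fun y => (‖c‖ * C) ^ 2 * y ^ (2 * α))) volume :=
      (integrable_indicator_iff measurableSet_Ioo).mpr h2
    exact h3.restrict
  refine hint.mono' hsqmeas ?_
  filter_upwards [ae_restrict_mem measurableSet_Ioi] with x hx
  have hx0 : (0:ℝ) < x := hx
  rcases lt_or_ge x S with hxS | hxS
  · have hmem : x ∈ Set.Ioo (0:ℝ) S := ⟨hx0, hxS⟩
    rw [Set.indicator_of_mem hmem]
    have hb : ‖modelTerm c α h x‖ ≤ ‖c‖ * x ^ α * C := by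
      have : ‖modelTerm c α h x‖ = ‖c‖ * |x ^ α| * ‖h (x ^ 2)‖ := by
        simp [modelTerm, norm_mul, Complex.norm_real, Real.norm_eq_abs]
      rw [this, abs_of_nonneg (Real.rpow_nonneg hx0.le α)]
      exact mul_le_mul_of_nonneg_left (hC _)
        (mul_nonneg (norm_nonneg _) (Real.rpow_nonneg hx0.le α))
    have hnn : 0 ≤ ‖c‖ * x ^ α * C :=
      mul_nonneg (mul_nonneg (norm_nonneg _) (Real.rpow_nonneg hx0.le α)) hC0
    calc ‖‖modelTerm c α h x‖ ^ 2‖ = ‖modelTerm c α h x‖ ^ 2 := by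
          rw [Real.norm_eq_abs, abs_of_nonneg (sq_nonneg _)]
      _ ≤ (‖c‖ * x ^ α * C) ^ 2 := by
          exact pow_le_pow_left₀ (norm_nonneg _) hb 2
      _ = (‖c‖ * C) ^ 2 * x ^ (2 * α) := by
          rw [mul_comm (2:ℝ) α, Real.rpow_mul hx0.le, Real.rpow_two]
          ring
  · have hzero : h (x ^ 2) = 0 := by
      apply hR
      rw [Real.norm_eq_abs, abs_of_nonneg (sq_nonneg x)]
      calc R = S ^ 2 := by rw [hS, Real.sq_sqrt hR0.le]
        _ ≤ x ^ 2 := by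
          apply pow_le_pow_left₀ hS0.le hxS
    have : modelTerm c α h x = 0 := by simp [modelTerm, hzero]
    rw [this]
    simp only [norm_zero, ne_eq]
    norm_num
    exact Set.indicator_nonneg (fun y hy => mul_nonneg (sq_nonneg _) (Real.rpow_nonneg hy.1.le _)) x

lemma hasDerivAt_modelTerm (c : ℂ) (α : ℝ) (h : ℝ → ℂ) (hh : ContDiff ℝ ∞ h)
    {x : ℝ} (hx : 0 < x) :
    HasDerivAt (modelTerm c α h)
      (modelTerm (c * (α : ℂ)) (α - 1) h x + modelTerm (2 * c) (α + 1) (deriv h) x) x := by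
  have h1 : HasDerivAt (fun y : ℝ => ((y ^ α : ℝ) : ℂ)) ((α * x ^ (α - 1) : ℝ) : ℂ) x :=
    (Real.hasDerivAt_rpow_const (Or.inl hx.ne')).ofReal_comp
  have hdiff : DifferentiableAt ℝ h (x ^ 2) :=
    (hh.differentiable (by simp)) (x ^ 2)
  have h2 : HasDerivAt (fun y : ℝ => h (y ^ 2)) ((2 * x) • deriv h (x ^ 2)) x := by
    have := HasDerivAt.scomp_of_eq (𝕜 := ℝ) (𝕜' := ℝ) x hdiff.hasDerivAt (hasDerivAt_pow 2 x) rfl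
    rw [Function.comp_def] at this
    simpa using this
  have h3 := (h1.mul h2).const_mul c
  have heq : HasDerivAt (modelTerm c α h)
      (c * (((α * x ^ (α - 1) : ℝ) : ℂ) * h (x ^ 2)
        + ((x ^ α : ℝ) : ℂ) * ((2 * x) • deriv h (x ^ 2)))) x := by
    have : modelTerm c α h = fun y => c * (((y ^ α : ℝ) : ℂ) * h (y ^ 2)) := by
      funext y; simp [modelTerm, mul_assoc]
    rw [this]
    exact h3
  convert heq using 1
  simp only [modelTerm, Complex.real_smul]
  have e1 : (x : ℝ) ^ (α + 1) = x ^ α * x := Real.rpow_add_one hx.ne' α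
  rw [e1]
  push_cast
  ring

/-- A model function `u(x) = x^{1/2−ν}u₋(x²) + x^{1/2+ν}u₊(x²)` with `u₋, u₊` smooth and
compactly supported, `0 < ν < 1`, lies in `L²(0,∞)` together with its twisted derivative
`∂_ν u = u' + (ν − 1/2)x⁻¹u` and its image `|D_ν|²u = −u'' + (ν² − 1/4)x⁻²u` under the
one-dimensional Bessel operator. -/
theorem model_function_memLp (ν : ℝ) (hν0 : 0 < ν) (hν1 : ν < 1)
    (um up : ℝ → ℂ)
    (hum : ContDiff ℝ (⊤ : ℕ∞) um) (hup : ContDiff ℝ (⊤ : ℕ∞) up)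
    (hum' : HasCompactSupport um) (hup' : HasCompactSupport up)
    (u : ℝ → ℂ)
    (hu : ∀ x ∈ Set.Ioi (0 : ℝ),
      u x = ((x ^ (1/2 - ν) : ℝ) : ℂ) * um (x ^ 2)
              + ((x ^ (1/2 + ν) : ℝ) : ℂ) * up (x ^ 2)) :
    MemLp u 2 (volume.restrict (Set.Ioi 0)) ∧
    MemLp (fun x : ℝ => deriv u x + ((ν - 1/2 : ℝ) : ℂ) * (x : ℂ)⁻¹ * u x) 2
      (volume.restrict (Set.Ioi 0)) ∧
    MemLp (fun x : ℝ =>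
        -(deriv (deriv u) x) + ((ν ^ 2 - 1/4 : ℝ) : ℂ) * ((x : ℂ) ^ 2)⁻¹ * u x) 2
      (volume.restrict (Set.Ioi 0)) := by
  set a : ℝ := 1/2 - ν with ha
  set b : ℝ := 1/2 + ν with hb
  have humS : ContDiff ℝ ∞ um := hum.of_le (by simp)
  have hupS : ContDiff ℝ ∞ up := hup.of_le (by simp)
  have hum1 : ContDiff ℝ ∞ (deriv um) := (contDiff_infty_iff_deriv.mp humS).2
  have hup1 : ContDiff ℝ ∞ (deriv up) := (contDiff_infty_iff_deriv.mp hupS).2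
  have hum2 : ContDiff ℝ ∞ (deriv (deriv um)) := (contDiff_infty_iff_deriv.mp hum1).2
  have hup2 : ContDiff ℝ ∞ (deriv (deriv up)) := (contDiff_infty_iff_deriv.mp hup1).2
  have hum1s : HasCompactSupport (deriv um) := hum'.deriv
  have hup1s : HasCompactSupport (deriv up) := hup'.deriv
  have hum2s : HasCompactSupport (deriv (deriv um)) := hum1s.deriv
  have hup2s : HasCompactSupport (deriv (deriv up)) := hup1s.deriv
  set v : ℝ → ℂ := fun x => modelTerm 1 a um x + modelTerm 1 b up x with hv
  set v1 : ℝ → ℂ := fun x =>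
    (modelTerm (1 * (a : ℂ)) (a - 1) um x + modelTerm (2 * 1) (a + 1) (deriv um) x)
    + (modelTerm (1 * (b : ℂ)) (b - 1) up x + modelTerm (2 * 1) (b + 1) (deriv up) x) with hv1
  set v2 : ℝ → ℂ := fun x =>
    ((modelTerm (1 * (a : ℂ) * ((a - 1 : ℝ) : ℂ)) (a - 1 - 1) um x
        + modelTerm (2 * (1 * (a : ℂ))) (a - 1 + 1) (deriv um) x)
      + (modelTerm (2 * 1 * ((a + 1 : ℝ) : ℂ)) (a + 1 - 1) (deriv um) x
        + modelTerm (2 * (2 * 1)) (a + 1 + 1) (deriv (deriv um)) x))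
    + ((modelTerm (1 * (b : ℂ) * ((b - 1 : ℝ) : ℂ)) (b - 1 - 1) up x
        + modelTerm (2 * (1 * (b : ℂ))) (b - 1 + 1) (deriv up) x)
      + (modelTerm (2 * 1 * ((b + 1 : ℝ) : ℂ)) (b + 1 - 1) (deriv up) x
        + modelTerm (2 * (2 * 1)) (b + 1 + 1) (deriv (deriv up)) x)) with hv2
  have hu_eq : ∀ x ∈ Set.Ioi (0:ℝ), u x = v x := by
    intro x hx
    rw [hu x hx]
    simp [hv, modelTerm, ha, hb]
  have key1 : ∀ x ∈ Set.Ioi (0:ℝ), HasDerivAt v (v1 x) x := by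
    intro x hx
    exact (hasDerivAt_modelTerm 1 a um humS hx).add (hasDerivAt_modelTerm 1 b up hupS hx)
  have key2 : ∀ x ∈ Set.Ioi (0:ℝ), HasDerivAt v1 (v2 x) x := by
    intro x hx
    exact (((hasDerivAt_modelTerm _ _ um humS hx).add
        (hasDerivAt_modelTerm _ _ (deriv um) hum1 hx)).add
      ((hasDerivAt_modelTerm _ _ up hupS hx).add
        (hasDerivAt_modelTerm _ _ (deriv up) hup1 hx)))
  have hderiv1 : ∀ x ∈ Set.Ioi (0:ℝ), deriv u x = v1 x := by
    intro x hx
    have hev : u =ᶠ[nhds x] v :=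
      Filter.eventuallyEq_of_mem (isOpen_Ioi.mem_nhds hx) hu_eq
    rw [hev.deriv_eq, (key1 x hx).deriv]
  have hderiv2 : ∀ x ∈ Set.Ioi (0:ℝ), deriv (deriv u) x = v2 x := by
    intro x hx
    have hev : deriv u =ᶠ[nhds x] v1 :=
      Filter.eventuallyEq_of_mem (isOpen_Ioi.mem_nhds hx) hderiv1
    rw [hev.deriv_eq, (key2 x hx).deriv]
  have hrw1 : ∀ {x : ℝ}, 0 < x → ∀ α : ℝ,
      ((x ^ (α - 1) : ℝ) : ℂ) = ((x ^ α : ℝ) : ℂ) * ((x : ℂ))⁻¹ := by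
    intro x hx α
    rw [Real.rpow_sub_one hx.ne']
    push_cast
    rw [div_eq_mul_inv]
  have hrw2 : ∀ {x : ℝ}, 0 < x → ∀ α : ℝ,
      ((x ^ (α - 2) : ℝ) : ℂ) = ((x ^ α : ℝ) : ℂ) * (((x : ℂ)) ^ 2)⁻¹ := by
    intro x hx α
    have : (x : ℝ) ^ (α - 2) = x ^ α / x ^ (2:ℕ) := by
      rw [Real.rpow_sub hx, show ((2:ℝ)) = ((2:ℕ):ℝ) by norm_num, Real.rpow_natCast]
    rw [this]
    push_cast
    rw [div_eq_mul_inv]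
  have hν' : (-1/2 : ℝ) < ν - 1/2 := by linarith
  refine ⟨?_, ?_, ?_⟩
  · -- u itself
    have hW : MemLp (fun x => modelTerm 1 a um x + modelTerm 1 b up x) 2
        (volume.restrict (Set.Ioi 0)) := by
      exact (memLp_modelTerm 1 a (Or.inr (by rw [ha]; linarith)) um humS.continuous hum').add
        (memLp_modelTerm 1 b (Or.inr (by rw [hb]; linarith)) up hupS.continuous hup')
    refine hW.ae_eq ?_
    rw [Filter.eventuallyEq_iff_exists_mem]
    exact ⟨Set.Ioi 0, self_mem_ae_restrict measurableSet_Ioi,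
      fun x hx => (hu_eq x hx).symm⟩
  · -- twisted derivative
    set W1 : ℝ → ℂ := fun x =>
      (modelTerm ((a : ℂ) + ((ν - 1/2 : ℝ) : ℂ)) (a - 1) um x
        + modelTerm 2 (a + 1) (deriv um) x)
      + (modelTerm ((b : ℂ) + ((ν - 1/2 : ℝ) : ℂ)) (b - 1) up x
        + modelTerm 2 (b + 1) (deriv up) x) with hW1def
    have hW1 : MemLp W1 2 (volume.restrict (Set.Ioi 0)) := by
      refine MemLp.add (MemLp.add ?_ ?_) (MemLp.add ?_ ?_)
      · refine memLp_modelTerm _ _ (Or.inl ?_) um humS.continuous hum'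
        rw [ha]; push_cast; ring
      · exact memLp_modelTerm _ _ (Or.inr (by rw [ha]; linarith)) (deriv um)
          hum1.continuous hum1s
      · exact memLp_modelTerm _ _ (Or.inr (by rw [hb]; linarith)) up hupS.continuous hup'
      · exact memLp_modelTerm _ _ (Or.inr (by rw [hb]; linarith)) (deriv up)
          hup1.continuous hup1s
    refine hW1.ae_eq ?_
    rw [Filter.eventuallyEq_iff_exists_mem]
    refine ⟨Set.Ioi 0, self_mem_ae_restrict measurableSet_Ioi, fun x hx => ?_⟩
    have hx0 : (0:ℝ) < x := hx
    show W1 x = deriv u x + ((ν - 1/2 : ℝ) : ℂ) * (x : ℂ)⁻¹ * u x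
    rw [hderiv1 x hx, hu_eq x hx]
    simp only [hW1def, hv1, hv, modelTerm]
    rw [hrw1 hx0 a, hrw1 hx0 b]
    push_cast
    ring
  · -- Bessel operator
    set W2 : ℝ → ℂ := fun x =>
      ((modelTerm (((ν ^ 2 - 1/4 : ℝ) : ℂ) - (a : ℂ) * ((a - 1 : ℝ) : ℂ)) (a - 2) um x
          + modelTerm (-(2 * (a : ℂ)) - 2 * ((a + 1 : ℝ) : ℂ)) a (deriv um) x)
        + modelTerm (-4) (a + 2) (deriv (deriv um)) x)
      + ((modelTerm (((ν ^ 2 - 1/4 : ℝ) : ℂ) - (b : ℂ) * ((b - 1 : ℝ) : ℂ)) (b - 2) up x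
          + modelTerm (-(2 * (b : ℂ)) - 2 * ((b + 1 : ℝ) : ℂ)) b (deriv up) x)
        + modelTerm (-4) (b + 2) (deriv (deriv up)) x) with hW2def
    have hW2 : MemLp W2 2 (volume.restrict (Set.Ioi 0)) := by
      refine MemLp.add (MemLp.add (MemLp.add ?_ ?_) ?_) (MemLp.add (MemLp.add ?_ ?_) ?_)
      · refine memLp_modelTerm _ _ (Or.inl ?_) um humS.continuous hum'
        rw [ha]; push_cast; ring
      · exact memLp_modelTerm _ _ (Or.inr (by rw [ha]; linarith)) (deriv um)
          hum1.continuous hum1s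
      · exact memLp_modelTerm _ _ (Or.inr (by rw [ha]; linarith)) (deriv (deriv um))
          hum2.continuous hum2s
      · refine memLp_modelTerm _ _ (Or.inl ?_) up hupS.continuous hup'
        rw [hb]; push_cast; ring
      · exact memLp_modelTerm _ _ (Or.inr (by rw [hb]; linarith)) (deriv up)
          hup1.continuous hup1s
      · exact memLp_modelTerm _ _ (Or.inr (by rw [hb]; linarith)) (deriv (deriv up))
          hup2.continuous hup2s
    refine hW2.ae_eq ?_
    rw [Filter.eventuallyEq_iff_exists_mem]
    refine ⟨Set.Ioi 0, self_mem_ae_restrict measurableSet_Ioi, fun x hx => ?_⟩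
    have hx0 : (0:ℝ) < x := hx
    show W2 x = -(deriv (deriv u) x) + ((ν ^ 2 - 1/4 : ℝ) : ℂ) * ((x : ℂ) ^ 2)⁻¹ * u x
    rw [hderiv2 x hx, hu_eq x hx]
    simp only [hW2def, hv2, hv, modelTerm]
    rw [show a - 1 - 1 = a - 2 from by ring, show a - 1 + 1 = a from by ring,
      show a + 1 - 1 = a from by ring, show a + 1 + 1 = a + 2 from by ring,
      show b - 1 - 1 = b - 2 from by ring, show b - 1 + 1 = b from by ring,
      show b + 1 - 1 = b from by ring, show b + 1 + 1 = b + 2 from by ring]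
    rw [hrw2 hx0 a, hrw2 hx0 b]
    push_cast
    ring
end
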